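/- arXiv:2512.14199 — 9 statements merged into one kernel-verified Lean document; each statement's English description precedes it below -/
import Mathlib

section
/- The parking function polytope PF(u) equals the convex hull of the finite set X(u) of u-extreme points; in particular, PF(u) (defined as the convex hull of the infinite set of all u-parking functions) is a polytope. -/
noncomputable section

/-- `a` is a `u`-parking function: all coordinates are nonnegative and some
nondecreasing rearrangement `b` of `a` satisfies `b i ≤ u i` for all `i`. -/
def IsParkingFunction (n : ℕ) (u a : Fin n → ℝ) : Prop :=
  (∀ i, 0 ≤ a i) ∧
    ∃ σ : Equiv.Perm (Fin n), Monotone (fun i => a (σ i)) ∧ ∀ i, a (σ i) ≤ u i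

/-- The parking function polytope: the convex hull of all `u`-parking functions. -/
def PF (n : ℕ) (u : Fin n → ℝ) : Set (Fin n → ℝ) :=
  convexHull ℝ {a | IsParkingFunction n u a}

/-- `v` is `u`-extreme: it is a coordinate permutation of
`(0, …, 0, u (k+1), …, u n)` for some `0 ≤ k ≤ n`. -/
def IsUExtreme (n : ℕ) (u v : Fin n → ℝ) : Prop :=
  ∃ k ≤ n, ∃ σ : Equiv.Perm (Fin n),
    ∀ i, v i = if (σ i : ℕ) < k then 0 else u (σ i)

/-- The set of all `u`-extreme points. -/
def Xext (n : ℕ) (u : Fin n → ℝ) : Set (Fin n → ℝ) := {v | IsUExtreme n u v}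

/-!
Every `u`-parking function `a` with a sorting permutation `σ` either has all sorted
coordinates `a (σ i) ∈ {0, u i}`, and is then `u`-extreme, or has some `a (σ i)` strictly
between `0` and `u i`. In the latter case `a` lies on the segment between the vectors obtained
by moving that coordinate down to `0` or up to `u i`. Both are again parking functions: lowering
is harmless, and raising is controlled by the count criterion (for `a ≥ 0` and monotone `u`):
`a` is parking iff `#{m | u j < a m} + j < n` for all `j`. Both moves strictly decrease the
number of pairs `(m, l)` with `0 < a m < u l`, so induction on that number puts every parking
function in the convex hull of `X(u)`.
-/

open Finset

section Convexity

variable {𝕜 E : Type*} [Semiring 𝕜] [PartialOrder 𝕜] [AddCommMonoid E] [Module 𝕜 E]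

theorem subset_convexHull_of_forall_mem_segment {s t : Set E} (μ : E → ℕ)
    (h : ∀ a ∈ s, a ∈ t ∨
      ∃ x ∈ s, ∃ y ∈ s, μ x < μ a ∧ μ y < μ a ∧ a ∈ segment 𝕜 x y) :
    s ⊆ convexHull 𝕜 t := by
  intro a ha
  induction hμ : μ a using Nat.strong_induction_on generalizing a with
  | _ N ih =>
    rcases h a ha with hat | ⟨x, hx, y, hy, hxa, hya, hseg⟩
    · exact subset_convexHull 𝕜 t hat
    · exact (convex_convexHull 𝕜 t).segment_subset (ih _ (hμ ▸ hxa) hx rfl)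
        (ih _ (hμ ▸ hya) hy rfl) hseg

theorem Function.update_mem_segment {ι : Type*} [DecidableEq ι] (a : ι → E) (i : ι) {r s t : E}
    (h : r ∈ segment 𝕜 s t) :
    Function.update a i r ∈ segment 𝕜 (Function.update a i s) (Function.update a i t) := by
  obtain ⟨p, q, hp, hq, hpq, rfl⟩ := h
  refine ⟨p, q, hp, hq, hpq, funext fun l => ?_⟩
  rcases eq_or_ne l i with rfl | hl
  · simp
  · simp [Function.update_of_ne hl, ← add_smul, hpq]

end Convexity

theorem Finset.sum_comp_update_lt {ι α : Type*} [Fintype ι] [DecidableEq ι] {g : α → ℕ}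
    (a : ι → α) (i : ι) {w : α} (h : g w < g (a i)) :
    ∑ l, g (Function.update a i w l) < ∑ l, g (a l) := by
  refine sum_lt_sum (fun l _ => ?_) ⟨i, mem_univ i, by simpa using h⟩
  rcases eq_or_ne l i with rfl | hl
  · simpa using h.le
  · simp [Function.update_of_ne hl]

theorem Finset.card_filter_lt_add_card_le {ι α : Type*} [Fintype ι] [DecidableEq ι]
    [LinearOrder α] {a : ι → α} {t : α} {S : Finset ι} (hS : ∀ m ∈ S, a m ≤ t) :
    #{m | t < a m} + #S ≤ Fintype.card ι := by
  have hdisj : Disjoint ({m | t < a m} : Finset ι) S :=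
    disjoint_left.2 fun m hm hmS => (not_lt.2 (hS m hmS)) (mem_filter.1 hm).2
  rw [← card_union_of_disjoint hdisj]
  exact card_le_univ _

theorem Fin.lt_card_filter_iff {n : ℕ} {p : Fin n → Prop} [DecidablePred p]
    (hp : ∀ ⦃i j⦄, i ≤ j → p j → p i) (j : Fin n) : (j : ℕ) < #{i | p i} ↔ p j := by
  constructor
  · intro hj
    by_contra hpj
    have hsub : ({i | p i} : Finset (Fin n)) ⊆ Iio j := fun i hi =>
      mem_Iio.2 (lt_of_not_ge fun hji => hpj (hp hji (mem_filter.1 hi).2))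
    have := card_le_card hsub
    rw [Fin.card_Iio] at this
    omega
  · intro hpj
    have hsub : Iic j ⊆ ({i | p i} : Finset (Fin n)) := fun i hi =>
      mem_filter.2 ⟨mem_univ i, hp (mem_Iic.1 hi) hpj⟩
    have := card_le_card hsub
    rw [Fin.card_Iic] at this
    omega

section Parking

variable {n : ℕ} {u a x : Fin n → ℝ}

theorem card_filter_lt_add_lt_of_comp_le (hu : Monotone u) {σ : Equiv.Perm (Fin n)}
    (hle : ∀ i, a (σ i) ≤ u i) (j : Fin n) : #{m | u j < a m} + j < n := by
  have h := card_filter_lt_add_card_le (S := (Iic j).map σ.toEmbedding) (t := u j) (a := a) <| by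
    simp only [mem_map_equiv, mem_Iic]
    exact fun m hm => (σ.apply_symm_apply m ▸ hle _).trans (hu hm)
  rw [card_map, Fin.card_Iic, Fintype.card_fin] at h
  omega

theorem IsParkingFunction.of_card_filter_lt_add_lt (h0 : ∀ m, 0 ≤ a m)
    (h : ∀ j : Fin n, #{m | u j < a m} + j < n) : IsParkingFunction n u a := by
  refine ⟨h0, Tuple.sort a, Tuple.monotone_sort a, fun j => not_lt.1 fun hlt => ?_⟩
  have hsub : (Ici j).map (Tuple.sort a).toEmbedding ⊆ ({m | u j < a m} : Finset (Fin n)) := by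
    simp only [subset_iff, mem_map_equiv, mem_Ici, mem_filter_univ]
    intro m hm
    simpa using hlt.trans_le (Tuple.monotone_sort a hm)
  have := card_le_card hsub
  rw [card_map, Fin.card_Ici] at this
  have := h j
  omega

theorem IsParkingFunction.mono (hu : Monotone u) (ha : IsParkingFunction n u a)
    (hx0 : ∀ m, 0 ≤ x m) (hxa : x ≤ a) : IsParkingFunction n u x := by
  obtain ⟨-, σ, -, hle⟩ := ha
  refine .of_card_filter_lt_add_lt hx0 fun j => ?_
  have hsub : ({m | u j < x m} : Finset (Fin n)) ⊆ ({m | u j < a m} : Finset (Fin n)) := by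
    intro m
    simpa using fun h : u j < x m => h.trans_le (hxa m)
  exact (Nat.add_le_add_right (card_le_card hsub) _).trans_lt
    (card_filter_lt_add_lt_of_comp_le hu hle j)

theorem isParkingFunction_update_comp (hu : Monotone u) (h0 : ∀ m, 0 ≤ a m)
    {σ : Equiv.Perm (Fin n)} (hle : ∀ i, a (σ i) ≤ u i) (i : Fin n) :
    IsParkingFunction n u (Function.update a (σ i) (u i)) := by
  set x := Function.update a (σ i) (u i) with hx
  refine .of_card_filter_lt_add_lt (fun m => ?_) fun j => ?_
  · rcases eq_or_ne m (σ i) with rfl | hm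
    · simpa [hx] using (h0 _).trans (hle i)
    · simpa [hx, Function.update_of_ne hm] using h0 m
  by_cases hj : a (σ i) ≤ u j ∧ u j < u i
  · have hji : j < i := hu.reflect_lt hj.2
    have hsub : ({m | u j < x m} : Finset (Fin n)) ⊆
        insert (σ i) ({m | u j < a m} : Finset (Fin n)) := by
      intro m
      rcases eq_or_ne m (σ i) with rfl | hm
      · simp
      · simp [hx, hm]
    have hS := card_filter_lt_add_card_le (a := a) (t := u j)
      (S := (insert i (Iic j)).map σ.toEmbedding) <| by
        simp only [mem_map_equiv, mem_insert, mem_Iic]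
        rintro m (hm | hm)
        · rw [← σ.apply_symm_apply m, hm]
          exact hj.1
        · exact (σ.apply_symm_apply m ▸ hle _).trans (hu hm)
    rw [card_map, card_insert_of_notMem (by simpa using hji), Fin.card_Iic,
      Fintype.card_fin] at hS
    have := (card_le_card hsub).trans (card_insert_le _ _)
    omega
  · have hsub : ({m | u j < x m} : Finset (Fin n)) ⊆ ({m | u j < a m} : Finset (Fin n)) := by
      intro m
      rcases eq_or_ne m (σ i) with rfl | hm
      · simp only [hx, mem_filter_univ, Function.update_self]
        exact fun h => lt_of_not_ge fun h' => hj ⟨h', h⟩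
      · simp [hx, Function.update_of_ne hm]
    exact (Nat.add_le_add_right (card_le_card hsub) _).trans_lt
      (card_filter_lt_add_lt_of_comp_le hu hle j)

theorem IsUExtreme.isParkingFunction (hu : Monotone u) (hu0 : ∀ i, 0 ≤ u i)
    (ha : IsUExtreme n u a) : IsParkingFunction n u a := by
  obtain ⟨k, -, σ, ha⟩ := ha
  have haσ : ∀ j, a (σ.symm j) = if (j : ℕ) < k then 0 else u j := by simp [ha]
  refine ⟨fun m => ?_, σ.symm, fun i j hij => ?_, fun j => ?_⟩
  · rw [ha]
    split_ifs
    exacts [le_rfl, hu0 _]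
  · have hij' : (i : ℕ) ≤ j := hij
    simp only [haσ]
    split_ifs
    exacts [le_rfl, hu0 _, by omega, hu hij]
  · rw [haσ]
    split_ifs
    exacts [hu0 _, le_rfl]

theorem isUExtreme_of_comp {σ : Equiv.Perm (Fin n)} (hσ : Monotone (a ∘ σ)) (h0 : ∀ m, 0 ≤ a m)
    (h : ∀ i, a (σ i) = 0 ∨ a (σ i) = u i) : IsUExtreme n u a := by
  refine ⟨#{i | a (σ i) = 0}, card_le_univ _ |>.trans_eq (Fintype.card_fin n), σ.symm,
    fun m => ?_⟩
  have hk := Fin.lt_card_filter_iff (p := fun i => a (σ i) = 0)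
    (fun i j hij hj => le_antisymm (hj ▸ hσ hij) (h0 _)) (σ.symm m)
  simp only [Equiv.apply_symm_apply] at hk
  split_ifs with hlt
  · exact hk.1 hlt
  · simpa using (h (σ.symm m)).resolve_left (by simpa using mt hk.2 hlt)

theorem Xext_finite (u : Fin n → ℝ) : (Xext n u).Finite := by
  refine (Set.finite_range fun p : Fin (n + 1) × Equiv.Perm (Fin n) =>
    fun i => if (p.2 i : ℕ) < p.1 then (0 : ℝ) else u (p.2 i)).subset ?_
  rintro v ⟨k, hk, σ, hv⟩
  exact ⟨(⟨k, Nat.lt_succ_of_le hk⟩, σ), funext fun i => (hv i).symm⟩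

def interiorWeight (u a : Fin n → ℝ) : ℕ := ∑ m, #{l | a m ∈ Set.Ioo 0 (u l)}

theorem IsParkingFunction.mem_Xext_or_mem_segment (hu : Monotone u)
    (ha : IsParkingFunction n u a) :
    a ∈ Xext n u ∨ ∃ x, IsParkingFunction n u x ∧ ∃ y, IsParkingFunction n u y ∧
      interiorWeight u x < interiorWeight u a ∧ interiorWeight u y < interiorWeight u a ∧
      a ∈ segment ℝ x y := by
  obtain ⟨h0, σ, hσ, hle⟩ := ha
  set g : ℝ → ℕ := fun t => #{l | t ∈ Set.Ioo 0 (u l)} with hg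
  by_cases hint : ∃ i, a (σ i) ∈ Set.Ioo 0 (u i)
  · obtain ⟨i, hi⟩ := hint
    have hy0 : ∀ m, 0 ≤ Function.update a (σ i) 0 m := fun m => by
      rcases eq_or_ne m (σ i) with rfl | hm
      · simp
      · simpa [Function.update_of_ne hm] using h0 m
    have hya : Function.update a (σ i) 0 ≤ a :=
      update_le_iff.2 ⟨h0 _, fun _ _ => le_rfl⟩
    have hgy : g 0 < g (a (σ i)) := by
      simpa [hg] using card_pos.2 ⟨i, (mem_filter_univ i).2 hi⟩
    have hgx : g (u i) < g (a (σ i)) := by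
      refine card_lt_card ((ssubset_iff_of_subset fun l => ?_).2 ⟨i, ?_, ?_⟩)
      · simp only [mem_filter_univ, Set.mem_Ioo]
        exact fun hl => ⟨hi.1, hi.2.trans hl.2⟩
      · exact (mem_filter_univ i).2 hi
      · simp
    have hseg : a (σ i) ∈ segment ℝ 0 (u i) := by
      rw [segment_eq_Icc (hi.1.trans hi.2).le]
      exact Set.Ioo_subset_Icc_self hi
    refine .inr ⟨_, (IsParkingFunction.mono hu ⟨h0, σ, hσ, hle⟩ hy0 hya), _,
      isParkingFunction_update_comp hu h0 hle i, sum_comp_update_lt a (σ i) hgy,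
      sum_comp_update_lt a (σ i) hgx, ?_⟩
    simpa using Function.update_mem_segment a (σ i) hseg
  · refine .inl (isUExtreme_of_comp hσ h0 fun i => ?_)
    rcases (h0 (σ i)).eq_or_lt with hzero | hpos
    · exact .inl hzero.symm
    · exact .inr ((hle i).antisymm (not_lt.1 fun hlt => hint ⟨i, hpos, hlt⟩))

end Parking

theorem parking_polytope_eq_convexHull_extreme_general
    (n : ℕ) (u : Fin n → ℝ)
    (hmono : Monotone u) (hnonneg : ∀ i, 0 ≤ u i) :
    (Xext n u).Finite ∧ PF n u = convexHull ℝ (Xext n u) := by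
  refine ⟨Xext_finite u, le_antisymm ?_ ?_⟩
  · exact convexHull_min (subset_convexHull_of_forall_mem_segment (interiorWeight u)
      fun a ha => ha.mem_Xext_or_mem_segment hmono) (convex_convexHull ℝ _)
  · exact convexHull_mono fun a ha => ha.isParkingFunction hmono hnonneg

/-- The parking function polytope `PF(u)` equals the convex hull of the finite set
of `u`-extreme points; in particular it is a polytope. -/
theorem parking_polytope_eq_convexHull_extreme
    (n : ℕ) (hn : 1 ≤ n) (u : Fin n → ℝ)
    (hmono : Monotone u) (hnonneg : ∀ i, 0 ≤ u i) (hne : u ≠ 0) :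
    (Xext n u).Finite ∧ PF n u = convexHull ℝ (Xext n u) :=
  parking_polytope_eq_convexHull_extreme_general n u hmono hnonneg
end
end

section
/- The set of extreme points (vertices) of PF(u) is exactly the set X(u) of u-extreme points. Moreover, for a u-extreme point v with zero set Z = {i ∈ [n] : v_i = 0} (necessarily |Z| ≥ m_0): if |Z| = m_0 then ncone(v, PF(u)) = {c ∈ ℝ^n : c_j ≥ 0 for all j ∉ Z, and c_i ≤ c_j whenever v_i < v_j}; and if |Z| > m_0 then ncone(v, PF(u)) = {c ∈ ℝ^n : c_i ≤ 0 for all i ∈ Z, c_j ≥ 0 for all j ∉ Z, and c_i ≤ c_j whenever v_i < v_j}. -/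
noncomputable section

/-- The normal cone of `P` at `v`: vectors `w` with `w·v ≥ w·y` for all `y ∈ P`. -/
def ncone (n : ℕ) (P : Set (Fin n → ℝ)) (v : Fin n → ℝ) : Set (Fin n → ℝ) :=
  {w | ∀ y ∈ P, ∑ i, w i * y i ≤ ∑ i, w i * v i}

/-!
A vertex of `PF(u)` is a parking function, and if some sorted entry of it lies strictly between
`0` and the corresponding `u m`, moving that entry up and down by a little stays inside `PF(u)`;
so every vertex is `u`-extreme. Conversely, by the rearrangement inequality the weights
`2m + 1 - 2k`, placed on the coordinates in sorted position, are maximised over the parking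
functions exactly at a `u`-extreme point with `k` zeros, which is therefore exposed.

For the normal cone at a `u`-extreme `v`, the sign and order conditions are forced by comparing
`v` with the parking functions obtained by zeroing a coordinate of `v`, swapping two coordinates,
and (when `v` has more zeros than `u`) raising one zero coordinate to `u_{k-1}`. Conversely,
sorting `c` and `v` simultaneously, the rearrangement inequality and `sort y ≤ u` give
`c ⬝ y ≤ c ⬝ v` when `c ≥ 0` vanishes on the zeros of `v`; the general case reduces to this by
replacing `c` with `max c 0`, and, when `v` has exactly as many zeros as `u`, first by
subtracting a constant from `c`, which costs nothing because then `∑ y ≤ ∑ u = ∑ v`.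
-/

open Finset Function

section Rearrangement

variable {n : ℕ} {α β : Type*} [LinearOrder α] [LinearOrder β]

theorem Monotone.comp_perm_eq_self {f : Fin n → α} (hf : Monotone f) {σ : Equiv.Perm (Fin n)}
    (hfσ : Monotone (f ∘ σ)) : f ∘ σ = f :=
  (Tuple.comp_sort_eq_comp_iff_monotone.2 hfσ).trans
    (Tuple.comp_sort_eq_comp_iff_monotone (σ := Equiv.refl _) |>.2 hf).symm

theorem Monovary.exists_perm_monotone {f : Fin n → α} {g : Fin n → β} (hfg : Monovary f g) :
    ∃ θ : Equiv.Perm (Fin n), Monotone (f ∘ θ) ∧ Monotone (g ∘ θ) := by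
  let key : Fin n → β ×ₗ α := fun i => toLex (g i, f i)
  have hsort := Tuple.monotone_sort key
  refine ⟨Tuple.sort key, fun a b hab => ?_,
    fun a b hab => Prod.Lex.monotone_fst_ofLex (hsort hab)⟩
  rcases Prod.Lex.le_iff.1 (hsort hab) with hlt | ⟨-, hle⟩
  · exact hfg hlt
  · exact hle

theorem Monotone.apply_eq_iff_lt_card {s : Fin n → α} (hs : Monotone s) {a : α}
    (ha : ∀ i, a ≤ s i) (m : Fin n) : s m = a ↔ (m : ℕ) < Nat.card {i // s i = a} := by
  classical
  rw [Nat.card_eq_fintype_card, Fintype.card_subtype]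
  constructor
  · intro hm
    calc (m : ℕ) < (Iic m).card := by simp
      _ ≤ _ := card_le_card fun i hi =>
        mem_filter.2 ⟨mem_univ i, le_antisymm (hm ▸ hs (mem_Iic.1 hi)) (ha i)⟩
  · intro hm
    by_contra hne
    have hsub : univ.filter (fun i => s i = a) ⊆ Iio m := fun i hi => by
      refine mem_Iio.2 (lt_of_not_ge fun hmi => hne (le_antisymm ?_ (ha m)))
      exact (mem_filter.1 hi).2 ▸ hs hmi
    have := card_le_card hsub
    simp only [Fin.card_Iio] at this
    omega

end Rearrangement

section DotProduct

variable {ι R : Type*} [Fintype ι] [DecidableEq ι] [CommRing R]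

theorem dotProduct_update (c v : ι → R) (j : ι) (t : R) :
    c ⬝ᵥ update v j t = c ⬝ᵥ v + c j * (t - v j) := by
  rw [Pi.update_eq_sub_add_single, dotProduct_add, dotProduct_sub, dotProduct_single,
    dotProduct_single]
  ring

theorem dotProduct_comp_swap (c v : ι → R) {i j : ι} (hij : i ≠ j) :
    c ⬝ᵥ (v ∘ Equiv.swap i j) = c ⬝ᵥ v + (c i - c j) * (v j - v i) := by
  rw [Equiv.comp_swap_eq_update, dotProduct_update, dotProduct_update, update_of_ne hij]
  ring

end DotProduct

section ExtremePoints

variable {𝕜 E : Type*} [Field 𝕜] [LinearOrder 𝕜] [IsStrictOrderedRing 𝕜] [AddCommGroup E]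
  [Module 𝕜 E]

theorem eq_zero_of_mem_extremePoints_of_sub_mem_of_add_mem {A : Set E} {x d : E}
    (hx : x ∈ A.extremePoints 𝕜) (hsub : x - d ∈ A) (hadd : x + d ∈ A) : d = 0 :=
  sub_eq_self.1 ((mem_extremePoints.1 hx).2 _ hsub _ hadd
    ⟨1 / 2, 1 / 2, by norm_num, by norm_num, by norm_num, by module⟩).1

theorem convex_insert_setOf_lt (l : E →ₗ[𝕜] 𝕜) (x : E) :
    Convex 𝕜 (insert x {y | l y < l x}) := by
  have hle : ∀ y ∈ insert x {y | l y < l x}, l y ≤ l x := fun y hy =>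
    hy.elim (fun h => h ▸ le_rfl) fun h => le_of_lt h
  refine convex_iff_forall_pos.2 fun y₁ hy₁ y₂ hy₂ a b ha hb hab => ?_
  by_cases h : y₁ = x ∧ y₂ = x
  · rw [h.1, h.2, Convex.combo_self hab]
    exact Set.mem_insert x _
  refine Or.inr (show l (a • y₁ + b • y₂) < l x from ?_)
  rw [map_add, map_smul, map_smul, smul_eq_mul, smul_eq_mul]
  have hsplit : a * l x + b * l x = l x := by rw [← add_mul, hab, one_mul]
  have h₁ := mul_le_mul_of_nonneg_left (hle _ hy₁) ha.le
  have h₂ := mul_le_mul_of_nonneg_left (hle _ hy₂) hb.le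
  rcases (not_and_or.1 h).imp hy₁.resolve_left hy₂.resolve_left with h' | h'
  · linarith [mul_lt_mul_of_pos_left (show l y₁ < l x from h') ha]
  · linarith [mul_lt_mul_of_pos_left (show l y₂ < l x from h') hb]

theorem mem_exposedPoints_convexHull_of_forall_lt [TopologicalSpace 𝕜] [TopologicalSpace E]
    {S : Set E} {x : E} (hx : x ∈ S) (l : StrongDual 𝕜 E) (hl : ∀ y ∈ S, y ≠ x → l y < l x) :
    x ∈ (convexHull 𝕜 S).exposedPoints 𝕜 := by
  have hsub : convexHull 𝕜 S ⊆ insert x {y | l y < l x} :=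
    convexHull_min (fun y hy => or_iff_not_imp_left.2 (hl y hy))
      (convex_insert_setOf_lt (l : E →ₗ[𝕜] 𝕜) x)
  refine ⟨subset_convexHull 𝕜 S hx, l, fun y hy => ?_⟩
  rcases hsub hy with rfl | hlt
  · exact ⟨le_rfl, fun _ => rfl⟩
  · exact ⟨hlt.le, fun h => absurd h (not_le.2 hlt)⟩

end ExtremePoints

section ParkingFunction

variable {n : ℕ} {u a b : Fin n → ℝ}

theorem IsParkingFunction.comp_perm (ha : IsParkingFunction n u a) (τ : Equiv.Perm (Fin n)) :
    IsParkingFunction n u (a ∘ τ) := by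
  obtain ⟨ha0, σ, hσ, hσu⟩ := ha
  refine ⟨fun i => ha0 _, τ.symm * σ, ?_, fun i => ?_⟩
  · simpa [Equiv.Perm.mul_apply] using hσ
  · simpa [Equiv.Perm.mul_apply] using hσu i

theorem IsParkingFunction.sum_le (ha : IsParkingFunction n u a) : ∑ i, a i ≤ ∑ i, u i := by
  obtain ⟨-, σ, -, hσu⟩ := ha
  rw [← Equiv.sum_comp σ a]
  exact sum_le_sum fun m _ => hσu m

theorem isParkingFunction_iff_exists_perm_le (hu : Monotone u) :
    IsParkingFunction n u a ↔ 0 ≤ a ∧ ∃ π : Equiv.Perm (Fin n), ∀ m, a (π m) ≤ u m := by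
  refine ⟨fun ⟨ha0, σ, _, hσu⟩ => ⟨ha0, σ, hσu⟩, fun ⟨ha0, π, hπu⟩ => ?_⟩
  refine ⟨ha0, Tuple.sort a, Tuple.monotone_sort a, fun m => le_of_not_gt fun hlt => ?_⟩
  -- the `m + 1` entries `a (π l)`, `l ≤ m`, are all below `a (sort a m)`, hence among the `m`
  -- entries sorted before position `m`
  have hsub : (Iic m).image π ⊆ (Iio m).image (Tuple.sort a) := by
    intro x hx
    obtain ⟨l, hl, rfl⟩ := mem_image.1 hx
    refine mem_image.2
      ⟨(Tuple.sort a).symm (π l), mem_Iio.2 (lt_of_not_ge fun hml => ?_), by simp⟩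
    have := Tuple.monotone_sort a hml
    simp only [comp_apply, Equiv.apply_symm_apply] at this
    exact (((hπu l).trans (hu (mem_Iic.1 hl))).trans_lt hlt).not_ge this
  have := card_le_card hsub
  rw [card_image_of_injective _ π.injective, Fin.card_Iic] at this
  have := this.trans card_image_le
  simp only [Fin.card_Iio] at this
  omega

theorem IsParkingFunction.of_le (hu : Monotone u) (hb : IsParkingFunction n u b) (ha0 : 0 ≤ a)
    (hab : a ≤ b) : IsParkingFunction n u a := by
  obtain ⟨-, π, hπu⟩ := (isParkingFunction_iff_exists_perm_le hu).1 hb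
  exact (isParkingFunction_iff_exists_perm_le hu).2 ⟨ha0, π, fun m => (hab _).trans (hπu m)⟩

theorem isParkingFunction_comp_perm_of_le (hu : Monotone u) (ha0 : 0 ≤ a) (hau : a ≤ u)
    (σ : Equiv.Perm (Fin n)) : IsParkingFunction n u (a ∘ σ) :=
  (isParkingFunction_iff_exists_perm_le hu).2
    ⟨fun i => ha0 (σ i), σ.symm, fun m => by simpa using hau m⟩

end ParkingFunction

section UExtreme

variable {n : ℕ} {u v s : Fin n → ℝ}

/-- The paper's `(0, …, 0, u_{k+1}, …, u_n)`, in 0-based indexing. -/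
def baseVertex (u : Fin n → ℝ) (k : ℕ) : Fin n → ℝ := fun m => if (m : ℕ) < k then 0 else u m

theorem baseVertex_nonneg (hu0 : 0 ≤ u) (k : ℕ) : 0 ≤ baseVertex u k := fun m => by
  unfold baseVertex; split_ifs
  exacts [le_rfl, hu0 m]

theorem baseVertex_le (hu0 : 0 ≤ u) (k : ℕ) : baseVertex u k ≤ u := fun m => by
  unfold baseVertex; split_ifs
  exacts [hu0 m, le_rfl]

theorem baseVertex_eq_zero_or_eq (k : ℕ) (m : Fin n) :
    baseVertex u k m = 0 ∨ baseVertex u k m = u m := by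
  unfold baseVertex; split_ifs <;> simp

theorem baseVertex_monotone (hu : Monotone u) (hu0 : 0 ≤ u) (k : ℕ) :
    Monotone (baseVertex u k) := fun a b hab => by
  unfold baseVertex
  split_ifs with ha hb hb
  exacts [le_rfl, hu0 b, absurd (lt_of_le_of_lt (Fin.le_def.1 hab) hb) ha, hu hab]

theorem eq_baseVertex_card_zeros (hs : Monotone s) (hs0 : 0 ≤ s)
    (hsu : ∀ m, s m = 0 ∨ s m = u m) : s = baseVertex u (Nat.card {m // s m = 0}) := by
  funext m
  unfold baseVertex
  split_ifs with hm
  · exact (hs.apply_eq_iff_lt_card hs0 m).2 hm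
  · exact (hsu m).resolve_left fun h => hm ((hs.apply_eq_iff_lt_card hs0 m).1 h)

theorem mem_Xext_iff :
    v ∈ Xext n u ↔ ∃ k ≤ n, ∃ σ : Equiv.Perm (Fin n), v = baseVertex u k ∘ σ := by
  simp only [Xext, IsUExtreme, Set.mem_ofPred_eq, funext_iff, comp_apply, baseVertex]

theorem isParkingFunction_of_mem_Xext (hu : Monotone u) (hu0 : 0 ≤ u) (hv : v ∈ Xext n u) :
    IsParkingFunction n u v := by
  obtain ⟨k, -, σ, rfl⟩ := mem_Xext_iff.1 hv
  exact isParkingFunction_comp_perm_of_le hu (baseVertex_nonneg hu0 k) (baseVertex_le hu0 k) σ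

theorem card_zeros_comp_perm (f : Fin n → ℝ) (σ : Equiv.Perm (Fin n)) :
    Nat.card {i // (f ∘ σ) i = 0} = Nat.card {i // f i = 0} :=
  Nat.card_congr (σ.subtypeEquiv fun _ => Iff.rfl)

theorem exists_perm_eq_baseVertex_comp (hu : Monotone u) (hu0 : 0 ≤ u) (hv : v ∈ Xext n u) :
    ∃ ρ : Equiv.Perm (Fin n), v = baseVertex u (Nat.card {i // v i = 0}) ∘ ρ := by
  obtain ⟨k, -, ρ, rfl⟩ := mem_Xext_iff.1 hv
  refine ⟨ρ, ?_⟩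
  rw [card_zeros_comp_perm, ← eq_baseVertex_card_zeros (baseVertex_monotone hu hu0 k)
    (baseVertex_nonneg hu0 k) (baseVertex_eq_zero_or_eq k)]

theorem card_zeros_le_of_mem_Xext (hv : v ∈ Xext n u) :
    Nat.card {i // u i = 0} ≤ Nat.card {i // v i = 0} := by
  obtain ⟨k, -, ρ, rfl⟩ := mem_Xext_iff.1 hv
  rw [card_zeros_comp_perm]
  refine Nat.card_le_card_of_injective (fun i => ⟨i, ?_⟩) fun i j h =>
    Subtype.ext (congrArg Subtype.val h :)
  rcases baseVertex_eq_zero_or_eq (u := u) k i with h | h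
  exacts [h, h.trans i.2]

theorem sum_eq_of_card_zeros_eq (hu : Monotone u) (hu0 : 0 ≤ u) (hv : v ∈ Xext n u)
    (hcard : Nat.card {i // v i = 0} = Nat.card {i // u i = 0}) : ∑ i, v i = ∑ i, u i := by
  obtain ⟨ρ, hρ⟩ := exists_perm_eq_baseVertex_comp hu hu0 hv
  rw [hρ, hcard, ← eq_baseVertex_card_zeros hu hu0 fun m => Or.inr rfl]
  exact Equiv.sum_comp ρ u

end UExtreme

section Vertices

variable {n : ℕ} {u v : Fin n → ℝ}

def exposingWeights (k : ℕ) : Fin n → ℝ := fun m => 2 * (m : ℕ) + 1 - 2 * k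

theorem exposingWeights_strictMono (k : ℕ) : StrictMono (exposingWeights (n := n) k) :=
  fun a b hab => by
    have : ((a : ℕ) : ℝ) < (b : ℕ) := by exact_mod_cast hab
    simp only [exposingWeights]
    linarith

theorem exposingWeights_neg {k : ℕ} {m : Fin n} (hm : (m : ℕ) < k) : exposingWeights k m < 0 := by
  have : 2 * ((m : ℕ) : ℝ) + 1 < 2 * k := by
    exact_mod_cast (by omega : 2 * (m : ℕ) + 1 < 2 * k)
  simp only [exposingWeights]
  linarith

theorem exposingWeights_pos {k : ℕ} {m : Fin n} (hm : ¬ (m : ℕ) < k) :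
    0 < exposingWeights k m := by
  have : 2 * (k : ℝ) < 2 * ((m : ℕ) : ℝ) + 1 := by
    exact_mod_cast (by omega : 2 * k < 2 * (m : ℕ) + 1)
  simp only [exposingWeights]
  linarith

theorem dotProduct_lt_dotProduct_baseVertex (hu : Monotone u) (hu0 : 0 ≤ u) (k : ℕ)
    {z : Fin n → ℝ} (hz : IsParkingFunction n u z) (hne : z ≠ baseVertex u k) :
    exposingWeights k ⬝ᵥ z < exposingWeights k ⬝ᵥ baseVertex u k := by
  obtain ⟨hz0, σ, hs, hsu⟩ := hz
  set g : Fin n → ℝ := exposingWeights k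
  set w := baseVertex u k
  have hg := exposingWeights_strictMono (n := n) k
  have hw := baseVertex_monotone hu hu0 k
  have hterm : ∀ m, g m * (z ∘ σ) m ≤ g m * w m := fun m => by
    by_cases hm : (m : ℕ) < k
    · simp only [w, baseVertex, if_pos hm, mul_zero]
      exact mul_nonpos_of_nonpos_of_nonneg (exposingWeights_neg hm).le (hz0 _)
    · simp only [w, baseVertex, if_neg hm]
      exact mul_le_mul_of_nonneg_left (hsu m) (exposingWeights_pos hm).le
  have hz : z = (z ∘ σ) ∘ σ.symm := by ext; simp
  by_cases hsw : z ∘ σ = w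
  · have hnot : ¬ Monovary g (w ∘ σ.symm) := fun h => hne <| by
      rw [hz, hsw]
      exact hw.comp_perm_eq_self (hg.trans_monovary h.symm)
    calc g ⬝ᵥ z = g ⬝ᵥ (w ∘ σ.symm) := by rw [hz, hsw]
      _ < g ⬝ᵥ w := (hg.monotone.monovary hw).sum_mul_comp_perm_lt_sum_mul_iff.2 hnot
  · obtain ⟨m, hm⟩ := ne_iff.1 hsw
    have hgm : g m ≠ 0 := by
      by_cases h : (m : ℕ) < k
      exacts [(exposingWeights_neg h).ne, (exposingWeights_pos h).ne']
    calc g ⬝ᵥ z = g ⬝ᵥ ((z ∘ σ) ∘ σ.symm) := congrArg _ hz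
      _ ≤ g ⬝ᵥ (z ∘ σ) := (hg.monotone.monovary hs).sum_mul_comp_perm_le_sum_mul
      _ < g ⬝ᵥ w := sum_lt_sum (fun m _ => hterm m) ⟨m, mem_univ m,
          (hterm m).lt_of_ne fun h => hm (mul_left_cancel₀ hgm h)⟩

theorem exists_dotProduct_lt_of_mem_Xext (hu : Monotone u) (hu0 : 0 ≤ u) (hv : v ∈ Xext n u) :
    ∃ c : Fin n → ℝ, ∀ y, IsParkingFunction n u y → y ≠ v → c ⬝ᵥ y < c ⬝ᵥ v := by
  obtain ⟨k, -, ρ, rfl⟩ := mem_Xext_iff.1 hv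
  refine ⟨exposingWeights k ∘ ρ, fun y hy hne => ?_⟩
  rw [← dotProduct_comp_equiv_symm, comp_equiv_dotProduct_comp_equiv]
  refine dotProduct_lt_dotProduct_baseVertex hu hu0 k (hy.comp_perm ρ.symm) fun h => hne ?_
  rw [← h]
  ext
  simp

theorem Xext_subset_extremePoints_PF (hu : Monotone u) (hu0 : 0 ≤ u) :
    Xext n u ⊆ (PF n u).extremePoints ℝ := fun v hv => by
  obtain ⟨c, hc⟩ := exists_dotProduct_lt_of_mem_Xext hu hu0 hv
  exact exposedPoints_subset_extremePoints <| mem_exposedPoints_convexHull_of_forall_lt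
    (isParkingFunction_of_mem_Xext hu hu0 hv) (dotProductEquiv ℝ (Fin n) c).toContinuousLinearMap
    hc

theorem eq_zero_or_eq_of_comp_perm_mem_extremePoints (hu : Monotone u) {s : Fin n → ℝ}
    (hs0 : 0 ≤ s) (hsu : s ≤ u) (σ : Equiv.Perm (Fin n))
    (hext : s ∘ σ ∈ (PF n u).extremePoints ℝ) (m : Fin n) : s m = 0 ∨ s m = u m := by
  by_contra! h
  set ε := min (s m) (u m - s m)
  have hε : 0 < ε :=
    lt_min (lt_of_le_of_ne (hs0 m) (Ne.symm h.1)) (sub_pos.2 (lt_of_le_of_ne (hsu m) h.2))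
  have hmem : ∀ t, |t| ≤ ε → s ∘ σ + Pi.single m t ∘ σ ∈ PF n u := fun t ht => by
    have := abs_le.1 ht
    refine subset_convexHull ℝ _ (?_ : IsParkingFunction n u ((s + Pi.single m t) ∘ σ))
    refine isParkingFunction_comp_perm_of_le hu (fun i => ?_) (fun i => ?_) σ
    all_goals
      by_cases hi : i = m
      · subst hi
        simp only [Pi.add_apply, Pi.single_eq_same, Pi.zero_apply]
        linarith [min_le_left (s i) (u i - s i), min_le_right (s i) (u i - s i)]
      · simp only [Pi.add_apply, Pi.single_eq_of_ne hi, add_zero, Pi.zero_apply]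
        first | exact hs0 i | exact hsu i
  have hsub : s ∘ σ - Pi.single m ε ∘ σ ∈ PF n u := by
    simpa [sub_eq_add_neg, Pi.single_neg, Pi.neg_comp] using
      hmem (-ε) (by rw [abs_neg, abs_of_pos hε])
  have := congrFun (eq_zero_of_mem_extremePoints_of_sub_mem_of_add_mem hext hsub
    (hmem ε (abs_of_pos hε).le)) (σ.symm m)
  simp only [comp_apply, Equiv.apply_symm_apply, Pi.single_eq_same, Pi.zero_apply] at this
  exact hε.ne' this

theorem extremePoints_PF_subset_Xext (hu : Monotone u) :
    (PF n u).extremePoints ℝ ⊆ Xext n u := by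
  intro y hy
  obtain ⟨hy0, σ, hs, hsu⟩ := extremePoints_convexHull_subset hy
  have hy' : y = (y ∘ σ) ∘ σ.symm := by ext; simp
  rw [hy'] at hy
  have hcard : Nat.card {m // (y ∘ σ) m = 0} ≤ n :=
    (Finite.card_subtype_le (α := Fin n) _).trans_eq (by simp)
  refine mem_Xext_iff.2 ⟨_, hcard, σ.symm, ?_⟩
  rw [← eq_baseVertex_card_zeros (s := y ∘ σ) hs (fun i => hy0 _)
    (eq_zero_or_eq_of_comp_perm_mem_extremePoints hu (fun i => hy0 _) hsu σ.symm hy)]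
  exact hy'

end Vertices

section NormalCone

variable {n : ℕ} {u v c y : Fin n → ℝ}

theorem ncone_convexHull (S : Set (Fin n → ℝ)) (v : Fin n → ℝ) :
    ncone n (convexHull ℝ S) v = {c | ∀ y ∈ S, c ⬝ᵥ y ≤ c ⬝ᵥ v} := by
  ext c
  exact ⟨fun hc y hy => hc y (subset_convexHull ℝ S hy), fun hc =>
    convexHull_min hc (convex_halfSpace_le (dotProductEquiv ℝ (Fin n) c).isLinear _)⟩

theorem mem_ncone_PF_iff :
    c ∈ ncone n (PF n u) v ↔ ∀ y, IsParkingFunction n u y → c ⬝ᵥ y ≤ c ⬝ᵥ v := by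
  rw [PF, ncone_convexHull]
  rfl

theorem nonneg_of_forall_dotProduct_le (hu : Monotone u) (hu0 : 0 ≤ u) (hv : v ∈ Xext n u)
    (hc : ∀ y, IsParkingFunction n u y → c ⬝ᵥ y ≤ c ⬝ᵥ v) {j : Fin n} (hj : v j ≠ 0) :
    0 ≤ c j := by
  have hvp := isParkingFunction_of_mem_Xext hu hu0 hv
  have hy : IsParkingFunction n u (update v j 0) :=
    hvp.of_le hu (le_update_iff.2 ⟨le_rfl, fun i _ => hvp.1 i⟩) (update_le_self_iff.2 (hvp.1 j))
  have := hc _ hy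
  rw [dotProduct_update] at this
  nlinarith [lt_of_le_of_ne (hvp.1 j) (Ne.symm hj)]

theorem monovary_of_forall_dotProduct_le (hu : Monotone u) (hu0 : 0 ≤ u) (hv : v ∈ Xext n u)
    (hc : ∀ y, IsParkingFunction n u y → c ⬝ᵥ y ≤ c ⬝ᵥ v) : Monovary c v := by
  intro i j hij
  have hne : i ≠ j := by rintro rfl; exact lt_irrefl _ hij
  have := hc _ ((isParkingFunction_of_mem_Xext hu hu0 hv).comp_perm (Equiv.swap i j))
  rw [dotProduct_comp_swap c v hne] at this
  by_contra! h
  nlinarith [mul_pos (sub_pos.2 h) (sub_pos.2 hij)]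

theorem exists_pos_isParkingFunction_update (hu : Monotone u) (hu0 : 0 ≤ u) (hv : v ∈ Xext n u)
    (hcard : Nat.card {i // u i = 0} < Nat.card {i // v i = 0}) {i : Fin n} (hi : v i = 0) :
    ∃ ε > 0, IsParkingFunction n u (update v i ε) := by
  obtain ⟨ρ, hρ⟩ := exists_perm_eq_baseVertex_comp hu hu0 hv
  set K := Nat.card {i // v i = 0}
  set w := baseVertex u K
  have hKn : K ≤ n := (Finite.card_subtype_le (α := Fin n) _).trans_eq (by simp)
  set M : Fin n := ⟨K - 1, by omega⟩
  have hwM : w M = 0 := if_pos (by simp only [M]; omega)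
  have huM : 0 < u M := (hu0 M).lt_of_ne fun h => by
    have := (hu.apply_eq_iff_lt_card (a := 0) hu0 M).1 h.symm
    simp only [M] at this
    omega
  -- relabel so that the zero coordinate `i` sits at the last zero position `M`
  set ρ' := ρ.trans (Equiv.swap (ρ i) M)
  have hρ'i : ρ'.symm M = i := ρ'.symm_apply_eq.2 (by simp [ρ'])
  have hρ' : v = w ∘ ρ' := by
    have hwi : w (ρ i) = 0 := by rw [← hi, hρ]; rfl
    have hsw : w ∘ Equiv.swap (ρ i) M = w := by
      rw [Equiv.comp_swap_eq_update, hwi, hwM,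
        show update w M 0 = w from update_eq_self_iff.2 hwM.symm]
      exact update_eq_self_iff.2 hwi.symm
    rw [hρ]
    exact congrArg (· ∘ ρ) hsw.symm
  refine ⟨u M, huM, ?_⟩
  rw [hρ', ← hρ'i, ← update_comp_equiv]
  refine isParkingFunction_comp_perm_of_le hu ?_ ?_ ρ'
  · exact le_update_iff.2 ⟨hu0 M, fun j _ => baseVertex_nonneg hu0 K j⟩
  · exact update_le_iff.2 ⟨le_rfl, fun j _ => baseVertex_le hu0 K j⟩

theorem nonpos_of_forall_dotProduct_le (hu : Monotone u) (hu0 : 0 ≤ u) (hv : v ∈ Xext n u)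
    (hcard : Nat.card {i // u i = 0} < Nat.card {i // v i = 0})
    (hc : ∀ y, IsParkingFunction n u y → c ⬝ᵥ y ≤ c ⬝ᵥ v) {i : Fin n} (hi : v i = 0) :
    c i ≤ 0 := by
  obtain ⟨ε, hε, hy⟩ := exists_pos_isParkingFunction_update hu hu0 hv hcard hi
  have := hc _ hy
  rw [dotProduct_update, hi] at this
  nlinarith

theorem dotProduct_le_of_monovary (hu : Monotone u) (hu0 : 0 ≤ u) (hv : v ∈ Xext n u)
    (hc0 : 0 ≤ c) (hcv0 : ∀ i, v i = 0 → c i = 0) (hcv : Monovary c v)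
    (hy : IsParkingFunction n u y) : c ⬝ᵥ y ≤ c ⬝ᵥ v := by
  obtain ⟨k, -, ρ, rfl⟩ := mem_Xext_iff.1 hv
  set w := baseVertex u k
  obtain ⟨θ, hcθ, hvθ⟩ := hcv.exists_perm_monotone
  have hwθ : (w ∘ ρ) ∘ θ = w :=
    (baseVertex_monotone hu hu0 k).comp_perm_eq_self (σ := θ.trans ρ) hvθ
  obtain ⟨-, σ, hs, hsu⟩ := hy
  calc c ⬝ᵥ y = (c ∘ θ) ⬝ᵥ ((y ∘ σ) ∘ (θ.trans σ.symm)) := by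
        rw [← comp_equiv_dotProduct_comp_equiv c y θ]
        congr 1
        ext; simp
    _ ≤ (c ∘ θ) ⬝ᵥ (y ∘ σ) := (hcθ.monovary hs).sum_mul_comp_perm_le_sum_mul
    _ ≤ (c ∘ θ) ⬝ᵥ w := sum_le_sum fun m _ => by
        by_cases hm : (m : ℕ) < k
        · simp [hcv0 _ ((congrFun hwθ m).trans (if_pos hm))]
        · simp only [comp_apply, w, baseVertex, if_neg hm]
          exact mul_le_mul_of_nonneg_left (hsu m) (hc0 _)
    _ = c ⬝ᵥ (w ∘ ρ) := by rw [← comp_equiv_dotProduct_comp_equiv c _ θ, hwθ]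

theorem dotProduct_le_of_nonpos_of_nonneg (hu : Monotone u) (hu0 : 0 ≤ u) (hv : v ∈ Xext n u)
    (hcZ : ∀ i, v i = 0 → c i ≤ 0) (hc0 : ∀ j, v j ≠ 0 → 0 ≤ c j) (hcv : Monovary c v)
    (hy : IsParkingFunction n u y) : c ⬝ᵥ y ≤ c ⬝ᵥ v := by
  set c' : Fin n → ℝ := fun i => max (c i) 0
  calc c ⬝ᵥ y ≤ c' ⬝ᵥ y :=
        sum_le_sum fun i _ => mul_le_mul_of_nonneg_right (le_max_left _ _) (hy.1 i)
    _ ≤ c' ⬝ᵥ v := dotProduct_le_of_monovary hu hu0 hv (fun i => le_max_right _ _)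
        (fun i hi => max_eq_right (hcZ i hi)) (fun i j hij => max_le_max (hcv hij) le_rfl) hy
    _ = c ⬝ᵥ v := sum_congr rfl fun i _ => by
        by_cases hi : v i = 0
        · simp [hi]
        · simp only [c', max_eq_left (hc0 i hi)]

theorem dotProduct_le_of_sum_eq (hu : Monotone u) (hu0 : 0 ≤ u) (hv : v ∈ Xext n u)
    (hsum : ∑ i, v i = ∑ i, u i) (hc0 : ∀ j, v j ≠ 0 → 0 ≤ c j) (hcv : Monovary c v)
    (hy : IsParkingFunction n u y) : c ⬝ᵥ y ≤ c ⬝ᵥ v := by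
  classical
  have hv0 := (isParkingFunction_of_mem_Xext hu hu0 hv).1
  -- a threshold `t ≥ 0` separating the values of `c` on the zeros of `v` from the others
  set L := insert 0 ((univ.filter (v · = 0)).image c)
  set t := L.max' (insert_nonempty _ _)
  have ht0 : 0 ≤ t := L.le_max' 0 (mem_insert_self _ _)
  have htZ : ∀ i, v i = 0 → c i ≤ t := fun i hi =>
    L.le_max' _ (mem_insert_of_mem (mem_image_of_mem _ (by simp [hi])))
  have htc : ∀ j, v j ≠ 0 → t ≤ c j := fun j hj => L.max'_le _ _ fun x hx => by
    rcases mem_insert.1 hx with rfl | hx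
    · exact hc0 j hj
    · obtain ⟨i, hi, rfl⟩ := mem_image.1 hx
      exact hcv ((mem_filter.1 hi).2 ▸ (hv0 j).lt_of_ne (Ne.symm hj))
  have hsplit : ∀ x : Fin n → ℝ, c ⬝ᵥ x = (c - fun _ => t) ⬝ᵥ x + t * ∑ i, x i := fun x => by
    simp only [dotProduct, Pi.sub_apply, sub_mul, sum_sub_distrib, mul_sum]
    ring
  rw [hsplit y, hsplit v]
  refine add_le_add (dotProduct_le_of_nonpos_of_nonneg hu hu0 hv (fun i hi => ?_)
    (fun j hj => ?_) (fun i j hij => ?_) hy)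
    (mul_le_mul_of_nonneg_left (hy.sum_le.trans hsum.ge) ht0)
  · simpa using htZ i hi
  · simpa using htc j hj
  · simpa using hcv hij

end NormalCone

theorem extremePoints_eq_uExtreme_and_normal_cones_general
    (n : ℕ) (u : Fin n → ℝ)
    (hmono : Monotone u) (hnonneg : ∀ i, 0 ≤ u i) :
    Set.extremePoints ℝ (PF n u) = Xext n u ∧
    ∀ v ∈ Xext n u,
      Nat.card {i : Fin n // u i = 0} ≤ Nat.card {i : Fin n // v i = 0} ∧
      (Nat.card {i : Fin n // v i = 0} = Nat.card {i : Fin n // u i = 0} →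
        ncone n (PF n u) v =
          {c : Fin n → ℝ | (∀ j, v j ≠ 0 → 0 ≤ c j) ∧
            ∀ i j, v i < v j → c i ≤ c j}) ∧
      (Nat.card {i : Fin n // u i = 0} < Nat.card {i : Fin n // v i = 0} →
        ncone n (PF n u) v =
          {c : Fin n → ℝ | (∀ i, v i = 0 → c i ≤ 0) ∧ (∀ j, v j ≠ 0 → 0 ≤ c j) ∧
            ∀ i j, v i < v j → c i ≤ c j}) := by
  refine ⟨(extremePoints_PF_subset_Xext hmono).antisymm
    (Xext_subset_extremePoints_PF hmono hnonneg),
    fun v hv => ⟨card_zeros_le_of_mem_Xext hv, fun hcard => ?_, fun hcard => ?_⟩⟩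
  · ext c
    rw [mem_ncone_PF_iff]
    exact ⟨fun hc => ⟨fun j => nonneg_of_forall_dotProduct_le hmono hnonneg hv hc,
        monovary_of_forall_dotProduct_le hmono hnonneg hv hc⟩,
      fun ⟨hc0, hcv⟩ y => dotProduct_le_of_sum_eq hmono hnonneg hv
        (sum_eq_of_card_zeros_eq hmono hnonneg hv hcard) hc0 hcv⟩
  · ext c
    rw [mem_ncone_PF_iff]
    exact ⟨fun hc => ⟨fun i => nonpos_of_forall_dotProduct_le hmono hnonneg hv hcard hc,
        fun j => nonneg_of_forall_dotProduct_le hmono hnonneg hv hc,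
        monovary_of_forall_dotProduct_le hmono hnonneg hv hc⟩,
      fun ⟨hcZ, hc0, hcv⟩ y => dotProduct_le_of_nonpos_of_nonneg hmono hnonneg hv hcZ hc0 hcv⟩

/-- The extreme points of `PF(u)` are exactly the `u`-extreme points, every
`u`-extreme point `v` has at least `m₀` zero coordinates (where `m₀` is the
number of zero coordinates of `u`, and `Z = {i : v i = 0}`), and the normal
cone of `PF(u)` at `v` is described explicitly, according to whether
`|Z| = m₀` or `|Z| > m₀`. -/
theorem extremePoints_eq_uExtreme_and_normal_cones
    (n : ℕ) (hn : 1 ≤ n) (u : Fin n → ℝ)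
    (hmono : Monotone u) (hnonneg : ∀ i, 0 ≤ u i) (hne : u ≠ 0) :
    Set.extremePoints ℝ (PF n u) = Xext n u ∧
    ∀ v ∈ Xext n u,
      Nat.card {i : Fin n // u i = 0} ≤ Nat.card {i : Fin n // v i = 0} ∧
      (Nat.card {i : Fin n // v i = 0} = Nat.card {i : Fin n // u i = 0} →
        ncone n (PF n u) v =
          {c : Fin n → ℝ | (∀ j, v j ≠ 0 → 0 ≤ c j) ∧
            ∀ i j, v i < v j → c i ≤ c j}) ∧
      (Nat.card {i : Fin n // u i = 0} < Nat.card {i : Fin n // v i = 0} →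
        ncone n (PF n u) v =
          {c : Fin n → ℝ | (∀ i, v i = 0 → c i ≤ 0) ∧ (∀ j, v j ≠ 0 → 0 ≤ c j) ∧
            ∀ i j, v i < v j → c i ≤ c j}) :=
  extremePoints_eq_uExtreme_and_normal_cones_general n u hmono hnonneg
end
end

section
/- The cones attached to the u-extreme points cover all of ℝ^n: for every c ∈ ℝ^n there exists a u-extreme point v, with zero set Z = {i ∈ [n] : v_i = 0}, such that c ∈ C(v), where C(v) = {c ∈ ℝ^n : c_j ≥ 0 for all j ∉ Z, and c_i ≤ c_j whenever v_i < v_j} if |Z| = m_0, and C(v) = {c ∈ ℝ^n : c_i ≤ 0 for all i ∈ Z, c_j ≥ 0 for all j ∉ Z, and c_i ≤ c_j whenever v_i < v_j} if |Z| > m_0. -/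
/-!
Rank the coordinates of `c` increasingly by a permutation `σ`, and let `k` be the number of
negative entries of `c` and `m₀` the number of zero entries of `u`. The `u`-extreme point
`v i = if σ i < k then 0 else u (σ i)` is monotone along the ranking, so `v i < v j` forces
`c i ≤ c j`, and it vanishes on every negative entry of `c`. Its zero set consists of the
coordinates of rank below `max k m₀`; when `k > m₀` these are exactly the negative entries
of `c`.
-/

noncomputable section

open Finset

section ExtremePoint

variable {n k m : ℕ} {u c : Fin n → ℝ} {σ : Equiv.Perm (Fin n)}

def extremePoint (u : Fin n → ℝ) (k : ℕ) (σ : Equiv.Perm (Fin n)) : Fin n → ℝ :=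
  fun i => if (σ i : ℕ) < k then 0 else u (σ i)

lemma isUExtreme_extremePoint (hk : k ≤ n) : IsUExtreme n u (extremePoint u k σ) :=
  ⟨k, hk, σ, fun _ => rfl⟩

lemma extremePoint_nonneg (hu : ∀ j, 0 ≤ u j) (i : Fin n) : 0 ≤ extremePoint u k σ i := by
  unfold extremePoint
  split_ifs
  exacts [le_rfl, hu _]

lemma extremePoint_eq_zero_iff (hm : ∀ j, u j = 0 ↔ (j : ℕ) < m) (i : Fin n) :
    extremePoint u k σ i = 0 ↔ (σ i : ℕ) < max k m := by
  unfold extremePoint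
  split_ifs with hk
  · simp [hk]
  · rw [hm]
    omega

lemma natCard_extremePoint_eq_zero (hm : ∀ j, u j = 0 ↔ (j : ℕ) < m) (hk : k ≤ n)
    (hmn : m ≤ n) : Nat.card {i // extremePoint u k σ i = 0} = max k m := by
  rw [Nat.card_congr (σ.subtypeEquiv (q := fun j : Fin n => (j : ℕ) < max k m)
    (extremePoint_eq_zero_iff hm)), Nat.card_eq_fintype_card,
    Fintype.card_fin_lt_of_le (max_le hk hmn)]

lemma nonneg_of_extremePoint_ne_zero (hck : ∀ i, c i < 0 ↔ (σ i : ℕ) < k) {j : Fin n}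
    (hj : extremePoint u k σ j ≠ 0) : 0 ≤ c j := by
  by_contra hcj
  exact hj (if_pos ((hck j).1 (not_le.1 hcj)))

lemma le_of_extremePoint_lt (hu : Monotone u) (hu₀ : ∀ j, 0 ≤ u j)
    (hcσ : Monotone (c ∘ σ.symm)) {i j : Fin n}
    (hij : extremePoint u k σ i < extremePoint u k σ j) : c i ≤ c j := by
  have hj : ¬ (σ j : ℕ) < k := fun hj => by
    simpa [extremePoint, hj] using (extremePoint_nonneg hu₀ i).trans_lt hij
  have hσ : σ i ≤ σ j := by
    by_cases hi : (σ i : ℕ) < k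
    · exact Fin.le_def.2 (by omega)
    · simp only [extremePoint, hi, hj, if_false] at hij
      exact (hu.reflect_lt hij).le
  simpa using hcσ hσ

lemma nonpos_of_extremePoint_eq_zero (hm : ∀ j, u j = 0 ↔ (j : ℕ) < m)
    (hck : ∀ i, c i < 0 ↔ (σ i : ℕ) < k) (hmk : m < k) {i : Fin n}
    (hi : extremePoint u k σ i = 0) : c i ≤ 0 := by
  rw [extremePoint_eq_zero_iff hm, max_eq_left hmk.le, ← hck] at hi
  exact hi.le

end ExtremePoint

theorem extreme_cones_cover_general
    (n : ℕ) (u : Fin n → ℝ)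
    (hmono : Monotone u) (hnonneg : ∀ i, 0 ≤ u i)
    (c : Fin n → ℝ) :
    ∃ v : Fin n → ℝ, IsUExtreme n u v ∧
      ((Nat.card {i : Fin n // v i = 0} = Nat.card {i : Fin n // u i = 0} ∧
          c ∈ {c' : Fin n → ℝ | (∀ j, v j ≠ 0 → 0 ≤ c' j) ∧
            ∀ i j, v i < v j → c' i ≤ c' j}) ∨
       (Nat.card {i : Fin n // u i = 0} < Nat.card {i : Fin n // v i = 0} ∧
          c ∈ {c' : Fin n → ℝ | (∀ i, v i = 0 → c' i ≤ 0) ∧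
            (∀ j, v j ≠ 0 → 0 ≤ c' j) ∧ ∀ i j, v i < v j → c' i ≤ c' j})) := by
  classical
  set σ := (Tuple.sort c).symm
  have hcσ : Monotone (c ∘ σ.symm) := Tuple.monotone_sort c
  set k := #{j | c (σ.symm j) < 0}
  set m := #{j | u j = 0}
  have hck (i : Fin n) : c i < 0 ↔ (σ i : ℕ) < k := by
    simpa using (Fin.lt_card_filter_univ_iff_apply_of_imp (j := σ i) _
      fun a b hba ha => (hcσ hba).trans_lt ha).symm
  have hm (j : Fin n) : u j = 0 ↔ (j : ℕ) < m :=
    (Fin.lt_card_filter_univ_iff_apply_of_imp _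
      fun a b hba ha => le_antisymm (ha ▸ hmono hba) (hnonneg b)).symm
  have hkn : k ≤ n := (card_le_univ _).trans_eq (Fintype.card_fin n)
  have hmn : m ≤ n := (card_le_univ _).trans_eq (Fintype.card_fin n)
  have hcard_u : Nat.card {j // u j = 0} = m := by
    rw [Nat.card_congr (Equiv.subtypeEquivRight hm), Nat.card_eq_fintype_card,
      Fintype.card_fin_lt_of_le hmn]
  refine ⟨extremePoint u k σ, isUExtreme_extremePoint hkn, ?_⟩
  rw [natCard_extremePoint_eq_zero hm hkn hmn, hcard_u]
  have hpos (j : Fin n) : extremePoint u k σ j ≠ 0 → 0 ≤ c j :=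
    nonneg_of_extremePoint_ne_zero hck
  have hlt (i j : Fin n) : extremePoint u k σ i < extremePoint u k σ j → c i ≤ c j :=
    le_of_extremePoint_lt hmono hnonneg hcσ
  rcases le_or_gt k m with hkm | hmk
  · exact .inl ⟨max_eq_right hkm, hpos, hlt⟩
  · exact .inr ⟨lt_max_of_lt_left hmk, fun _ => nonpos_of_extremePoint_eq_zero hm hck hmk,
      hpos, hlt⟩

/-- The cones `C(v)` attached to the `u`-extreme points cover all of `ℝⁿ`:
for every `c ∈ ℝⁿ` there is a `u`-extreme point `v`, with zero set
`Z = {i : v i = 0}` (of cardinality at least `m₀`, the number of zero coordinates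
of `u`), such that `c ∈ C(v)`, where `C(v)` is the stated cone according to
whether `|Z| = m₀` or `|Z| > m₀`. -/
theorem extreme_cones_cover
    (n : ℕ) (hn : 1 ≤ n) (u : Fin n → ℝ)
    (hmono : Monotone u) (hnonneg : ∀ i, 0 ≤ u i) (hne : u ≠ 0)
    (c : Fin n → ℝ) :
    ∃ v : Fin n → ℝ, IsUExtreme n u v ∧
      ((Nat.card {i : Fin n // v i = 0} = Nat.card {i : Fin n // u i = 0} ∧
          c ∈ {c' : Fin n → ℝ | (∀ j, v j ≠ 0 → 0 ≤ c' j) ∧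
            ∀ i j, v i < v j → c' i ≤ c' j}) ∨
       (Nat.card {i : Fin n // u i = 0} < Nat.card {i : Fin n // v i = 0} ∧
          c ∈ {c' : Fin n → ℝ | (∀ i, v i = 0 → c' i ≤ 0) ∧
            (∀ j, v j ≠ 0 → 0 ≤ c' j) ∧ ∀ i j, v i < v j → c' i ≤ c' j})) :=
  extreme_cones_cover_general n u hmono hnonneg c
end
end

section
/- The parking function polytope has the inequality description PF(u) = {x ∈ ℝ^n : x_i ≥ 0 for every i ∈ [n], and Σ_{i∈I} x_i ≤ u_n + u_{n−1} + ⋯ + u_{n−|I|+1} for every nonempty subset I ⊆ [n]}. -/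
/-! A parking function, once sorted, lies below `u`, and any `k` of its coordinates sum to at most
its `k` largest ones; so parking functions satisfy the inequalities, which cut out a convex set.
Conversely, if `x` satisfies the inequalities but is not in the convex hull of the finitely many
"greedy" parking functions, some weight vector `c` separates them. List the coordinates by
decreasing `c` and sum by parts: the positive part of `c` becomes a nonnegative combination of
indicators of prefixes, on which `x` is bounded by the inequalities and the greedy vertex, which
puts `u_n, u_{n-1}, …` on the coordinates of positive weight in that order, attains the bound. -/

noncomputable section

/-- The sum of the `k` largest-index coordinates of `u`, i.e.
`u n + u (n-1) + ⋯ + u (n-k+1)` (in 1-indexed notation). -/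
def topSum (n : ℕ) (u : Fin n → ℝ) (k : ℕ) : ℝ :=
  ∑ i ∈ Finset.univ.filter (fun i : Fin n => n - k ≤ (i : ℕ)), u i

open Finset

theorem Finset.sum_le_sum_of_card_eq_of_forall_le {ι M : Type*} [AddCommMonoid M] [LinearOrder M]
    [IsOrderedAddMonoid M] {s t : Finset ι} {f : ι → M} (hst : #s = #t)
    (h : ∀ i ∈ s, ∀ j ∈ t, f i ≤ f j) : ∑ i ∈ s, f i ≤ ∑ j ∈ t, f j := by
  obtain rfl | ht := t.eq_empty_or_nonempty
  · simp_all
  calc ∑ i ∈ s, f i ≤ #s • t.inf' ht f :=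
        sum_le_card_nsmul _ _ _ fun i hi => le_inf' ht _ fun j hj => h i hi j hj
    _ = #t • t.inf' ht f := by rw [hst]
    _ ≤ ∑ j ∈ t, f j := card_nsmul_le_sum _ _ _ fun j hj => inf'_le f hj

theorem Fin.sum_mul_le_sum_mul_of_sum_Iic_le {R : Type*} [CommRing R] [PartialOrder R]
    [IsOrderedRing R] : ∀ {n : ℕ} {D y w : Fin n → R}, Antitone D → 0 ≤ D →
    (∀ k, ∑ j ∈ Iic k, y j ≤ ∑ j ∈ Iic k, w j) → ∑ j, D j * y j ≤ ∑ j, D j * w j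
  | 0, _, _, _, _, _, _ => by simp
  | n + 1, D, y, w, hD, hD0, h => by
    set m := D (Fin.last n)
    -- peel off the constant weight `m = min D`; what is left vanishes at the last index
    have hsplit : ∀ v : Fin (n + 1) → R, ∑ j, D j * v j =
        ∑ j : Fin n, (D j.castSucc - m) * v j.castSucc + m * ∑ j, v j := fun v => by
      simp only [Fin.sum_univ_castSucc, mul_add, mul_sum, sub_mul, sum_sub_distrib]
      ring
    rw [hsplit y, hsplit w]
    gcongr ?_ + m * ?_
    · refine Fin.sum_mul_le_sum_mul_of_sum_Iic_le (fun i j hij => sub_le_sub_right (hD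
        (Fin.castSucc_le_castSucc_iff.2 hij)) m) (fun j => sub_nonneg.2 (hD (Fin.le_last _)))
        fun k => ?_
      simpa only [Fin.sum_Iic_castSucc] using h k.castSucc
    · exact hD0 _
    · simpa only [← Fin.top_eq_last, Iic_top] using h ⊤

section

variable {n : ℕ}

theorem Fin.card_filter_sub_le_val {k : ℕ} (hk : k ≤ n) : #{i : Fin n | n - k ≤ (i : ℕ)} = k := by
  have h := card_filter_add_card_filter_not (s := univ) fun i : Fin n => (i : ℕ) < n - k
  simp only [Fin.card_filter_val_lt, not_lt, card_univ, Fintype.card_fin] at h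
  omega

theorem sum_le_topSum_card {f : Fin n → ℝ} (hf : Monotone f) (J : Finset (Fin n)) :
    ∑ j ∈ J, f j ≤ topSum n f #J := by
  set T : Finset (Fin n) := {i | n - #J ≤ (i : ℕ)}
  have hT : #T = #J := Fin.card_filter_sub_le_val (by simpa using card_le_univ J)
  rw [topSum, ← sum_inter_add_sum_sdiff J T, ← sum_inter_add_sum_sdiff T J, inter_comm]
  refine add_le_add_right (sum_le_sum_of_card_eq_of_forall_le (card_sdiff_comm hT.symm)
    fun i hi j hj => hf ?_) _
  simp only [mem_sdiff, T, mem_filter, mem_univ, true_and] at hi hj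
  exact Fin.le_def.2 (by omega)

theorem topSum_le_topSum {u v : Fin n → ℝ} (h : ∀ i, v i ≤ u i) (k : ℕ) :
    topSum n v k ≤ topSum n u k :=
  sum_le_sum fun i _ => h i

theorem topSum_succ_eq_sum_Iic (u : Fin n → ℝ) (k : Fin n) :
    topSum n u (k + 1) = ∑ j ∈ Iic k, u j.rev := by
  rw [topSum, sum_filter, ← filter_ge_eq_Iic, sum_filter]
  refine Fintype.sum_equiv Fin.revPerm _ _ fun i => ?_
  simp only [Fin.revPerm_apply, Fin.rev_rev, Fin.le_def, Fin.val_rev]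
  congr 1
  exact propext (by omega)

def parkingRegion (n : ℕ) (u : Fin n → ℝ) : Set (Fin n → ℝ) :=
  {x | (∀ i, 0 ≤ x i) ∧ ∀ I : Finset (Fin n), I.Nonempty → ∑ i ∈ I, x i ≤ topSum n u #I}

theorem IsParkingFunction.mem_parkingRegion {u a : Fin n → ℝ} (ha : IsParkingFunction n u a) :
    a ∈ parkingRegion n u := by
  obtain ⟨ha0, σ, hsorted, hle⟩ := ha
  refine ⟨ha0, fun I _ => ?_⟩
  calc ∑ i ∈ I, a i = ∑ j ∈ I.map σ.symm.toEmbedding, a (σ j) := by simp [sum_map]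
    _ ≤ topSum n (fun j => a (σ j)) #I := by
        simpa using sum_le_topSum_card hsorted (I.map σ.symm.toEmbedding)
    _ ≤ topSum n u #I := topSum_le_topSum hle _

theorem convex_parkingRegion (u : Fin n → ℝ) : Convex ℝ (parkingRegion n u) := by
  refine fun x hx y hy a b ha hb hab => ⟨fun i => ?_, fun I hI => ?_⟩
  · simpa using add_nonneg (mul_nonneg ha (hx.1 i)) (mul_nonneg hb (hy.1 i))
  · calc ∑ i ∈ I, (a • x + b • y) i = a * ∑ i ∈ I, x i + b * ∑ i ∈ I, y i := by
          simp [sum_add_distrib, mul_sum]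
      _ ≤ a * topSum n u #I + b * topSum n u #I := by
          gcongr
          exacts [hx.2 I hI, hy.2 I hI]
      _ = topSum n u #I := by rw [← add_mul, hab, one_mul]

/-- `u j.rev` is the `(j+1)`-st largest entry of `u`; it goes to coordinate `τ j` when `j ∈ S`. -/
def greedyVertex (u : Fin n → ℝ) (τ : Equiv.Perm (Fin n)) (S : Finset (Fin n)) : Fin n → ℝ :=
  fun i => if τ.symm i ∈ S then u (τ.symm i).rev else 0

@[simp]
theorem greedyVertex_apply_perm (u : Fin n → ℝ) (τ : Equiv.Perm (Fin n)) (S : Finset (Fin n))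
    (j : Fin n) : greedyVertex u τ S (τ j) = if j ∈ S then u j.rev else 0 := by
  simp [greedyVertex]

theorem isParkingFunction_greedyVertex {u : Fin n → ℝ} (hmono : Monotone u)
    (hnonneg : ∀ i, 0 ≤ u i) (τ : Equiv.Perm (Fin n)) {S : Finset (Fin n)}
    (hS : IsLowerSet (S : Set (Fin n))) : IsParkingFunction n u (greedyVertex u τ S) := by
  refine ⟨fun i => ?_, Fin.revPerm.trans τ, fun i j hij => ?_, fun i => ?_⟩
  · unfold greedyVertex
    split_ifs
    exacts [hnonneg _, le_rfl]
  · simp only [Equiv.trans_apply, Fin.revPerm_apply, greedyVertex_apply_perm, Fin.rev_rev]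
    split_ifs with hi hj hj
    · exact hmono hij
    · exact absurd (hS (Fin.rev_le_rev.2 hij) hi) hj
    · exact hnonneg j
    · exact le_rfl
  · simp only [Equiv.trans_apply, Fin.revPerm_apply, greedyVertex_apply_perm, Fin.rev_rev]
    split_ifs
    exacts [le_rfl, hnonneg i]

theorem exists_dotProduct_le_greedyVertex {u x : Fin n → ℝ} (hx : x ∈ parkingRegion n u)
    (c : Fin n → ℝ) : ∃ (τ : Equiv.Perm (Fin n)) (S : Finset (Fin n)),
      IsLowerSet (S : Set (Fin n)) ∧ c ⬝ᵥ x ≤ c ⬝ᵥ greedyVertex u τ S := by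
  obtain ⟨hx0, hxI⟩ := hx
  set τ := Tuple.sort (OrderDual.toDual ∘ c)
  have hτ : Antitone (c ∘ τ) := monotone_toDual_comp_iff.1 (Tuple.monotone_sort _)
  set S : Finset (Fin n) := {j | 0 < c (τ j)}
  refine ⟨τ, S, fun i j hji hi => ?_, ?_⟩
  · simp only [S, coe_filter, mem_univ, true_and, Set.mem_ofPred_eq] at hi ⊢
    exact hi.trans_le (hτ hji)
  have hprefix (k : Fin n) : ∑ j ∈ Iic k, x (τ j) ≤ ∑ j ∈ Iic k, u j.rev := by
    calc ∑ j ∈ Iic k, x (τ j) = ∑ i ∈ (Iic k).map τ.toEmbedding, x i := by simp [sum_map]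
      _ ≤ topSum n u #((Iic k).map τ.toEmbedding) := hxI _ (nonempty_Iic.map)
      _ = ∑ j ∈ Iic k, u j.rev := by rw [card_map, Fin.card_Iic, topSum_succ_eq_sum_Iic]
  calc c ⬝ᵥ x ≤ ∑ i, max (c i) 0 * x i :=
        sum_le_sum fun i _ => mul_le_mul_of_nonneg_right (le_max_left _ _) (hx0 i)
    _ = ∑ j, max (c (τ j)) 0 * x (τ j) := (Equiv.sum_comp τ fun i => max (c i) 0 * x i).symm
    _ ≤ ∑ j, max (c (τ j)) 0 * u j.rev :=
        Fin.sum_mul_le_sum_mul_of_sum_Iic_le (fun i j hij => max_le_max (hτ hij) le_rfl)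
          (fun j => le_max_right _ _) hprefix
    _ = ∑ j, c (τ j) * greedyVertex u τ S (τ j) := by
        refine sum_congr rfl fun j _ => ?_
        by_cases hj : 0 < c (τ j)
        · simp [S, hj, hj.le]
        · simp [S, hj, not_lt.1 hj]
    _ = c ⬝ᵥ greedyVertex u τ S :=
        Equiv.sum_comp τ fun i => c i * greedyVertex u τ S i

theorem mem_convexHull_of_forall_exists_dotProduct_le {ι : Type*} [Fintype ι]
    {s : Set (ι → ℝ)} (hs : s.Finite) {x : ι → ℝ} (h : ∀ c, ∃ y ∈ s, c ⬝ᵥ x ≤ c ⬝ᵥ y) :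
    x ∈ convexHull ℝ s := by
  classical
  by_contra hx
  obtain ⟨f, r, hfs, hrx⟩ :=
    geometric_hahn_banach_closed_point (convex_convexHull ℝ s) (hs.isClosed_convexHull (𝕜 := ℝ)) hx
  have hf (z : ι → ℝ) : f z = (fun i => f (Pi.single i 1)) ⬝ᵥ z := by
    conv_lhs => rw [← univ_sum_single z]
    refine (map_sum f _ _).trans (sum_congr rfl fun i _ => ?_)
    rw [show Pi.single i (z i) = z i • Pi.single i (1 : ℝ) by simp [← Pi.single_smul'], map_smul,
      smul_eq_mul, mul_comm]
  obtain ⟨y, hy, hxy⟩ := h fun i => f (Pi.single i 1)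
  have := hfs y (subset_convexHull ℝ s hy)
  rw [hf] at this hrx
  linarith

end

theorem parking_polytope_inequality_description_general
    (n : ℕ) (u : Fin n → ℝ)
    (hmono : Monotone u) (hnonneg : ∀ i, 0 ≤ u i) :
    PF n u = {x : Fin n → ℝ | (∀ i, 0 ≤ x i) ∧
      ∀ I : Finset (Fin n), I.Nonempty → ∑ i ∈ I, x i ≤ topSum n u I.card} := by
  refine (convexHull_min (fun _ ha => ha.mem_parkingRegion)
    (convex_parkingRegion u)).antisymm fun x hx => ?_
  set V := {a | ∃ (τ : Equiv.Perm (Fin n)) (S : Finset (Fin n)),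
    IsLowerSet (S : Set (Fin n)) ∧ greedyVertex u τ S = a}
  have hV : V.Finite := (Set.finite_range fun p : Equiv.Perm (Fin n) × Finset (Fin n) =>
    greedyVertex u p.1 p.2).subset fun _ ⟨τ, S, _, ha⟩ => ⟨(τ, S), ha⟩
  refine convexHull_mono ?_ (mem_convexHull_of_forall_exists_dotProduct_le hV fun c => ?_)
  · rintro _ ⟨τ, S, hS, rfl⟩
    exact isParkingFunction_greedyVertex hmono hnonneg τ hS
  · obtain ⟨τ, S, hS, hle⟩ := exists_dotProduct_le_greedyVertex hx c
    exact ⟨_, ⟨τ, S, hS, rfl⟩, hle⟩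

/-- Inequality description of the parking function polytope:
`PF(u) = {x : x i ≥ 0 for all i, and ∑_{i ∈ I} x i ≤ u_n + ⋯ + u_{n-|I|+1}`
for every nonempty `I ⊆ [n]}`. -/
theorem parking_polytope_inequality_description
    (n : ℕ) (hn : 1 ≤ n) (u : Fin n → ℝ)
    (hmono : Monotone u) (hnonneg : ∀ i, 0 ≤ u i) (hne : u ≠ 0) :
    PF n u = {x : Fin n → ℝ | (∀ i, 0 ≤ x i) ∧
      ∀ I : Finset (Fin n), I.Nonempty → ∑ i ∈ I, x i ≤ topSum n u I.card} :=
  parking_polytope_inequality_description_general n u hmono hnonneg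
end
end

section
/- For each i ∈ [n], the set {x ∈ PF(u) : x_i = 0} is a facet of PF(u). For a nonempty subset I ⊆ [n], the set F_I = {x ∈ PF(u) : Σ_{i∈I} x_i = u_n + u_{n−1} + ⋯ + u_{n−|I|+1}} is a facet of PF(u) if and only if: (1) if u = (d,…,d) for some d > 0, then |I| = 1; (2) if u = (0,…,0,d) for some d > 0, then |I| = n; (3) if u = (0,…,0,d,…,d) for some d > 0 with at least one zero and at least two entries equal to d, then |I| ∈ {1, n}; (4) if u has at least two distinct positive coordinate values and multiplicity vector m(u) = (m_0, m_1, …, m_ℓ), then |I| ∈ {1, n} or m_ℓ + 1 ≤ |I| ≤ n − m_0 − 1. -/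
noncomputable section

/-- `F` is an exposed face of `P`: the maximizing set of some linear functional. -/
def IsExposedFaceOf (n : ℕ) (P F : Set (Fin n → ℝ)) : Prop :=
  ∃ w : Fin n → ℝ, F = {x ∈ P | ∀ y ∈ P, ∑ i, w i * y i ≤ ∑ i, w i * x i}

/-- `F` is a facet of the `n`-dimensional polytope `P ⊆ ℝⁿ`: a nonempty exposed
face whose affine hull has dimension `n - 1`. -/
def IsFacetOf (n : ℕ) (P F : Set (Fin n → ℝ)) : Prop :=
  IsExposedFaceOf n P F ∧ F.Nonempty ∧
    Module.finrank ℝ (affineSpan ℝ F).direction = n - 1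


/-!
The two families of faces are cut out by valid inequalities of `PF(u)`: `x i ≥ 0`, and
`∑_{i∈I} x i ≤ u_n + ⋯ + u_{n-|I|+1}`, which holds at every parking function by the
rearrangement inequality. Each face is exposed by its linear form and lies in a level set of
that form, so it is a facet iff its direction contains the whole kernel of the form.

The kernel is spanned by differences of points of the face. For `F_I` we use the points
`cutoff u m ∘ π`: `u` with its entries below index `m` set to zero, permuted so that `I` carries
the top `|I|` entries. Transposing two coordinates of `I` yields `e_i - e_{i₀}` unless the top
`|I|` entries of `u` are all equal, and lowering the cutoff by one yields `e_j` for `j ∉ I`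
unless all entries below the top `|I|` vanish. In these two exceptional cases every point of
`F_I` satisfies a second equation (`x_i = u_n` on `I`, resp. `x_j = 0` off `I`), so `F_I` has
dimension at most `n - 2`. For monotone `u` the exceptions read `|I| ≤ m_ℓ` and `n - |I| ≤ m₀`.
-/

open Finset

namespace ParkingPolytope

section Perm

variable {α : Type*} [DecidableEq α] {I T : Finset α}

lemma swap_apply_mem_iff {S : Finset α} {a b : α} (hab : a ∈ S ↔ b ∈ S) (t : α) :
    Equiv.swap a b t ∈ S ↔ t ∈ S := by
  rw [Equiv.swap_apply_def]
  split_ifs <;> simp_all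

lemma exists_perm_mem_iff [Fintype α] (h : #I = #T) :
    ∃ π : Equiv.Perm α, ∀ t, π t ∈ T ↔ t ∈ I := by
  let e : {x // x ∈ I} ≃ {x // x ∈ T} := Fintype.equivOfCardEq (by simpa using h)
  exact ⟨e.extendSubtype, fun t =>
    ⟨fun ht => by_contra fun htI => e.extendSubtype_not_mem t htI ht, e.extendSubtype_mem t⟩⟩

lemma exists_perm_mem_iff_apply_eq [Fintype α] (h : #I = #T) {i a : α}
    (hia : i ∈ I ↔ a ∈ T) : ∃ π : Equiv.Perm α, (∀ t, π t ∈ T ↔ t ∈ I) ∧ π i = a := by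
  obtain ⟨π, hπ⟩ := exists_perm_mem_iff h
  refine ⟨Equiv.swap (π i) a * π, fun t => ?_, by simp⟩
  rw [Equiv.Perm.mul_apply, swap_apply_mem_iff ((hπ i).trans hia), hπ]

lemma exists_perm_mem_iff_apply_eq_apply_eq [Fintype α] (h : #I = #T) {i j a b : α}
    (hia : i ∈ I ↔ a ∈ T) (hjb : j ∈ I ↔ b ∈ T) (hij : i ≠ j) (hab : a ≠ b) :
    ∃ π : Equiv.Perm α, (∀ t, π t ∈ T ↔ t ∈ I) ∧ π i = a ∧ π j = b := by
  obtain ⟨π, hπ, hπi⟩ := exists_perm_mem_iff_apply_eq h hia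
  have hπj : a ≠ π j := hπi ▸ π.injective.ne hij
  refine ⟨Equiv.swap (π j) b * π, fun t => ?_, ?_, by simp⟩
  · rw [Equiv.Perm.mul_apply, swap_apply_mem_iff ((hπ j).trans hjb), hπ]
  · rw [Equiv.Perm.mul_apply, hπi, Equiv.swap_apply_of_ne_of_ne hπj hab]

lemma sub_comp_swap {R : Type*} [Ring R] (f : α → R) (i j : α) :
    f - f ∘ Equiv.swap i j = (f i - f j) • (Pi.single i 1 - Pi.single j 1) := by
  funext t
  rcases eq_or_ne t i with rfl | hti
  · rcases eq_or_ne t j with rfl | htj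
    · simp
    · simp [htj]
  · rcases eq_or_ne t j with rfl | htj
    · simp [hti]
    · simp [hti, htj, Equiv.swap_apply_of_ne_of_ne]

end Perm

variable {n : ℕ}

lemma card_fin_le (I : Finset (Fin n)) : #I ≤ n := by simpa using card_le_univ I

def topIdx (n k : ℕ) : Finset (Fin n) := univ.filter fun i : Fin n => n - k ≤ (i : ℕ)

lemma mem_topIdx {k : ℕ} {i : Fin n} : i ∈ topIdx n k ↔ n - k ≤ (i : ℕ) := by
  simp [topIdx]

lemma last_mem_topIdx (hn : 1 ≤ n) {k : ℕ} (hk : 1 ≤ k) :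
    (⟨n - 1, Nat.sub_lt hn Nat.one_pos⟩ : Fin n) ∈ topIdx n k :=
  mem_topIdx.mpr (Nat.sub_le_sub_left hk n)

lemma card_topIdx {k : ℕ} (hk : k ≤ n) : #(topIdx n k) = k := by
  have : (topIdx n k).map Fin.valEmbedding = Ico (n - k) n := by
    ext m
    simp only [mem_map, mem_topIdx, Fin.valEmbedding_apply, mem_Ico]
    exact ⟨fun ⟨i, hi, him⟩ => him ▸ ⟨hi, i.isLt⟩, fun h => ⟨⟨m, h.2⟩, h.1, rfl⟩⟩
  rw [← card_map, this, Nat.card_Ico]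
  omega

lemma topIdx_mono {k m : ℕ} (h : k ≤ m) : topIdx n k ⊆ topIdx n m := fun i hi => by
  rw [mem_topIdx] at hi ⊢
  omega

lemma topSum_eq_sum_topIdx (u : Fin n → ℝ) (k : ℕ) :
    topSum n u k = ∑ i ∈ topIdx n k, u i := rfl

lemma topIdx_subset_iff_le_card {S : Finset (Fin n)} (hS : IsUpperSet (S : Set (Fin n)))
    {k : ℕ} (hk : k ≤ n) : topIdx n k ⊆ S ↔ k ≤ #S := by
  refine ⟨fun h => card_topIdx hk ▸ card_le_card h, fun h i hi => by_contra fun hiS => ?_⟩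
  have hSi : S ⊆ Ioi i := fun j hj => mem_Ioi.mpr <| lt_of_not_ge fun hji => hiS (hS hji hj)
  have := card_le_card hSi
  rw [Fin.card_Ioi] at this
  rw [mem_topIdx] at hi
  omega

lemma compl_topIdx_subset_iff {S : Finset (Fin n)} (hS : IsLowerSet (S : Set (Fin n)))
    {k : ℕ} (hk : k ≤ n) : (topIdx n k)ᶜ ⊆ S ↔ n - k ≤ #S := by
  refine ⟨fun h => ?_, fun h i hi => by_contra fun hiS => ?_⟩
  · have := card_le_card h
    rwa [card_compl, Fintype.card_fin, card_topIdx hk] at this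
  have hSi : S ⊆ Iio i := fun j hj => mem_Iio.mpr <| lt_of_not_ge fun hji => hiS (hS hji hj)
  have := card_le_card hSi
  rw [Fin.card_Iio] at this
  rw [mem_compl, mem_topIdx] at hi
  omega

lemma sum_le_sum_topIdx {b : Fin n → ℝ} (hb : Monotone b) (J : Finset (Fin n)) :
    ∑ j ∈ J, b j ≤ ∑ j ∈ topIdx n #J, b j := by
  rcases J.eq_empty_or_nonempty with rfl | hJ
  · refine (sum_eq_zero fun i hi => ?_).ge
    rw [card_empty, mem_topIdx] at hi
    omega
  have hk := card_fin_le J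
  let p : Fin n := ⟨n - #J, by have := hJ.card_pos; omega⟩
  rw [← sum_sdiff_le_sum_sdiff]
  calc ∑ j ∈ J \ topIdx n #J, b j ≤ #(J \ topIdx n #J) • b p :=
        sum_le_card_nsmul _ _ _ fun j hj => hb <| by
          have := (mem_sdiff.mp hj).2
          rw [mem_topIdx] at this
          exact Fin.le_def.mpr (show (j : ℕ) ≤ n - #J by omega)
    _ = #(topIdx n #J \ J) • b p := by rw [card_sdiff_comm (card_topIdx hk).symm]
    _ ≤ ∑ t ∈ topIdx n #J \ J, b t := card_nsmul_le_sum _ _ _ fun t ht =>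
        hb <| Fin.le_def.mpr (mem_topIdx.mp (mem_sdiff.mp ht).1)

def coordSum (I : Finset (Fin n)) : (Fin n → ℝ) →ₗ[ℝ] ℝ where
  toFun x := ∑ i ∈ I, x i
  map_add' _ _ := sum_add_distrib
  map_smul' _ _ := (mul_sum ..).symm

lemma coordSum_apply (I : Finset (Fin n)) (x : Fin n → ℝ) : coordSum I x = ∑ i ∈ I, x i := rfl

lemma coordSum_ne_zero {I : Finset (Fin n)} (hI : I.Nonempty) : coordSum I ≠ 0 := fun h => by
  obtain ⟨i₀, hi₀⟩ := hI
  simpa [coordSum_apply, hi₀] using LinearMap.congr_fun h (Pi.single i₀ 1)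

variable {u : Fin n → ℝ}

lemma apply_le_apply_last (hmono : Monotone u) (hn : 1 ≤ n) (i : Fin n) :
    u i ≤ u ⟨n - 1, Nat.sub_lt hn Nat.one_pos⟩ :=
  hmono (Fin.le_def.mpr (Nat.le_sub_one_of_lt i.isLt))

lemma sum_le_topSum_of_isParkingFunction {a : Fin n → ℝ} (ha : IsParkingFunction n u a)
    (I : Finset (Fin n)) : ∑ i ∈ I, a i ≤ topSum n u #I := by
  obtain ⟨-, σ, hmono, hle⟩ := ha
  calc ∑ i ∈ I, a i = ∑ j ∈ I.map σ.symm.toEmbedding, a (σ j) := by simp [sum_map]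
    _ ≤ ∑ j ∈ topIdx n #I, a (σ j) := by
        simpa using sum_le_sum_topIdx hmono (I.map σ.symm.toEmbedding)
    _ ≤ topSum n u #I := sum_le_sum fun j _ => hle j

lemma PF_subset {S : Set (Fin n → ℝ)} (hS : Convex ℝ S)
    (h : ∀ a, IsParkingFunction n u a → a ∈ S) : PF n u ⊆ S :=
  convexHull_min h hS

lemma sum_le_topSum_of_mem_PF {x : Fin n → ℝ} (hx : x ∈ PF n u) (I : Finset (Fin n)) :
    ∑ i ∈ I, x i ≤ topSum n u #I :=
  PF_subset (convex_halfSpace_le (coordSum I).isLinear _)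
    (fun _ ha => sum_le_topSum_of_isParkingFunction ha I) hx

lemma nonneg_of_mem_PF {x : Fin n → ℝ} (hx : x ∈ PF n u) (i : Fin n) : 0 ≤ x i :=
  PF_subset (convex_halfSpace_ge (LinearMap.proj i : (Fin n → ℝ) →ₗ[ℝ] ℝ).isLinear 0)
    (fun _ ha => ha.1 i) hx

lemma le_of_mem_PF {M : ℝ} (hM : ∀ i, u i ≤ M) {x : Fin n → ℝ} (hx : x ∈ PF n u) (i : Fin n) :
    x i ≤ M :=
  PF_subset (convex_halfSpace_le (LinearMap.proj i : (Fin n → ℝ) →ₗ[ℝ] ℝ).isLinear M)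
    (fun a ha => by
      obtain ⟨-, σ, -, hle⟩ := ha
      simpa using (hle (σ.symm i)).trans (hM _)) hx

lemma zero_mem_PF (hnonneg : ∀ i, 0 ≤ u i) : (0 : Fin n → ℝ) ∈ PF n u :=
  subset_convexHull ℝ _ ⟨fun _ => le_rfl, 1, monotone_const, hnonneg⟩

lemma comp_perm_mem_PF {v : Fin n → ℝ} (hv : Monotone v) (hv0 : ∀ i, 0 ≤ v i)
    (hvu : ∀ i, v i ≤ u i) (π : Equiv.Perm (Fin n)) : v ∘ π ∈ PF n u :=
  subset_convexHull ℝ _ ⟨fun _ => hv0 _, π.symm, by simpa [Function.comp_def] using hv,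
    by simpa using hvu⟩

def cutoff (u : Fin n → ℝ) (m : ℕ) : Fin n → ℝ := fun i => if m ≤ (i : ℕ) then u i else 0

lemma monotone_cutoff (hmono : Monotone u) (hnonneg : ∀ i, 0 ≤ u i) (m : ℕ) :
    Monotone (cutoff u m) := fun i j hij => by
  have hij' : (i : ℕ) ≤ j := hij
  unfold cutoff
  split_ifs with hi hj hj
  · exact hmono hij
  · exact absurd (hi.trans hij') hj
  · exact hnonneg j
  · exact le_rfl

lemma cutoff_comp_perm_mem_PF (hmono : Monotone u) (hnonneg : ∀ i, 0 ≤ u i) (m : ℕ)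
    (π : Equiv.Perm (Fin n)) : cutoff u m ∘ π ∈ PF n u := by
  refine comp_perm_mem_PF (monotone_cutoff hmono hnonneg m) (fun i => ?_) (fun i => ?_) π
  all_goals
    unfold cutoff
    split_ifs <;> simp [hnonneg i]

lemma cutoff_comp_sub_cutoff_comp {π : Equiv.Perm (Fin n)} {j c : Fin n} (hπ : π j = c) :
    cutoff u c ∘ π - cutoff u (c + 1) ∘ π = u c • Pi.single j 1 := by
  funext t
  rcases eq_or_ne t j with rfl | htj
  · simp [cutoff, hπ]
  · have : (π t : ℕ) ≠ c := fun h => htj (π.injective (hπ ▸ Fin.ext h))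
    simp only [Pi.sub_apply, Function.comp_apply, cutoff, Pi.smul_apply,
      Pi.single_eq_of_ne htj, smul_zero]
    split_ifs <;> first | omega | simp

lemma direction_affineSpan_le_ker {K V W : Type*} [Ring K] [AddCommGroup V] [Module K V]
    [AddCommGroup W] [Module K W] {F : Set V} (L : V →ₗ[K] W) {r : W}
    (hF : ∀ x ∈ F, L x = r) : (affineSpan K F).direction ≤ LinearMap.ker L := by
  rw [direction_affineSpan, vectorSpan_def, Submodule.span_le]
  rintro _ ⟨x, hx, y, hy, rfl⟩
  simp [hF x hx, hF y hy]

lemma isFacetOf_of_ker_le {P : Set (Fin n → ℝ)} {f : (Fin n → ℝ) →ₗ[ℝ] ℝ} (hf : f ≠ 0)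
    {r : ℝ} (hle : ∀ y ∈ P, f y ≤ r) (hr : ∃ x ∈ P, f x = r)
    (hker : LinearMap.ker f ≤ (affineSpan ℝ {x ∈ P | f x = r}).direction) :
    IsFacetOf n P {x ∈ P | f x = r} := by
  have hf_apply : ∀ y, ∑ i, f (fun j => if i = j then 1 else 0) * y i = f y := fun y => by
    simp [f.pi_apply_eq_sum_univ y, mul_comm]
  obtain ⟨x₀, hx₀, hfx₀⟩ := hr
  refine ⟨⟨fun i => f (fun j => if i = j then 1 else 0), ?_⟩, ⟨x₀, hx₀, hfx₀⟩, ?_⟩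
  · ext x
    simp only [hf_apply, Set.mem_ofPred_eq]
    exact ⟨fun ⟨hx, hfx⟩ => ⟨hx, fun y hy => hfx ▸ hle y hy⟩,
      fun ⟨hx, hmax⟩ => ⟨hx, le_antisymm (hle x hx) (hfx₀ ▸ hmax x₀ hx₀)⟩⟩
  · have hdir := le_antisymm (direction_affineSpan_le_ker f fun x hx => hx.2) hker
    have hrank := Module.Dual.finrank_ker_add_one_of_ne_zero hf
    rw [Module.finrank_fintype_fun_eq_card, Fintype.card_fin] at hrank
    rw [hdir]
    omega

lemma finrank_direction_le_of_sum_eq_of_apply_eq {F : Set (Fin n → ℝ)} {I : Finset (Fin n)}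
    {i₀ j : Fin n} (hi₀ : i₀ ∈ I) (hj : j ∉ I) {r s : ℝ}
    (hF : ∀ x ∈ F, ∑ i ∈ I, x i = r ∧ x j = s) :
    Module.finrank ℝ (affineSpan ℝ F).direction ≤ n - 2 := by
  let L := (coordSum I).prod (LinearMap.proj j : (Fin n → ℝ) →ₗ[ℝ] ℝ)
  have hL : LinearMap.range L = ⊤ := by
    refine LinearMap.range_eq_top.mpr fun ⟨a, b⟩ => ⟨Pi.single i₀ a + Pi.single j b, ?_⟩
    have hji₀ : j ≠ i₀ := fun h => hj (h ▸ hi₀)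
    simp [L, coordSum_apply, sum_add_distrib, hi₀, hj, hji₀]
  have hrank := L.finrank_range_add_finrank_ker
  rw [hL, finrank_top, Module.finrank_prod, Module.finrank_self,
    Module.finrank_fintype_fun_eq_card, Fintype.card_fin] at hrank
  have := Submodule.finrank_mono (direction_affineSpan_le_ker L (r := (r, s))
    fun x hx => Prod.ext (hF x hx).1 (hF x hx).2)
  omega

lemma mem_of_sum_eq_zero {W : Submodule ℝ (Fin n → ℝ)} {I : Finset (Fin n)} {i₀ : Fin n}
    (hi₀ : i₀ ∈ I) (hI : ∀ i ∈ I, i ≠ i₀ → Pi.single i 1 - Pi.single i₀ 1 ∈ W)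
    (hIc : ∀ j ∉ I, Pi.single j 1 ∈ W) {z : Fin n → ℝ} (hz : ∑ i ∈ I, z i = 0) : z ∈ W := by
  have hz_eq : z = ∑ i ∈ I, z i • (Pi.single i 1 - Pi.single i₀ 1 : Fin n → ℝ) +
      ∑ j ∈ Iᶜ, z j • (Pi.single j 1 : Fin n → ℝ) := by
    simp only [smul_sub, sum_sub_distrib, ← sum_smul, hz, zero_smul, sub_zero,
      sum_add_sum_compl]
    ext t
    simp [Pi.single_apply]
  rw [hz_eq]
  refine add_mem (sum_mem fun i hi => W.smul_mem _ ?_) (sum_mem fun j hj => W.smul_mem _ ?_)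
  · rcases eq_or_ne i i₀ with rfl | hii₀
    · simp
    · exact hI i hi hii₀
  · exact hIc j (mem_compl.mp hj)

def sumFace (n : ℕ) (u : Fin n → ℝ) (I : Finset (Fin n)) : Set (Fin n → ℝ) :=
  {x ∈ PF n u | ∑ i ∈ I, x i = topSum n u #I}

lemma finrank_sumFace_le_of_forall_topIdx_eq {M : ℝ} (hM : ∀ i, u i ≤ M)
    {I : Finset (Fin n)} (hT : ∀ t ∈ topIdx n #I, u t = M) {a b : Fin n} (ha : a ∈ I)
    (hb : b ∈ I) (hab : a ≠ b) :
    Module.finrank ℝ (affineSpan ℝ (sumFace n u I)).direction ≤ n - 2 := by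
  have hxM : ∀ x ∈ sumFace n u I, ∀ i ∈ I, x i = M := by
    intro x hx
    have hsum : ∑ i ∈ I, x i = ∑ _i ∈ I, M := by
      rw [hx.2, topSum_eq_sum_topIdx, sum_congr rfl hT, sum_const, sum_const,
        card_topIdx (card_fin_le I)]
    exact (sum_eq_sum_iff_of_le fun i _ => le_of_mem_PF hM hx.1 i).mp hsum
  refine finrank_direction_le_of_sum_eq_of_apply_eq (r := M) (mem_singleton_self a)
    (notMem_singleton.mpr hab.symm) fun x hx => ⟨?_, hxM x hx b hb⟩
  rw [sum_singleton, hxM x hx a ha]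

lemma finrank_sumFace_le_of_forall_notMem_topIdx_eq_zero {I : Finset (Fin n)}
    (hT : ∀ t ∉ topIdx n #I, u t = 0) {i₀ j : Fin n} (hi₀ : i₀ ∈ I) (hj : j ∉ I) :
    Module.finrank ℝ (affineSpan ℝ (sumFace n u I)).direction ≤ n - 2 := by
  refine finrank_direction_le_of_sum_eq_of_apply_eq (s := 0) hi₀ hj fun x hx => ⟨hx.2, ?_⟩
  have hle := sum_le_topSum_of_mem_PF hx.1 (insert j I)
  have htop : topSum n u #(insert j I) = topSum n u #I :=
    (sum_subset (topIdx_mono (card_le_card (subset_insert j I))) fun t _ ht => hT t ht).symm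
  rw [sum_insert hj, htop, ← hx.2] at hle
  exact le_antisymm (by linarith) (nonneg_of_mem_PF hx.1 j)

section LowerBound

variable (hmono : Monotone u) (hnonneg : ∀ i, 0 ≤ u i) {I : Finset (Fin n)}
include hmono hnonneg

lemma cutoff_comp_perm_mem_sumFace {m : ℕ} (hm : m ≤ n - #I) {π : Equiv.Perm (Fin n)}
    (hπ : ∀ t, π t ∈ topIdx n #I ↔ t ∈ I) : cutoff u m ∘ π ∈ sumFace n u I := by
  refine ⟨cutoff_comp_perm_mem_PF hmono hnonneg m π, sum_equiv π (fun t => (hπ t).symm) ?_⟩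
  intro t ht
  have := mem_topIdx.mp ((hπ t).mpr ht)
  simp only [Function.comp_apply, cutoff]
  rw [if_pos (by omega)]

lemma sumFace_nonempty : (sumFace n u I).Nonempty := by
  obtain ⟨π, hπ⟩ := exists_perm_mem_iff (card_topIdx (card_fin_le I)).symm
  exact ⟨_, cutoff_comp_perm_mem_sumFace hmono hnonneg le_rfl hπ⟩

lemma single_sub_single_mem_direction_sumFace {i i₀ a b : Fin n} (hi : i ∈ I) (hi₀ : i₀ ∈ I)
    (hii₀ : i ≠ i₀) (ha : a ∈ topIdx n #I) (hb : b ∈ topIdx n #I) (hab : u a < u b) :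
    Pi.single i 1 - Pi.single i₀ 1 ∈ (affineSpan ℝ (sumFace n u I)).direction := by
  obtain ⟨π, hπ, hπi, hπi₀⟩ := exists_perm_mem_iff_apply_eq_apply_eq
    (card_topIdx (card_fin_le I)).symm (iff_of_true hi hb) (iff_of_true hi₀ ha) hii₀
    (ne_of_apply_ne u hab.ne')
  have hπ' : ∀ t, (π * Equiv.swap i i₀) t ∈ topIdx n #I ↔ t ∈ I := fun t => by
    rw [Equiv.Perm.mul_apply, hπ, swap_apply_mem_iff (iff_of_true hi hi₀)]
  have hsub := AffineSubspace.vsub_mem_direction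
    (subset_affineSpan ℝ _ (cutoff_comp_perm_mem_sumFace hmono hnonneg le_rfl hπ))
    (subset_affineSpan ℝ _ (cutoff_comp_perm_mem_sumFace hmono hnonneg le_rfl hπ'))
  rw [vsub_eq_sub, Equiv.Perm.coe_mul, ← Function.comp_assoc, sub_comp_swap] at hsub
  simp only [Function.comp_apply, hπi, hπi₀, cutoff, if_pos (mem_topIdx.mp hb),
    if_pos (mem_topIdx.mp ha)] at hsub
  exact (Submodule.smul_mem_iff _ (sub_ne_zero.mpr hab.ne')).mp hsub

lemma single_mem_direction_sumFace {j c : Fin n} (hj : j ∉ I) (hc : c ∉ topIdx n #I)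
    (hpos : 0 < u c) : Pi.single j 1 ∈ (affineSpan ℝ (sumFace n u I)).direction := by
  rw [mem_topIdx, not_le] at hc
  let c' : Fin n := ⟨n - #I - 1, by omega⟩
  have hc' : 0 < u c' := hpos.trans_le (hmono (Fin.le_def.mpr (show (c : ℕ) ≤ n - #I - 1 by omega)))
  obtain ⟨π, hπ, hπj⟩ := exists_perm_mem_iff_apply_eq (card_topIdx (card_fin_le I)).symm
    (iff_of_false hj (by rw [mem_topIdx]; show ¬n - #I ≤ n - #I - 1; omega) :
      j ∈ I ↔ c' ∈ topIdx n #I)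
  have hsub := AffineSubspace.vsub_mem_direction
    (subset_affineSpan ℝ _ (cutoff_comp_perm_mem_sumFace hmono hnonneg (m := c')
      (Nat.sub_le _ 1) hπ))
    (subset_affineSpan ℝ _ (cutoff_comp_perm_mem_sumFace hmono hnonneg (m := c' + 1)
      (show n - #I - 1 + 1 ≤ n - #I by omega) hπ))
  rw [vsub_eq_sub, cutoff_comp_sub_cutoff_comp hπj] at hsub
  exact (Submodule.smul_mem_iff _ hc'.ne').mp hsub

end LowerBound

theorem isFacetOf_sumFace_iff_exists (hmono : Monotone u) (hnonneg : ∀ i, 0 ≤ u i)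
    {I : Finset (Fin n)} (hI : I.Nonempty) :
    IsFacetOf n (PF n u) (sumFace n u I) ↔
      (#I = 1 ∨ ∃ a ∈ topIdx n #I, ∃ b ∈ topIdx n #I, u a < u b) ∧
      (#I = n ∨ ∃ c ∉ topIdx n #I, 0 < u c) := by
  have hk := card_fin_le I
  have hk₁ := hI.card_pos
  obtain ⟨i₀, hi₀⟩ := hI
  constructor
  · intro hF
    have hdim := hF.2.2
    constructor
    · by_contra! h
      obtain ⟨a, ha, b, hb, hab⟩ := one_lt_card.mp (by omega : 1 < #I)
      have hM := apply_le_apply_last hmono (hk₁.trans_le hk)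
      have := finrank_sumFace_le_of_forall_topIdx_eq hM (fun t ht =>
        le_antisymm (hM t) (h.2 t ht _ (last_mem_topIdx (hk₁.trans_le hk) hk₁))) ha hb hab
      omega
    · by_contra! h
      obtain ⟨j, -, hj⟩ := exists_mem_notMem_of_card_lt_card (s := I) (t := univ)
        (by rw [card_univ, Fintype.card_fin]; exact lt_of_le_of_ne hk h.1)
      have := finrank_sumFace_le_of_forall_notMem_topIdx_eq_zero
        (fun t ht => le_antisymm (h.2 t ht) (hnonneg t)) hi₀ hj
      omega
  · rintro ⟨htop, hbot⟩
    refine isFacetOf_of_ker_le (coordSum_ne_zero ⟨i₀, hi₀⟩)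
      (fun y hy => sum_le_topSum_of_mem_PF hy I) (sumFace_nonempty hmono hnonneg)
      fun z hz => mem_of_sum_eq_zero hi₀ (fun i hi hii₀ => ?_) (fun j hj => ?_) hz
    · obtain ⟨a, ha, b, hb, hab⟩ :=
        htop.resolve_left (one_lt_card.mpr ⟨i, hi, i₀, hi₀, hii₀⟩).ne'
      exact single_sub_single_mem_direction_sumFace hmono hnonneg hi hi₀ hii₀ ha hb hab
    · obtain ⟨c, hc, hpos⟩ :=
        hbot.resolve_left (by simpa using (card_lt_univ_of_notMem hj).ne)
      exact single_mem_direction_sumFace hmono hnonneg hj hc hpos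

lemma exists_lt_on_topIdx_iff (hmono : Monotone u) (hn : 1 ≤ n) {k : ℕ} (hk₁ : 1 ≤ k)
    (hk : k ≤ n) :
    (∃ a ∈ topIdx n k, ∃ b ∈ topIdx n k, u a < u b) ↔
      Nat.card {i // u i = u ⟨n - 1, Nat.sub_lt hn Nat.one_pos⟩} < k := by
  have hM := apply_le_apply_last hmono hn
  have hlast := last_mem_topIdx hn hk₁
  set last : Fin n := ⟨n - 1, Nat.sub_lt hn Nat.one_pos⟩
  have hS : IsUpperSet (univ.filter (u · = u last) : Set (Fin n)) := fun a b hab ha => by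
    simp only [coe_filter, mem_univ, true_and, Set.mem_ofPred_eq] at ha ⊢
    exact le_antisymm (hM b) (ha ▸ hmono hab)
  rw [Nat.card_eq_fintype_card, Fintype.card_subtype, ← not_le,
    ← topIdx_subset_iff_le_card hS hk, not_subset]
  constructor
  · rintro ⟨a, ha, b, hb, hab⟩
    by_cases hua : u a = u last
    · exact (lt_irrefl (u b) (by linarith [hM b])).elim
    · exact ⟨a, ha, by simpa using hua⟩
  · rintro ⟨a, ha, hua⟩
    exact ⟨a, ha, last, hlast, lt_of_le_of_ne (hM a) (by simpa using hua)⟩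

lemma exists_notMem_topIdx_pos_iff (hmono : Monotone u) (hnonneg : ∀ i, 0 ≤ u i) {k : ℕ}
    (hk : k ≤ n) :
    (∃ c ∉ topIdx n k, 0 < u c) ↔ k + Nat.card {i // u i = 0} < n := by
  have hZ : IsLowerSet (univ.filter (u · = 0) : Set (Fin n)) := fun a b hab ha => by
    simp only [coe_filter, mem_univ, true_and, Set.mem_ofPred_eq] at ha ⊢
    exact le_antisymm (ha ▸ hmono hab) (hnonneg b)
  rw [Nat.card_eq_fintype_card, Fintype.card_subtype, ← not_le,
    ← Nat.sub_le_iff_le_add', ← compl_topIdx_subset_iff hZ hk, not_subset]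
  simp [(hnonneg _).lt_iff_ne', and_comm]

theorem isFacetOf_sumFace_iff (hmono : Monotone u) (hnonneg : ∀ i, 0 ≤ u i) (hn : 1 ≤ n)
    {I : Finset (Fin n)} (hI : I.Nonempty) :
    IsFacetOf n (PF n u) (sumFace n u I) ↔
      (#I = 1 ∨ Nat.card {i // u i = u ⟨n - 1, Nat.sub_lt hn Nat.one_pos⟩} < #I) ∧
      (#I = n ∨ #I + Nat.card {i // u i = 0} < n) := by
  rw [isFacetOf_sumFace_iff_exists hmono hnonneg hI,
    exists_lt_on_topIdx_iff hmono hn hI.card_pos (card_fin_le I),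
    exists_notMem_topIdx_pos_iff hmono hnonneg (card_fin_le I)]

lemma natCard_eq_zero_add_natCard_eq {c : ℝ} (hc : c ≠ 0) :
    Nat.card {i // u i = 0} + Nat.card {i // u i = c} =
      Nat.card {i // u i = 0 ∨ u i = c} := by
  simp only [Nat.card_eq_fintype_card]
  exact (Fintype.card_subtype_or_disjoint _ _ fun _ h₀ hc' i hi =>
    hc ((hc' i hi).symm.trans (h₀ i hi))).symm

lemma natCard_eq_zero_add_natCard_eq_of_forall {c : ℝ} (hc : c ≠ 0)
    (h : ∀ i, u i = 0 ∨ u i = c) : Nat.card {i // u i = 0} + Nat.card {i // u i = c} = n := by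
  rw [natCard_eq_zero_add_natCard_eq hc, Nat.card_congr (Equiv.subtypeUnivEquiv h)]
  simp

lemma natCard_eq_zero_add_natCard_eq_lt_of_ne {c : ℝ} (hc : c ≠ 0) {i : Fin n}
    (hi₀ : u i ≠ 0) (hic : u i ≠ c) :
    Nat.card {i // u i = 0} + Nat.card {i // u i = c} < n := by
  rw [natCard_eq_zero_add_natCard_eq hc]
  simpa using Finite.card_subtype_lt (p := fun i => u i = 0 ∨ u i = c) (not_or.mpr ⟨hi₀, hic⟩)

theorem isFacetOf_sumFace_iff_of_const (hn : 1 ≤ n) {d : ℝ} (hd : 0 < d) (hu : ∀ i, u i = d)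
    {I : Finset (Fin n)} (hI : I.Nonempty) :
    IsFacetOf n (PF n u) (sumFace n u I) ↔ #I = 1 := by
  rw [isFacetOf_sumFace_iff (fun i j _ => by rw [hu, hu]) (fun i => hu i ▸ hd.le) hn hI]
  simp only [hu, hd.ne', Nat.card_eq_fintype_card, Fintype.card_subtype_true,
    Fintype.card_fin, Fintype.card_eq_zero, add_zero]
  have := card_fin_le I
  omega

section Cases

variable (hmono : Monotone u) (hnonneg : ∀ i, 0 ≤ u i) (hn : 1 ≤ n) {I : Finset (Fin n)}
  (hI : I.Nonempty)
include hmono hnonneg hI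

theorem isFacetOf_sumFace_iff_of_eq_single {d : ℝ} (hd : 0 < d)
    (hz : ∀ i : Fin n, (i : ℕ) < n - 1 → u i = 0)
    (hlast : u ⟨n - 1, Nat.sub_lt hn Nat.one_pos⟩ = d) :
    IsFacetOf n (PF n u) (sumFace n u I) ↔ #I = n := by
  rw [isFacetOf_sumFace_iff hmono hnonneg hn hI]
  set last : Fin n := ⟨n - 1, Nat.sub_lt hn Nat.one_pos⟩
  have hiff : ∀ i, u i = u last ↔ i = last := fun i => by
    refine ⟨fun h => Fin.ext (show (i : ℕ) = n - 1 from ?_), fun h => h ▸ rfl⟩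
    by_contra hi
    have := hz i (by omega)
    linarith
  have htop : Nat.card {i // u i = u last} = 1 := by
    rw [Nat.card_congr (Equiv.subtypeEquivRight hiff), Nat.card_unique]
  have hsum := natCard_eq_zero_add_natCard_eq_of_forall (hlast ▸ hd).ne' fun i =>
    (lt_or_eq_of_le (Nat.le_sub_one_of_lt i.isLt)).imp (hz i) fun h => (hiff i).mpr (Fin.ext h)
  have := hI.card_pos
  omega

theorem isFacetOf_sumFace_iff_of_two_values {d : ℝ} (hd : 0 < d)
    (h₀d : ∀ i, u i = 0 ∨ u i = d) (hzero : ∃ i, u i = 0)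
    (htwo : 2 ≤ Nat.card {i // u i = d}) :
    IsFacetOf n (PF n u) (sumFace n u I) ↔ #I = 1 ∨ #I = n := by
  have hn : 1 ≤ n := hI.card_pos.trans_le (card_fin_le I)
  obtain ⟨⟨i₁, hi₁⟩⟩ : Nonempty {i // u i = d} := (Nat.card_pos_iff.mp (by omega)).1
  have hlast : u ⟨n - 1, Nat.sub_lt hn Nat.one_pos⟩ = d := (h₀d _).resolve_left fun h => by
    have := apply_le_apply_last hmono hn i₁
    linarith
  obtain ⟨i₀, hi₀⟩ := hzero
  have hz : 0 < Nat.card {i // u i = 0} := Nat.card_pos_iff.mpr ⟨⟨⟨i₀, hi₀⟩⟩, inferInstance⟩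
  have hsum := natCard_eq_zero_add_natCard_eq_of_forall hd.ne' h₀d
  rw [isFacetOf_sumFace_iff hmono hnonneg hn hI, hlast]
  have := card_fin_le I
  omega

theorem isFacetOf_sumFace_iff_of_pos_ne {a b : Fin n} (ha : 0 < u a) (hb : 0 < u b)
    (hab : u a ≠ u b) :
    IsFacetOf n (PF n u) (sumFace n u I) ↔ #I = 1 ∨ #I = n ∨
      (Nat.card {i // u i = u ⟨n - 1, Nat.sub_lt hn Nat.one_pos⟩} + 1 ≤ #I ∧
        #I ≤ n - Nat.card {i // u i = 0} - 1) := by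
  rw [isFacetOf_sumFace_iff hmono hnonneg hn hI]
  have hM := apply_le_apply_last hmono hn
  set last : Fin n := ⟨n - 1, Nat.sub_lt hn Nat.one_pos⟩
  obtain ⟨c, hc, hclt⟩ : ∃ c, 0 < u c ∧ u c < u last := by
    rcases lt_or_gt_of_ne hab with h | h
    · exact ⟨a, ha, h.trans_le (hM b)⟩
    · exact ⟨b, hb, h.trans_le (hM a)⟩
  have hsum := natCard_eq_zero_add_natCard_eq_lt_of_ne (hc.trans hclt).ne' hc.ne' hclt.ne
  have htop : 0 < Nat.card {i // u i = u last} :=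
    Nat.card_pos_iff.mpr ⟨⟨⟨last, rfl⟩⟩, inferInstance⟩
  have := card_fin_le I
  have := hI.card_pos
  omega

end Cases

theorem isFacetOf_coordFace (hmono : Monotone u) (hnonneg : ∀ i, 0 ≤ u i) (hne : u ≠ 0)
    (i : Fin n) : IsFacetOf n (PF n u) {x ∈ PF n u | x i = 0} := by
  obtain ⟨i₁, hi₁⟩ := Function.ne_iff.mp hne
  have hn : 1 ≤ n := i₁.pos
  let c : Fin n := ⟨n - 1, Nat.sub_lt hn Nat.one_pos⟩
  have hc : 0 < u c :=
    (lt_of_le_of_ne (hnonneg i₁) (Ne.symm hi₁)).trans_le (apply_le_apply_last hmono hn i₁)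
  let f : (Fin n → ℝ) →ₗ[ℝ] ℝ := -LinearMap.proj i
  have hface : {x ∈ PF n u | x i = 0} = {x ∈ PF n u | f x = 0} := by simp [f]
  rw [hface]
  refine isFacetOf_of_ker_le (fun h => by simpa [f] using LinearMap.congr_fun h (Pi.single i 1))
    (fun y hy => by simpa [f] using nonneg_of_mem_PF hy i) ⟨0, zero_mem_PF hnonneg, by simp [f]⟩
    fun z hz => mem_of_sum_eq_zero (mem_singleton_self i) (by simp) (fun j hj => ?_)
      (by simpa [f] using hz)
  have hji : Equiv.swap j c i ≠ c := by
    rw [Ne, Equiv.swap_apply_eq_iff, Equiv.swap_apply_right]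
    exact fun h => hj (h ▸ mem_singleton_self i)
  have hmem : ∀ m, n - 1 ≤ m → cutoff u m ∘ Equiv.swap j c ∈ {x ∈ PF n u | f x = 0} :=
    fun m hm => ⟨cutoff_comp_perm_mem_PF hmono hnonneg m _, by
      have hlt : (Equiv.swap j c i : ℕ) < m := by
        have := (Equiv.swap j c i).isLt
        have : (Equiv.swap j c i : ℕ) ≠ n - 1 := fun h => hji (Fin.ext h)
        omega
      simp [f, cutoff, hlt.not_ge]⟩
  have hsub := AffineSubspace.vsub_mem_direction (subset_affineSpan ℝ _ (hmem c le_rfl))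
    (subset_affineSpan ℝ _ (hmem (c + 1) (Nat.le_succ _)))
  rw [vsub_eq_sub, cutoff_comp_sub_cutoff_comp (Equiv.swap_apply_left j c)] at hsub
  exact (Submodule.smul_mem_iff _ hc.ne').mp hsub

end ParkingPolytope

/-- Characterization of the facets of `PF(u)`: each `{x ∈ PF(u) : x i = 0}` is a
facet, and for a nonempty `I ⊆ [n]` the set
`F_I = {x ∈ PF(u) : ∑_{i∈I} x i = u_n + ⋯ + u_{n-|I|+1}}` is a facet iff the
cardinality conditions (depending on the multiplicity vector of `u`) hold. -/
theorem parking_polytope_facets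
    (n : ℕ) (hn : 1 ≤ n) (u : Fin n → ℝ)
    (hmono : Monotone u) (hnonneg : ∀ i, 0 ≤ u i) (hne : u ≠ 0) :
    (∀ i : Fin n, IsFacetOf n (PF n u) {x ∈ PF n u | x i = 0}) ∧
    ∀ I : Finset (Fin n), I.Nonempty →
      -- case (1): u = (d, …, d) with d > 0
      ((∃ d : ℝ, 0 < d ∧ ∀ i, u i = d) →
        (IsFacetOf n (PF n u) {x ∈ PF n u | ∑ i ∈ I, x i = topSum n u I.card} ↔
          I.card = 1)) ∧
      -- case (2): u = (0, …, 0, d) with d > 0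
      ((∃ d : ℝ, 0 < d ∧ (∀ i : Fin n, (i : ℕ) < n - 1 → u i = 0) ∧
          u ⟨n - 1, by omega⟩ = d) →
        (IsFacetOf n (PF n u) {x ∈ PF n u | ∑ i ∈ I, x i = topSum n u I.card} ↔
          I.card = n)) ∧
      -- case (3): u = (0, …, 0, d, …, d) with at least one 0 and at least two d's
      ((∃ d : ℝ, 0 < d ∧ (∀ i, u i = 0 ∨ u i = d) ∧ (∃ i, u i = 0) ∧
          2 ≤ Nat.card {i : Fin n // u i = d}) →
        (IsFacetOf n (PF n u) {x ∈ PF n u | ∑ i ∈ I, x i = topSum n u I.card} ↔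
          I.card = 1 ∨ I.card = n)) ∧
      -- case (4): u has at least two distinct positive values; here
      -- m₀ is the number of zeros of u and m_ℓ the number of coordinates equal
      -- to the largest value u_n.
      ((∃ i j, 0 < u i ∧ 0 < u j ∧ u i ≠ u j) →
        (IsFacetOf n (PF n u) {x ∈ PF n u | ∑ i ∈ I, x i = topSum n u I.card} ↔
          I.card = 1 ∨ I.card = n ∨
            (Nat.card {i : Fin n // u i = u ⟨n - 1, by omega⟩} + 1 ≤ I.card ∧
              I.card ≤ n - Nat.card {i : Fin n // u i = 0} - 1))) := by
  refine ⟨ParkingPolytope.isFacetOf_coordFace hmono hnonneg hne, fun I hI => ⟨?_, ?_, ?_, ?_⟩⟩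
  · rintro ⟨d, hd, hu⟩
    exact ParkingPolytope.isFacetOf_sumFace_iff_of_const hn hd hu hI
  · rintro ⟨d, hd, hz, hlast⟩
    exact ParkingPolytope.isFacetOf_sumFace_iff_of_eq_single hmono hnonneg hn hI hd hz hlast
  · rintro ⟨d, hd, h₀d, hzero, htwo⟩
    exact ParkingPolytope.isFacetOf_sumFace_iff_of_two_values hmono hnonneg hI hd h₀d hzero htwo
  · rintro ⟨a, b, ha, hb, hab⟩
    exact ParkingPolytope.isFacetOf_sumFace_iff_of_pos_ne hmono hnonneg hn hI ha hb hab
end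
end

section
/- The parking function polytope decomposes as a Minkowski sum of dilated parking function polytopes of 0/1-vectors: PF(u) = u_1 · PF(1_n) + Σ_{k=1}^{n−1} (u_{k+1} − u_k) · PF(1_{n−k}), where + denotes Minkowski sum of sets and λ·A = {λ a : a ∈ A}. -/
/-!
Slicing a `u`-parking function `a` at the levels `u₁ ≤ ⋯ ≤ uₙ` writes it as
`min(a, u₁) + ∑ₖ (min(a, uₖ₊₁) - min(a, uₖ))`. The `k`-th slice has coordinates in
`[0, uₖ₊₁ - uₖ]` and, because `a` is parking, at most `n - k` of them are nonzero, so it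
lies in `(uₖ₊₁ - uₖ) • PF(1ₙ₋ₖ)`; convexity of the Minkowski sum gives `⊆`.

For `⊇`, the rearrangement inequality shows that the support function of `PF(v)` in a
direction `w` is `⟨w⁺↑, v⟩`, where `w⁺↑` is the increasing rearrangement of the positive part
of `w`. This is linear in `v`, so the support function of the Minkowski sum is that of
`PF(u)`, and since `PF(u)` is a polytope, hence closed, separation finishes the proof.
-/
noncomputable section

open Pointwise

/-- The vector `1_k ∈ ℝⁿ` whose last `k` coordinates equal `1` and whose first
`n - k` coordinates equal `0`. -/
def onevec (n k : ℕ) : Fin n → ℝ := fun i => if n - k ≤ (i : ℕ) then 1 else 0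

/-- The coordinates of `u`, extended by `0` outside the index range
(so `Uext n u k = u_{k+1}` in 1-indexed notation, for `k < n`). -/
def Uext (n : ℕ) (u : Fin n → ℝ) : ℕ → ℝ := fun k => if h : k < n then u ⟨k, h⟩ else 0

open Finset Matrix

section

variable {n : ℕ}

theorem Monotone.apply_perm_le_iff_card_lt {α : Type*} [LinearOrder α] {a : Fin n → α}
    {σ : Equiv.Perm (Fin n)} (h : Monotone (fun i => a (σ i))) (i : Fin n) (t : α) :
    a (σ i) ≤ t ↔ #{j | t < a j} + i < n := by
  rw [card_equiv σ.symm (t := ({k | t < a (σ k)} : Finset _)) (by simp)]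
  constructor
  · intro hi
    have hsub : ({k | t < a (σ k)} : Finset _) ⊆ Ioi i := fun k hk => by
      simp only [mem_filter, mem_univ, true_and, mem_Ioi] at hk ⊢
      exact lt_of_not_ge fun hki => (h hki).trans hi |>.not_gt hk
    have := card_le_card hsub
    rw [Fin.card_Ioi] at this
    omega
  · intro hcard
    by_contra! hi
    have hsub : Ici i ⊆ ({k | t < a (σ k)} : Finset _) := fun k hk => by
      simp only [mem_filter, mem_univ, true_and, mem_Ici] at hk ⊢
      exact hi.trans_le (h hk)
    have := card_le_card hsub
    rw [Fin.card_Ici] at this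
    omega

theorem isParkingFunction_iff {u a : Fin n → ℝ} :
    IsParkingFunction n u a ↔ (∀ j, 0 ≤ a j) ∧ ∀ i, #{j | u i < a j} + i < n := by
  refine and_congr_right fun _ => ⟨?_, fun h => ?_⟩
  · rintro ⟨σ, hσ, hle⟩ i
    exact (hσ.apply_perm_le_iff_card_lt i (u i)).1 (hle i)
  · have hsort := Tuple.monotone_sort a
    exact ⟨Tuple.sort a, hsort, fun i => (hsort.apply_perm_le_iff_card_lt i (u i)).2 (h i)⟩

theorem isParkingFunction_of_apply_perm_le {u a : Fin n → ℝ} (hu : Monotone u)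
    (ha : ∀ j, 0 ≤ a j) (σ : Equiv.Perm (Fin n)) (hle : ∀ i, a (σ i) ≤ u i) :
    IsParkingFunction n u a := by
  refine isParkingFunction_iff.2 ⟨ha, fun i => ?_⟩
  have hmaps : Set.MapsTo σ.symm ({j | u i < a j} : Finset _) (Ioi i) := fun j hj => by
    simp only [coe_filter, mem_univ, true_and, Set.mem_ofPred_eq] at hj
    simp only [coe_Ioi, Set.mem_Ioi]
    exact hu.reflect_lt (hj.trans_le (by simpa using hle (σ.symm j)))
  have := card_le_card_of_injOn σ.symm hmaps σ.symm.injective.injOn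
  rw [Fin.card_Ioi] at this
  omega

theorem isParkingFunction_onevec {m : ℕ} {x : Fin n → ℝ} (hx0 : ∀ j, 0 ≤ x j)
    (hx1 : ∀ j, x j ≤ 1) (hcard : #{j | 0 < x j} ≤ m) :
    IsParkingFunction n (onevec n m) x := by
  refine isParkingFunction_iff.2 ⟨hx0, fun i => ?_⟩
  unfold onevec
  split_ifs with hi
  · simp [fun j => (hx1 j).not_gt]
  · omega

theorem mem_smul_PF_onevec {m : ℕ} {c : ℝ} (hc : 0 ≤ c) {x : Fin n → ℝ}
    (hx0 : ∀ j, 0 ≤ x j) (hxc : ∀ j, x j ≤ c) (hcard : #{j | 0 < x j} ≤ m) :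
    x ∈ c • PF n (onevec n m) := by
  rcases hc.eq_or_lt with rfl | hc
  · have hx : x = 0 := funext fun j => (hxc j).antisymm (hx0 j)
    have hPF : (PF n (onevec n m)).Nonempty :=
      ⟨0, subset_convexHull ℝ _ (isParkingFunction_onevec (fun _ => le_rfl)
        (fun _ => zero_le_one) (by simp))⟩
    rw [hx, Set.zero_smul_set hPF]
    exact Set.zero_mem_zero
  · rw [Set.mem_smul_set_iff_inv_smul_mem₀ hc.ne']
    refine subset_convexHull ℝ _ (isParkingFunction_onevec (fun j => ?_) (fun j => ?_) ?_)
    · exact smul_nonneg (inv_nonneg.2 hc.le) (hx0 j)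
    · simpa [inv_mul_le_iff₀ hc] using hxc j
    · simpa [inv_pos.2 hc, mul_pos_iff_of_pos_left] using hcard

theorem min_sub_min_mem_smul_PF_onevec {m : ℕ} {a : Fin n → ℝ} {t t' : ℝ} (htt' : t ≤ t')
    (hcard : #{j | t < a j} ≤ m) :
    (fun j => min (a j) t' - min (a j) t) ∈ (t' - t) • PF n (onevec n m) := by
  refine mem_smul_PF_onevec (sub_nonneg.2 htt')
    (fun j => sub_nonneg.2 (min_le_min_left _ htt')) (fun j => ?_)
    ((card_le_card fun j => ?_).trans hcard)
  · rcases le_total (a j) t with h | h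
    · rw [min_eq_left h, min_eq_left (h.trans htt')]
      linarith
    · rw [min_eq_right h]
      linarith [min_le_right (a j) t']
  · simp only [mem_filter, mem_univ, true_and]
    contrapose!
    intro h
    rw [min_eq_left h, min_eq_left (h.trans htt'), sub_self]

theorem Uext_nonneg {u : Fin n → ℝ} (hu0 : ∀ i, 0 ≤ u i) (k : ℕ) : 0 ≤ Uext n u k := by
  unfold Uext
  split_ifs
  exacts [hu0 _, le_rfl]

theorem Uext_le_Uext_succ {u : Fin n → ℝ} (hu : Monotone u) {k : ℕ} (hk : k + 1 < n) :
    Uext n u k ≤ Uext n u (k + 1) := by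
  simp only [Uext, dif_pos hk, dif_pos (k.lt_succ_self.trans hk)]
  exact hu (Fin.mk_le_mk.2 k.le_succ)

theorem IsParkingFunction.le_Uext_pred {u a : Fin n → ℝ} (hu : Monotone u)
    (ha : IsParkingFunction n u a) (j : Fin n) : a j ≤ Uext n u (n - 1) := by
  obtain ⟨-, σ, -, hle⟩ := ha
  rw [Uext, dif_pos (by have := j.isLt; omega)]
  calc a j = a (σ (σ.symm j)) := by rw [Equiv.apply_symm_apply]
    _ ≤ u (σ.symm j) := hle _
    _ ≤ _ := hu (Fin.mk_le_mk.2 (by omega))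

theorem PF_subset_smul_PF_onevec_add_sum {u : Fin n → ℝ} (hu : Monotone u) (hu0 : ∀ i, 0 ≤ u i) :
    PF n u ⊆ Uext n u 0 • PF n (onevec n n) +
      ∑ k ∈ range (n - 1),
        (Uext n u (k + 1) - Uext n u k) • PF n (onevec n (n - (k + 1))) := by
  refine convexHull_min (fun a ha => ?_) (((convex_convexHull ℝ _).smul _).add
    (convex_sum _ fun k _ => (convex_convexHull ℝ _).smul _))
  obtain ⟨ha0, hcount⟩ := isParkingFunction_iff.1 ha
  have htelescope : a = (fun j => min (a j) (Uext n u 0) - min (a j) 0) +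
      ∑ k ∈ range (n - 1), fun j => min (a j) (Uext n u (k + 1)) - min (a j) (Uext n u k) := by
    funext j
    rw [Pi.add_apply, Finset.sum_apply, sum_range_sub (fun k => min (a j) (Uext n u k)),
      min_eq_right (ha0 j), min_eq_left (ha.le_Uext_pred hu j)]
    ring
  have hfirst := min_sub_min_mem_smul_PF_onevec (a := a) (Uext_nonneg hu0 0)
    (card_filter_le _ _ |>.trans_eq (card_fin n))
  rw [sub_zero] at hfirst
  rw [htelescope]
  refine Set.add_mem_add hfirst (Set.finsetSum_mem_finsetSum _ _ _ fun k hk => ?_)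
  have hk : k + 1 < n := by rw [mem_range] at hk; omega
  refine min_sub_min_mem_smul_PF_onevec (Uext_le_Uext_succ hu hk) ?_
  have := hcount ⟨k, by omega⟩
  rw [Uext, dif_pos (by omega)]
  simp only at this
  omega

theorem eq_Uext_smul_onevec_add_sum (u : Fin n → ℝ) :
    u = Uext n u 0 • onevec n n +
      ∑ k ∈ range (n - 1), (Uext n u (k + 1) - Uext n u k) • onevec n (n - (k + 1)) := by
  funext i
  have hsum : ∑ k ∈ range (n - 1),
      (Uext n u (k + 1) - Uext n u k) * onevec n (n - (k + 1)) i =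
      ∑ k ∈ range i, (Uext n u (k + 1) - Uext n u k) := by
    rw [← sum_range_add_sum_Ico _ (show (i : ℕ) ≤ n - 1 by omega)]
    rw [sum_eq_zero (s := Ico _ _) fun k hk => ?_, add_zero]
    · refine sum_congr rfl fun k hk => ?_
      rw [mem_range] at hk
      rw [onevec, if_pos (by omega), mul_one]
    · rw [mem_Ico] at hk
      rw [onevec, if_neg (by omega), mul_zero]
  simp only [Pi.add_apply, Pi.smul_apply, Finset.sum_apply, smul_eq_mul, hsum,
    sum_range_sub (Uext n u)]
  simp [onevec, Uext]

def sortedPosPart (w : Fin n → ℝ) : Fin n → ℝ := fun i => max (w (Tuple.sort w i)) 0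

theorem monotone_sortedPosPart (w : Fin n → ℝ) : Monotone (sortedPosPart w) :=
  fun _ _ hij => max_le_max_right 0 (Tuple.monotone_sort w hij)

theorem sortedPosPart_nonneg (w : Fin n → ℝ) (i : Fin n) : 0 ≤ sortedPosPart w i :=
  le_max_right _ _

theorem IsParkingFunction.dotProduct_le {v a : Fin n → ℝ} (ha : IsParkingFunction n v a)
    (w : Fin n → ℝ) : w ⬝ᵥ a ≤ sortedPosPart w ⬝ᵥ v := by
  obtain ⟨ha0, σ, hσ, hle⟩ := ha
  set ρ := Tuple.sort w
  calc w ⬝ᵥ a ≤ ∑ j, max (w j) 0 * a j :=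
        sum_le_sum fun j _ => mul_le_mul_of_nonneg_right (le_max_left _ _) (ha0 j)
    _ = ∑ i, sortedPosPart w i * a (σ ((σ.symm * ρ) i)) := by
        simp [sortedPosPart, ρ, ← Equiv.sum_comp ρ (fun j => max (w j) 0 * a j)]
    _ ≤ ∑ i, sortedPosPart w i * a (σ i) :=
        ((monotone_sortedPosPart w).monovary hσ).sum_mul_comp_perm_le_sum_mul
    _ ≤ sortedPosPart w ⬝ᵥ v :=
        sum_le_sum fun i _ => mul_le_mul_of_nonneg_left (hle i) (sortedPosPart_nonneg w i)

theorem exists_isParkingFunction_dotProduct_eq {u : Fin n → ℝ} (hu : Monotone u)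
    (hu0 : ∀ i, 0 ≤ u i) (w : Fin n → ℝ) :
    ∃ y, IsParkingFunction n u y ∧ w ⬝ᵥ y = sortedPosPart w ⬝ᵥ u := by
  set ρ := Tuple.sort w
  refine ⟨fun j => if 0 < w j then u (ρ.symm j) else 0,
    isParkingFunction_of_apply_perm_le hu (fun j => ?_) ρ (fun i => ?_), ?_⟩
  · split_ifs
    exacts [hu0 _, le_rfl]
  · split_ifs
    exacts [by rw [Equiv.symm_apply_apply], hu0 i]
  · rw [dotProduct, ← Equiv.sum_comp ρ]
    refine sum_congr rfl fun i _ => ?_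
    simp only [sortedPosPart, Equiv.symm_apply_apply, ρ]
    split_ifs with h
    · rw [max_eq_left h.le]
    · rw [max_eq_right (not_lt.1 h), mul_zero, zero_mul]

theorem PF_subset_dotProduct_le (v w : Fin n → ℝ) :
    PF n v ⊆ {x | w ⬝ᵥ x ≤ sortedPosPart w ⬝ᵥ v} :=
  convexHull_min (fun _ ha => ha.dotProduct_le w)
    (convex_halfSpace_le ⟨dotProduct_add w, fun c x => dotProduct_smul c w x⟩ _)

theorem isClosed_PF {u : Fin n → ℝ} (hu : Monotone u) (hu0 : ∀ i, 0 ≤ u i) :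
    IsClosed (PF n u) := by
  set V : Set (Fin n → ℝ) := Set.univ.pi fun _ => insert 0 (Set.range u)
  have hV : V.Finite := Set.Finite.pi fun _ => (Set.finite_range u).insert 0
  suffices PF n u = convexHull ℝ (V ∩ {a | IsParkingFunction n u a}) from
    this ▸ (hV.inter_of_left _).isClosed_convexHull ℝ
  refine (convexHull_min (fun a ha => ?_) (convex_convexHull ℝ _)).antisymm
    (convexHull_mono Set.inter_subset_right)
  obtain ⟨ha0, σ, -, hle⟩ := ha
  -- `a` lies in a box whose vertices are parking functions with coordinates in `{0} ∪ range u`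
  have hbox : a ∈ convexHull ℝ (Set.univ.pi fun j => {0, u (σ.symm j)}) :=
    mem_convexHull_pi fun j _ => by
      rw [convexHull_pair, segment_eq_Icc (hu0 _)]
      exact ⟨ha0 j, by simpa using hle (σ.symm j)⟩
  refine convexHull_mono (fun v hv => ?_) hbox
  simp only [Set.mem_univ_pi, Set.mem_insert_iff, Set.mem_singleton_iff] at hv
  refine ⟨fun j _ => ?_, isParkingFunction_of_apply_perm_le hu (fun j => ?_) σ fun i => ?_⟩
  · rcases hv j with h | h <;> simp [h]
  · rcases hv j with h | h <;> simp [h, hu0]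
  · rcases hv (σ i) with h | h <;> simp [h, hu0]

theorem mem_PF_of_forall_dotProduct_le {u x : Fin n → ℝ} (hu : Monotone u)
    (hu0 : ∀ i, 0 ≤ u i) (hx : ∀ w, w ⬝ᵥ x ≤ sortedPosPart w ⬝ᵥ u) : x ∈ PF n u := by
  by_contra hxu
  obtain ⟨f, r, hf, hrf⟩ :=
    geometric_hahn_banach_closed_point (convex_convexHull ℝ _) (isClosed_PF hu hu0) hxu
  set w : Fin n → ℝ := fun i => f fun j => if i = j then 1 else 0
  have hfw : ∀ z, f z = w ⬝ᵥ z := fun z => by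
    rw [dotProduct_comm]
    exact f.toLinearMap.pi_apply_eq_sum_univ z
  obtain ⟨y, hy, hyw⟩ := exists_isParkingFunction_dotProduct_eq hu hu0 w
  have hfy := hf y (subset_convexHull ℝ _ hy)
  rw [hfw] at hfy hrf
  linarith [hx w]

theorem dotProduct_le_of_mem_smul_PF {c : ℝ} (hc : 0 ≤ c) {v x : Fin n → ℝ}
    (hx : x ∈ c • PF n v) (w : Fin n → ℝ) : w ⬝ᵥ x ≤ sortedPosPart w ⬝ᵥ (c • v) := by
  obtain ⟨p, hp, rfl⟩ := hx
  rw [dotProduct_smul, dotProduct_smul, smul_eq_mul, smul_eq_mul]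
  exact mul_le_mul_of_nonneg_left (PF_subset_dotProduct_le v w hp) hc

theorem smul_PF_add_sum_smul_PF_subset {ι : Type*} {s : Finset ι} {c₀ : ℝ} {c : ι → ℝ}
    {v₀ u : Fin n → ℝ} {v : ι → Fin n → ℝ} (hc₀ : 0 ≤ c₀) (hc : ∀ k ∈ s, 0 ≤ c k)
    (hu : Monotone u) (hu0 : ∀ i, 0 ≤ u i) (hsum : c₀ • v₀ + ∑ k ∈ s, c k • v k = u) :
    c₀ • PF n v₀ + ∑ k ∈ s, c k • PF n (v k) ⊆ PF n u := by
  rintro _ ⟨x₀, hx₀, _, hx, rfl⟩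
  obtain ⟨g, hg, rfl⟩ := (Set.mem_finsetSum _ _ _).1 hx
  refine mem_PF_of_forall_dotProduct_le hu hu0 fun w => ?_
  rw [← hsum, dotProduct_add, dotProduct_add, dotProduct_sum, dotProduct_sum]
  exact add_le_add (dotProduct_le_of_mem_smul_PF hc₀ hx₀ w)
    (sum_le_sum fun k hk => dotProduct_le_of_mem_smul_PF (hc k hk) (hg hk) w)

end

theorem parking_polytope_minkowski_decomposition_general
    (n : ℕ) (u : Fin n → ℝ)
    (hmono : Monotone u) (hnonneg : ∀ i, 0 ≤ u i) :
    PF n u = Uext n u 0 • PF n (onevec n n) +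
      ∑ k ∈ Finset.range (n - 1),
        (Uext n u (k + 1) - Uext n u k) • PF n (onevec n (n - (k + 1))) :=
  (PF_subset_smul_PF_onevec_add_sum hmono hnonneg).antisymm <|
    smul_PF_add_sum_smul_PF_subset (Uext_nonneg hnonneg 0)
      (fun k hk => sub_nonneg.2 <| Uext_le_Uext_succ hmono <| by rw [mem_range] at hk; omega)
      hmono hnonneg (eq_Uext_smul_onevec_add_sum u).symm

/-- Minkowski sum decomposition:
`PF(u) = u₁ · PF(1_n) + ∑_{k=1}^{n-1} (u_{k+1} - u_k) · PF(1_{n-k})`. -/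
theorem parking_polytope_minkowski_decomposition
    (n : ℕ) (hn : 1 ≤ n) (u : Fin n → ℝ)
    (hmono : Monotone u) (hnonneg : ∀ i, 0 ≤ u i) (hne : u ≠ 0) :
    PF n u = Uext n u 0 • PF n (onevec n n) +
      ∑ k ∈ Finset.range (n - 1),
        (Uext n u (k + 1) - Uext n u k) • PF n (onevec n (n - (k + 1))) :=
  parking_polytope_minkowski_decomposition_general n u hmono hnonneg
end
end

section
/- The parking function polytope equals the signed Minkowski sum Σ_{∅≠I⊆[n]} y_I · Δ_I^0; precisely, PF(u) + Σ_{I : y_I < 0} (−y_I) · Δ_I^0 = Σ_{I : y_I ≥ 0} y_I · Δ_I^0, where + denotes Minkowski sum of sets, λ·A = {λ a : a ∈ A}, and both sums range over nonempty subsets I of [n]. -/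
/-!
A compact convex set `K` is determined by its support function `h_K(f) = max_{x ∈ K} f x`, which
is additive under Minkowski sums and positively homogeneous, so it suffices to show
`h_{PF(u)} = ∑_{I ≠ ∅} y_I h_{Δ_I⁰}` on every linear functional `f = ⟨w, ·⟩`.
For the simplex, `h_{Δ_I⁰}(w) = max(0, max_{i ∈ I} w_i)`. For `PF(u)`, by the rearrangement
inequality the maximum is attained by the parking function that places `u_j` on the coordinate
holding the `j`-th smallest entry of `w` whenever that entry is positive, so
`h_{PF(u)}(w) = ∑_j u_j (w_{τ j})⁺` with `τ` sorting `w`. Grouping the nonempty `I` by the element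
of `I` at which `w` is largest in the sorted order, `τ m`, the coefficient of `(w_{τ m})⁺` is
`∑_k C(m, k) y_{k+1}`; since `y_{k+1}` is the `k`-th forward difference of `u` at `0`, this is
`u_m` by the Gregory–Newton formula.
-/

noncomputable section

open Pointwise

/-- `y_I` for a set of cardinality `k`:
`y = ∑_{j=0}^{k-1} C(k-1, j) (-1)^j u_{k-j}` (1-indexed `u`). -/
def ysub (n : ℕ) (u : Fin n → ℝ) (k : ℕ) : ℝ :=
  ∑ j ∈ Finset.range k, ((k - 1).choose j : ℝ) * (-1) ^ j * Uext n u (k - 1 - j)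

/-- The simplex `Δ_I⁰ = conv({0} ∪ {e_i : i ∈ I})`. -/
def simplex0 (n : ℕ) (I : Finset (Fin n)) : Set (Fin n → ℝ) :=
  convexHull ℝ (insert (0 : Fin n → ℝ) {x | ∃ i ∈ I, x = Pi.single i (1 : ℝ)})

open Finset

section ConvexHull

variable {E : Type*} [AddCommGroup E] [Module ℝ E]

theorem isGreatest_image_convexHull {s : Set E} {f : E →ₗ[ℝ] ℝ} {c : ℝ}
    (h : IsGreatest (f '' s) c) : IsGreatest (f '' convexHull ℝ s) c := by
  refine ⟨Set.image_mono (subset_convexHull ℝ s) h.1, ?_⟩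
  rintro _ ⟨x, hx, rfl⟩
  exact convexHull_min (fun y hy => h.2 ⟨y, hy, rfl⟩) (convex_halfSpace_le f.isLinear c) hx

variable [TopologicalSpace E] [ContinuousAdd E] [ContinuousSMul ℝ E]

theorem IsCompact.convexJoin {s t : Set E} (hs : IsCompact s) (ht : IsCompact t) :
    IsCompact (_root_.convexJoin ℝ s t) := by
  have : _root_.convexJoin ℝ s t = (fun p : ℝ × E × E => (1 - p.1) • p.2.1 + p.1 • p.2.2) ''
      (Set.Icc 0 1 ×ˢ s ×ˢ t) := by
    ext z
    simp only [mem_convexJoin, segment_eq_image, Set.mem_image, Set.mem_prod, Prod.exists]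
    constructor
    · rintro ⟨x, hx, y, hy, θ, hθ, rfl⟩
      exact ⟨θ, x, y, ⟨hθ, hx, hy⟩, rfl⟩
    · rintro ⟨θ, x, y, ⟨hθ, hx, hy⟩, rfl⟩
      exact ⟨x, hx, y, hy, θ, hθ, rfl⟩
  rw [this]
  exact (isCompact_Icc.prod (hs.prod ht)).image (by fun_prop)

theorem isCompact_convexHull_biUnion {ι : Type*} (s : Finset ι) {B : ι → Set E}
    (hcomp : ∀ i ∈ s, IsCompact (B i)) (hconv : ∀ i ∈ s, Convex ℝ (B i)) :
    IsCompact (convexHull ℝ (⋃ i ∈ s, B i)) := by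
  classical
  induction s using Finset.induction_on with
  | empty => simp
  | insert a s ha ih =>
    rw [Finset.set_biUnion_insert]
    have hU := ih (fun i hi => hcomp i (mem_insert_of_mem hi))
      (fun i hi => hconv i (mem_insert_of_mem hi))
    have hBa : convexHull ℝ (B a) = B a := (hconv a (mem_insert_self a s)).convexHull_eq
    rcases (B a).eq_empty_or_nonempty with hA | hA
    · simpa [hA] using hU
    rcases (⋃ i ∈ s, B i).eq_empty_or_nonempty with hV | hV
    · simpa [hV, hBa] using hcomp a (mem_insert_self a s)
    rw [convexHull_union hA hV, hBa]
    exact (hcomp a (mem_insert_self a s)).convexJoin hU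

end ConvexHull

theorem LinearMap.apply_eq_dotProduct {ι : Type*} [Fintype ι] [DecidableEq ι]
    (f : (ι → ℝ) →ₗ[ℝ] ℝ) (a : ι → ℝ) : f a = (fun i => f (Pi.single i 1)) ⬝ᵥ a :=
  (LinearMap.congr_fun ((dotProductEquiv ℝ ι).apply_symm_apply f) a).symm

namespace ConvexBody

variable {V : Type*} [TopologicalSpace V] [AddCommGroup V] [Module ℝ V]

section ContinuousAdd

variable [ContinuousAdd V]

@[simp, norm_cast]
theorem coe_sum {ι : Type*} (s : Finset ι) (K : ι → ConvexBody V) :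
    ((∑ i ∈ s, K i : ConvexBody V) : Set V) = ∑ i ∈ s, (K i : Set V) :=
  map_sum ({ toFun := (↑), map_zero' := coe_zero, map_add' := coe_add } :
    ConvexBody V →+ Set V) K s

def supportFun (f : V →L[ℝ] ℝ) : ConvexBody V →+ ℝ where
  toFun K := sSup (f '' K)
  map_zero' := by simp
  map_add' K L := by
    rw [coe_add, Set.image_add]
    exact csSup_add (K.nonempty.image f) (K.isCompact.image f.continuous).bddAbove
      (L.nonempty.image f) (L.isCompact.image f.continuous).bddAbove

theorem supportFun_apply (f : V →L[ℝ] ℝ) (K : ConvexBody V) :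
    supportFun f K = sSup (f '' K) := rfl

variable [ContinuousSMul ℝ V] in
theorem supportFun_smul (f : V →L[ℝ] ℝ) (K : ConvexBody V) {c : ℝ} (hc : 0 ≤ c) :
    supportFun f (c • K) = c * supportFun f K := by
  rw [supportFun_apply, coe_smul, image_smul_set, Real.sSup_smul_of_nonneg hc, smul_eq_mul,
    supportFun_apply]

end ContinuousAdd

variable [IsTopologicalAddGroup V] [ContinuousSMul ℝ V] [LocallyConvexSpace ℝ V] [T2Space V]

theorem le_of_supportFun_le {K L : ConvexBody V} (h : ∀ f, supportFun f K ≤ supportFun f L) :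
    K ≤ L := by
  intro x hx
  by_contra hxL
  obtain ⟨f, t, hfL, hft⟩ := geometric_hahn_banach_closed_point L.convex L.isClosed hxL
  have hxK : f x ≤ supportFun f K :=
    le_csSup (K.isCompact.image f.continuous).bddAbove ⟨x, hx, rfl⟩
  have hLt : supportFun f L ≤ t :=
    csSup_le (L.nonempty.image f) (by rintro _ ⟨y, hy, rfl⟩; exact (hfL y hy).le)
  linarith [h f]

theorem ext_supportFun {K L : ConvexBody V} (h : ∀ f, supportFun f K = supportFun f L) :
    K = L :=
  le_antisymm (le_of_supportFun_le fun f => (h f).le) (le_of_supportFun_le fun f => (h f).ge)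

theorem supportFun_eq_of_isGreatest {ι : Type*} [Fintype ι] [DecidableEq ι]
    {f : (ι → ℝ) →L[ℝ] ℝ} {K : ConvexBody (ι → ℝ)} {c : ℝ}
    (h : IsGreatest (((fun i => f (Pi.single i 1)) ⬝ᵥ ·) '' K) c) : supportFun f K = c := by
  have hf : ⇑f = ((fun i => f (Pi.single i 1)) ⬝ᵥ ·) :=
    funext (LinearMap.apply_eq_dotProduct (f : (ι → ℝ) →ₗ[ℝ] ℝ))
  rw [supportFun_apply, hf]
  exact h.csSup_eq

end ConvexBody

section ParkingFunctions

variable {n : ℕ}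

def parkingCell (u : Fin n → ℝ) (σ : Equiv.Perm (Fin n)) : Set (Fin n → ℝ) :=
  {a | (∀ i, 0 ≤ a i) ∧ Monotone (fun i => a (σ i)) ∧ ∀ i, a (σ i) ≤ u i}

theorem setOf_isParkingFunction_eq_iUnion (u : Fin n → ℝ) :
    {a | IsParkingFunction n u a} =
      ⋃ σ ∈ (univ : Finset (Equiv.Perm (Fin n))), parkingCell u σ := by
  ext a
  simp [IsParkingFunction, parkingCell]

theorem convex_parkingCell (u : Fin n → ℝ) (σ : Equiv.Perm (Fin n)) :
    Convex ℝ (parkingCell u σ) := by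
  rintro a ⟨ha0, hamono, hau⟩ b ⟨hb0, hbmono, hbu⟩ s t hs ht hst
  refine ⟨fun i => ?_, fun i j hij => ?_, fun i => ?_⟩ <;>
    simp only [Pi.add_apply, Pi.smul_apply, smul_eq_mul]
  · exact add_nonneg (mul_nonneg hs (ha0 i)) (mul_nonneg ht (hb0 i))
  · exact add_le_add (mul_le_mul_of_nonneg_left (hamono hij) hs)
      (mul_le_mul_of_nonneg_left (hbmono hij) ht)
  · calc s * a (σ i) + t * b (σ i) ≤ s * u i + t * u i :=
          add_le_add (mul_le_mul_of_nonneg_left (hau i) hs) (mul_le_mul_of_nonneg_left (hbu i) ht)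
      _ = u i := by rw [← add_mul, hst, one_mul]

theorem isCompact_parkingCell (u : Fin n → ℝ) (σ : Equiv.Perm (Fin n)) :
    IsCompact (parkingCell u σ) := by
  refine (isCompact_Icc (a := 0) (b := fun j => u (σ.symm j))).of_isClosed_subset ?_ ?_
  · simp only [parkingCell, Monotone, Set.ofPred_and, Set.ofPred_forall]
    refine (isClosed_iInter fun i => ?_).inter ((isClosed_iInter fun i => isClosed_iInter fun j =>
      isClosed_iInter fun _ => ?_).inter (isClosed_iInter fun i => ?_)) <;>
    exact isClosed_le (by fun_prop) (by fun_prop)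
  · rintro a ⟨ha, -, hau⟩
    exact ⟨ha, fun j => by simpa using hau (σ.symm j)⟩

theorem isCompact_PF (u : Fin n → ℝ) : IsCompact (PF n u) := by
  rw [PF, setOf_isParkingFunction_eq_iUnion]
  exact isCompact_convexHull_biUnion _ (fun σ _ => isCompact_parkingCell u σ)
    (fun σ _ => convex_parkingCell u σ)

theorem isCompact_simplex0 (I : Finset (Fin n)) : IsCompact (simplex0 n I) := by
  refine Set.Finite.isCompact_convexHull ℝ (Set.Finite.insert 0 ?_)
  refine (Set.finite_range fun i : Fin n => Pi.single i (1 : ℝ)).subset ?_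
  rintro _ ⟨i, -, rfl⟩
  exact ⟨i, rfl⟩

def simplexBody (I : Finset (Fin n)) : ConvexBody (Fin n → ℝ) :=
  ⟨simplex0 n I, convex_convexHull ℝ _, isCompact_simplex0 I,
    ⟨0, subset_convexHull ℝ _ (Set.mem_insert _ _)⟩⟩

def parkingBody {u : Fin n → ℝ} (hnonneg : ∀ i, 0 ≤ u i) : ConvexBody (Fin n → ℝ) :=
  ⟨PF n u, convex_convexHull ℝ _, isCompact_PF u,
    ⟨0, subset_convexHull ℝ _ ⟨fun _ => le_rfl, 1, fun _ _ _ => le_rfl, hnonneg⟩⟩⟩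

theorem isGreatest_dotProduct_simplex0 (w : Fin n → ℝ) {I : Finset (Fin n)} {i : Fin n}
    (hi : i ∈ I) (hmax : ∀ j ∈ I, w j ≤ w i) :
    IsGreatest ((w ⬝ᵥ ·) '' simplex0 n I) (max (w i) 0) := by
  refine isGreatest_image_convexHull (f := dotProductBilin ℝ ℝ w) ⟨?_, ?_⟩
  · rcases le_total (w i) 0 with h | h
    · exact ⟨0, Set.mem_insert _ _, by simp [h]⟩
    · exact ⟨_, Set.mem_insert_of_mem _ ⟨i, hi, rfl⟩, by simp [h]⟩
  · rintro _ ⟨x, rfl | ⟨j, hj, rfl⟩, rfl⟩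
    · simp
    · simpa using le_max_of_le_left (hmax j hj)

theorem isGreatest_dotProduct_PF {u : Fin n → ℝ} (hmono : Monotone u)
    (hnonneg : ∀ i, 0 ≤ u i) (w : Fin n → ℝ) :
    IsGreatest ((w ⬝ᵥ ·) '' PF n u) (∑ j, u j * max (w (Tuple.sort w j)) 0) := by
  set τ := Tuple.sort w
  have hτ : Monotone (w ∘ τ) := Tuple.monotone_sort w
  refine isGreatest_image_convexHull (f := dotProductBilin ℝ ℝ w) ⟨?_, ?_⟩
  · set b : Fin n → ℝ := fun i => if 0 < w i then u (τ.symm i) else 0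
    have hb : ∀ j, b (τ j) = if 0 < w (τ j) then u j else 0 := by simp [b]
    refine ⟨b, ⟨fun i => ?_, τ, fun i j hij => ?_, fun j => ?_⟩, ?_⟩
    · simp only [b]
      split_ifs
      exacts [hnonneg _, le_rfl]
    · simp only [hb]
      split_ifs with hi hj hj
      exacts [hmono hij, absurd (hi.trans_le (hτ hij)) hj, hnonneg j, le_rfl]
    · rw [hb]
      split_ifs
      exacts [le_rfl, hnonneg j]
    · rw [dotProductBilin_apply_apply, dotProduct, ← Equiv.sum_comp τ]
      refine Finset.sum_congr rfl fun j _ => ?_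
      rw [hb]
      split_ifs with h
      · rw [max_eq_left h.le, mul_comm]
      · rw [max_eq_right (not_lt.mp h), mul_zero, mul_zero]
  · rintro _ ⟨a, ⟨ha0, σ, haσ, hau⟩, rfl⟩
    have hpos : Monotone fun j => max (w (τ j)) 0 := fun i j hij => max_le_max (hτ hij) le_rfl
    calc w ⬝ᵥ a = ∑ j, w (σ j) * a (σ j) := (Equiv.sum_comp σ _).symm
      _ ≤ ∑ j, max (w (σ j)) 0 * a (σ j) :=
        sum_le_sum fun j _ => mul_le_mul_of_nonneg_right (le_max_left _ _) (ha0 _)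
      _ ≤ ∑ j, max (w (τ j)) 0 * a (σ j) := by
        simpa using (hpos.monovary haσ).sum_comp_perm_mul_le_sum_mul (σ := σ.trans τ.symm)
      _ ≤ ∑ j, max (w (τ j)) 0 * u j :=
        sum_le_sum fun j _ => mul_le_mul_of_nonneg_left (hau j) (le_max_right _ _)
      _ = ∑ j, u j * max (w (τ j)) 0 := by simp only [mul_comm]

end ParkingFunctions

theorem Finset.sum_powerset_eq_add_sum_insert_max {α M : Type*} [LinearOrder α]
    [AddCommMonoid M] (s : Finset α) (F : Finset α → M) :
    ∑ t ∈ s.powerset, F t = F ∅ + ∑ m ∈ s, ∑ t ∈ (s.filter (· < m)).powerset, F (insert m t) := by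
  induction s using Finset.induction_on_max with
  | empty => simp
  | insert a s ha ih =>
    have has : a ∉ s := fun h => lt_irrefl a (ha a h)
    have hfilter : ∀ m ∈ s, ∑ t ∈ ((insert a s).filter (· < m)).powerset, F (insert m t) =
        ∑ t ∈ (s.filter (· < m)).powerset, F (insert m t) := fun m hm => by
      rw [filter_insert, if_neg (ha m hm).not_gt]
    rw [sum_powerset_insert has, ih, sum_insert has, filter_insert, if_neg (lt_irrefl a),
      filter_true_of_mem ha, sum_congr rfl hfilter]
    abel

theorem ysub_zero (n : ℕ) (u : Fin n → ℝ) : ysub n u 0 = 0 := rfl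

theorem ysub_succ_eq_fwdDiff (n : ℕ) (u : Fin n → ℝ) (k : ℕ) :
    ysub n u (k + 1) = (fwdDiff 1)^[k] (Uext n u) 0 := by
  rw [fwdDiff_iter_eq_sum_shift, ysub, ← sum_range_reflect]
  refine sum_congr rfl fun j hj => ?_
  have hjk : j ≤ k := Nat.lt_succ_iff.mp (mem_range.mp hj)
  simp [Nat.choose_symm hjk, Nat.sub_sub_self hjk, mul_comm]

theorem sum_choose_mul_ysub_succ {n : ℕ} (u : Fin n → ℝ) (m : Fin n) :
    ∑ k ∈ range (m + 1), ((m : ℕ).choose k : ℝ) * ysub n u (k + 1) = u m := by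
  simpa [ysub_succ_eq_fwdDiff, nsmul_eq_mul, Uext] using
    (shift_eq_sum_fwdDiff_iter 1 (Uext n u) m 0).symm

theorem sum_ysub_card_mul_eq {n : ℕ} (u : Fin n → ℝ) {β : Type*} [LinearOrder β]
    (w : Fin n → β) (φ : β → ℝ) (G : Finset (Fin n) → ℝ)
    (hG : ∀ I i, i ∈ I → (∀ j ∈ I, w j ≤ w i) → G I = φ (w i)) :
    ∑ I, ysub n u #I * G I = ∑ j, u j * φ (w (Tuple.sort w j)) := by
  set τ := Tuple.sort w
  have hτ : Monotone (w ∘ τ) := Tuple.monotone_sort w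
  have hmax : ∀ m S, S ⊆ univ.filter (· < m) →
      G ((insert m S).map τ.toEmbedding) = φ (w (τ m)) := by
    intro m S hS
    refine hG _ _ (mem_map_of_mem _ (mem_insert_self m S)) ?_
    intro j hj
    obtain ⟨k, hk, rfl⟩ := mem_map.mp hj
    refine hτ ?_
    rcases mem_insert.mp hk with rfl | hkS
    exacts [le_rfl, (by simpa using hS hkS : k < m).le]
  calc ∑ I, ysub n u #I * G I = ∑ J, ysub n u #J * G (J.map τ.toEmbedding) := by
        rw [← Equiv.sum_comp τ.finsetCongr]
        simp [Equiv.finsetCongr_apply]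
    _ = ∑ m, ∑ S ∈ (univ.filter (· < m)).powerset, ysub n u (#S + 1) * φ (w (τ m)) := by
        rw [← powerset_univ, sum_powerset_eq_add_sum_insert_max, card_empty, ysub_zero, zero_mul,
          zero_add]
        refine sum_congr rfl fun m _ => sum_congr rfl fun S hS => ?_
        have hmS : m ∉ S := fun h => lt_irrefl m (by simpa using mem_powerset.mp hS h)
        rw [card_insert_of_notMem hmS, hmax m S (mem_powerset.mp hS)]
    _ = ∑ m, u m * φ (w (τ m)) := by
        refine sum_congr rfl fun m _ => ?_
        rw [← sum_mul, sum_powerset_apply_card (fun k => ysub n u (k + 1)), filter_gt_eq_Iio,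
          Fin.card_Iio]
        simp only [nsmul_eq_mul, sum_choose_mul_ysub_succ]

theorem sum_ysub_mul_add_sum_filter_neg {n : ℕ} (u : Fin n → ℝ) (g : Finset (Fin n) → ℝ) :
    ∑ I, ysub n u #I * g I +
        ∑ I ∈ univ.filter (fun I => I.Nonempty ∧ ysub n u #I < 0), -ysub n u #I * g I =
      ∑ I ∈ univ.filter (fun I => I.Nonempty ∧ 0 ≤ ysub n u #I), ysub n u #I * g I := by
  rw [sum_filter, sum_filter, ← sum_add_distrib]
  refine sum_congr rfl fun I _ => ?_
  rcases I.eq_empty_or_nonempty with rfl | hI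
  · simp [ysub_zero]
  rcases le_or_gt 0 (ysub n u #I) with h | h
  · simp [hI, h, h.not_gt]
  · simp [hI, h, h.not_ge]

theorem parking_polytope_signed_minkowski_sum_general
    (n : ℕ) (u : Fin n → ℝ)
    (hmono : Monotone u) (hnonneg : ∀ i, 0 ≤ u i) :
    PF n u +
      ∑ I ∈ Finset.univ.filter
          (fun I : Finset (Fin n) => I.Nonempty ∧ ysub n u I.card < 0),
        (-(ysub n u I.card)) • simplex0 n I =
    ∑ I ∈ Finset.univ.filter
        (fun I : Finset (Fin n) => I.Nonempty ∧ 0 ≤ ysub n u I.card),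
      ysub n u I.card • simplex0 n I := by
  suffices h : parkingBody hnonneg +
        ∑ I ∈ univ.filter (fun I => I.Nonempty ∧ ysub n u #I < 0),
          (-ysub n u #I) • simplexBody I =
      ∑ I ∈ univ.filter (fun I => I.Nonempty ∧ 0 ≤ ysub n u #I), ysub n u #I • simplexBody I by
    have := congrArg SetLike.coe h
    simp only [ConvexBody.coe_add, ConvexBody.coe_sum, ConvexBody.coe_smul] at this
    exact this
  refine ConvexBody.ext_supportFun fun f => ?_
  set w : Fin n → ℝ := fun i => f (Pi.single i 1)
  have hΔ : ∀ I i, i ∈ I → (∀ j ∈ I, w j ≤ w i) →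
      ConvexBody.supportFun f (simplexBody I) = max (w i) 0 := fun I i hi hmax =>
    ConvexBody.supportFun_eq_of_isGreatest (isGreatest_dotProduct_simplex0 w hi hmax)
  rw [map_add, map_sum, map_sum,
    ConvexBody.supportFun_eq_of_isGreatest (isGreatest_dotProduct_PF hmono hnonneg w),
    ← sum_ysub_card_mul_eq u w (max · 0) _ hΔ,
    sum_congr rfl fun I hI =>
      ConvexBody.supportFun_smul f _ (neg_nonneg.mpr (mem_filter.mp hI).2.2.le),
    sum_congr rfl fun I hI => ConvexBody.supportFun_smul f _ (mem_filter.mp hI).2.2]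
  exact sum_ysub_mul_add_sum_filter_neg u _

/-- The parking function polytope is the signed Minkowski sum
`∑_{∅ ≠ I ⊆ [n]} y_I Δ_I⁰`; precisely,
`PF(u) + ∑_{y_I < 0} (-y_I) Δ_I⁰ = ∑_{y_I ≥ 0} y_I Δ_I⁰`. -/
theorem parking_polytope_signed_minkowski_sum
    (n : ℕ) (hn : 1 ≤ n) (u : Fin n → ℝ)
    (hmono : Monotone u) (hnonneg : ∀ i, 0 ≤ u i) (hne : u ≠ 0) :
    PF n u +
      ∑ I ∈ Finset.univ.filter
          (fun I : Finset (Fin n) => I.Nonempty ∧ ysub n u I.card < 0),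
        (-(ysub n u I.card)) • simplex0 n I =
    ∑ I ∈ Finset.univ.filter
        (fun I : Finset (Fin n) => I.Nonempty ∧ 0 ≤ ysub n u I.card),
      ysub n u I.card • simplex0 n I :=
  parking_polytope_signed_minkowski_sum_general n u hmono hnonneg
end
end

section
/- Let B be a skewed binary partition of {0,…,n} with type (b_{−1}, b_0, b_1, …, b_k). Then the dimension of the sliced preorder cone σ̃(B) (that is, the dimension of the linear span of σ̃(B), which contains 0) equals the sum of all entries b_i that are plain (unstarred, uncircled) positive integers, plus the number of starred entries; and consequently the codimension of σ̃(B) in ℝ^n equals |b_0| + Σ_{i : b_i starred} (|b_i| − 1). -/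
noncomputable section

/-- A skewed binary partition of `{0, 1, …, n}` with `k + 2` blocks
`B₋₁, B₀, B₁, …, B_k` (indexed here by `Fin (k+2)` with index `0 ↦ B₋₁`,
`1 ↦ B₀`, `i+2 ↦ B_i`), each declared homogeneous (`hom = true`) or
non-homogeneous. -/
structure SkewedBinaryPartition (n k : ℕ) where
  block : Fin (k + 2) → Finset (Fin (n + 1))
  hom : Fin (k + 2) → Bool
  disj : ∀ i j, i ≠ j → Disjoint (block i) (block j)
  cover : ∀ x : Fin (n + 1), ∃ i, x ∈ block i
  homNeg : hom 0 = false
  homZero : 2 ≤ (block 1).card → hom 1 = true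
  zeroMem : ((0 : Fin (n + 1)) ∈ block 1) ∨
    ((0 : Fin (n + 1)) ∈ block 0 ∧ 2 ≤ (block 0).card ∧ block 1 = ∅)
  singletonNonhom : ∀ i : Fin (k + 2), 1 ≤ (i : ℕ) → (block i).card = 1 → hom i = false
  blocksNonempty : ∀ i : Fin (k + 2), 2 ≤ (i : ℕ) → (block i).Nonempty

/-- Extend `c : Fin n → ℝ` to `{0, 1, …, n}` by the convention `c₀ = 0`. -/
def extz (n : ℕ) (c : Fin n → ℝ) : Fin (n + 1) → ℝ := Fin.cases 0 c

/-- The sliced preorder cone of a skewed binary partition. -/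
def sliceConeSBP {n k : ℕ} (P : SkewedBinaryPartition n k) : Set (Fin n → ℝ) :=
  {c | (∀ i j : Fin (k + 2), i < j →
          ∀ p ∈ P.block i, ∀ q ∈ P.block j, extz n c p ≤ extz n c q) ∧
       ∀ i : Fin (k + 2), P.hom i = true →
          ∀ p ∈ P.block i, ∀ q ∈ P.block i, extz n c p = extz n c q}

/-!
The span of the cone is the subspace `L` of vectors that, with `c₀ = 0`, are constant on the
homogeneous blocks: the cone lies in `L`, and every `c ∈ L` enters the cone after adding a steep
enough staircase (constant on blocks, increasing from each block to the next), which itself lies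
in the cone. Collapsing every homogeneous block to its minimum is an idempotent retraction `r` of
`{0, …, n}` fixing `0`, and `L` consists of the `r`-invariant vectors, so restriction to the
nonzero fixed points of `r` is an isomorphism. Hence `dim L + 1` is the number of fixed points of
`r`, counted block by block: all points of a non-homogeneous block, one point of a homogeneous one.
-/

open Finset

section extz

variable {n : ℕ}

@[simp] lemma extz_apply_zero (c : Fin n → ℝ) : extz n c 0 = 0 := rfl

@[simp] lemma extz_apply_succ (c : Fin n → ℝ) (y : Fin n) : extz n c y.succ = c y := rfl

@[simp] lemma extz_zero (x : Fin (n + 1)) : extz n 0 x = 0 := by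
  cases x using Fin.cases <;> rfl

lemma extz_add (c d : Fin n → ℝ) (x : Fin (n + 1)) :
    extz n (c + d) x = extz n c x + extz n d x := by
  cases x using Fin.cases <;> simp

lemma extz_smul (a : ℝ) (c : Fin n → ℝ) (x : Fin (n + 1)) :
    extz n (a • c) x = a * extz n c x := by
  cases x using Fin.cases <;> simp

lemma abs_extz_le_norm (c : Fin n → ℝ) (x : Fin (n + 1)) : |extz n c x| ≤ ‖c‖ := by
  cases x using Fin.cases with
  | zero => simp
  | succ y => exact norm_le_pi_norm c y

end extz

def retractInvariant (n : ℕ) (r : Fin (n + 1) → Fin (n + 1)) : Submodule ℝ (Fin n → ℝ) where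
  carrier := {c | ∀ x, extz n c (r x) = extz n c x}
  add_mem' {c d} hc hd x := by rw [extz_add, extz_add, hc, hd]
  zero_mem' x := by simp
  smul_mem' a c hc x := by rw [extz_smul, extz_smul, hc]

section retractInvariant

variable {n : ℕ} {r : Fin (n + 1) → Fin (n + 1)}

lemma eq_zero_of_mem_retractInvariant (hr : ∀ x, r (r x) = r x)
    {c : Fin n → ℝ} (hc : c ∈ retractInvariant n r) (hfix : ∀ y, r y.succ = y.succ → c y = 0) :
    c = 0 := by
  funext y
  rw [← extz_apply_succ c y, ← hc]
  rcases Fin.eq_zero_or_eq_succ (r y.succ) with h | ⟨z, h⟩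
  · rw [h, extz_apply_zero, Pi.zero_apply]
  · rw [h, extz_apply_succ]
    exact hfix z (by rw [← h, hr])

def restrictFixed (n : ℕ) (r : Fin (n + 1) → Fin (n + 1)) :
    retractInvariant n r →ₗ[ℝ] ({y : Fin n // r y.succ = y.succ} → ℝ) :=
  (LinearMap.funLeft ℝ ℝ Subtype.val).comp (retractInvariant n r).subtype

lemma restrictFixed_injective (hr : ∀ x, r (r x) = r x) :
    Function.Injective (restrictFixed n r) := by
  refine (injective_iff_map_eq_zero _).mpr fun c hc => Subtype.ext ?_
  exact eq_zero_of_mem_retractInvariant hr c.2 fun y hy => congrFun hc ⟨y, hy⟩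

lemma restrictFixed_surjective (hr : ∀ x, r (r x) = r x) (hr0 : r 0 = 0) :
    Function.Surjective (restrictFixed n r) := by
  intro g
  let d : Fin n → ℝ := fun z => if h : r z.succ = z.succ then g ⟨z, h⟩ else 0
  have hextz : ∀ x, extz n (fun y => extz n d (r y.succ)) x = extz n d (r x) := by
    intro x
    cases x using Fin.cases <;> simp [hr0]
  refine ⟨⟨fun y => extz n d (r y.succ), fun x => by rw [hextz, hextz, hr]⟩, ?_⟩
  funext ⟨y, hy⟩
  simp [restrictFixed, LinearMap.funLeft, hy, d]

theorem finrank_retractInvariant_add_one (hr : ∀ x, r (r x) = r x) (hr0 : r 0 = 0) :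
    Module.finrank ℝ (retractInvariant n r) + 1 = #{x | r x = x} := by
  rw [(LinearEquiv.ofBijective _ ⟨restrictFixed_injective hr,
      restrictFixed_surjective hr hr0⟩).finrank_eq, Module.finrank_fintype_fun_eq_card,
    Fintype.card_subtype, Fin.card_filter_univ_succ, if_pos hr0]

end retractInvariant

lemma sum_fin_eq_add_sum_filter {k : ℕ} {M : Type*} [AddCommMonoid M] (f : Fin (k + 2) → M)
    (b : Fin (k + 2) → Bool) :
    ∑ i, f i = f 0 + f 1 +
      ∑ i ∈ univ.filter (fun i : Fin (k + 2) => 2 ≤ (i : ℕ) ∧ b i = false), f i +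
      ∑ i ∈ univ.filter (fun i : Fin (k + 2) => 2 ≤ (i : ℕ) ∧ b i = true), f i := by
  have hlow : ({i | ¬ 2 ≤ (i : ℕ)} : Finset (Fin (k + 2))) = {0, 1} := by
    ext i
    simp only [mem_filter, mem_univ, true_and, mem_insert, mem_singleton, not_le, Fin.ext_iff,
      Fin.val_zero, Fin.val_one]
    omega
  rw [← sum_filter_not_add_sum_filter univ (fun i : Fin (k + 2) => 2 ≤ (i : ℕ)), hlow,
    sum_pair (by simp), ← sum_filter_not_add_sum_filter (univ.filter _) (fun i => b i = true),
    filter_filter, filter_filter]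
  simp only [Bool.not_eq_true, add_assoc]

namespace SkewedBinaryPartition

variable {n k : ℕ} (P : SkewedBinaryPartition n k)

def blockIdx (x : Fin (n + 1)) : Fin (k + 2) := (P.cover x).choose

lemma mem_block_blockIdx (x : Fin (n + 1)) : x ∈ P.block (P.blockIdx x) :=
  (P.cover x).choose_spec

variable {P} in
lemma blockIdx_eq_of_mem {x : Fin (n + 1)} {i : Fin (k + 2)} (hx : x ∈ P.block i) :
    P.blockIdx x = i := by
  by_contra hne
  exact Finset.disjoint_left.mp (P.disj _ _ hne) (P.mem_block_blockIdx x) hx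

lemma blockIdx_eq_iff_mem {x : Fin (n + 1)} {i : Fin (k + 2)} :
    P.blockIdx x = i ↔ x ∈ P.block i :=
  ⟨fun h => h ▸ P.mem_block_blockIdx x, blockIdx_eq_of_mem⟩

-- The minimum is the representative so that `0`, the minimum of `Fin (n + 1)`, is fixed.
def retract (x : Fin (n + 1)) : Fin (n + 1) :=
  if P.hom (P.blockIdx x) then (P.block (P.blockIdx x)).min' ⟨x, P.mem_block_blockIdx x⟩ else x

variable {P} in
lemma retract_of_mem {x : Fin (n + 1)} {i : Fin (k + 2)} (hx : x ∈ P.block i) :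
    P.retract x = if P.hom i then (P.block i).min' ⟨x, hx⟩ else x := by
  obtain rfl := blockIdx_eq_of_mem hx
  rfl

variable {P} in
lemma retract_mem {x : Fin (n + 1)} {i : Fin (k + 2)} (hx : x ∈ P.block i) :
    P.retract x ∈ P.block i := by
  rw [retract_of_mem hx]
  split_ifs
  exacts [min'_mem _ _, hx]

lemma retract_retract (x : Fin (n + 1)) : P.retract (P.retract x) = P.retract x := by
  have hx := P.mem_block_blockIdx x
  rw [retract_of_mem (retract_mem hx)]
  split_ifs with h
  exacts [((retract_of_mem hx).trans (if_pos h)).symm, rfl]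

lemma retract_zero : P.retract 0 = 0 := by
  rw [retract_of_mem (P.mem_block_blockIdx 0)]
  split_ifs
  exacts [le_antisymm (min'_le _ _ (P.mem_block_blockIdx 0)) (Fin.zero_le _), rfl]

variable {P} in
lemma retract_eq_retract {p q : Fin (n + 1)} {i : Fin (k + 2)} (hp : p ∈ P.block i)
    (hq : q ∈ P.block i) (hi : P.hom i = true) : P.retract p = P.retract q := by
  rw [retract_of_mem hp, retract_of_mem hq, if_pos hi, if_pos hi]

def staircase (t : ℝ) : Fin n → ℝ :=
  fun y => t * (((P.blockIdx y.succ : ℕ) : ℝ) - (P.blockIdx 0 : ℕ))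

lemma extz_staircase (t : ℝ) (x : Fin (n + 1)) :
    extz n (P.staircase t) x = t * (((P.blockIdx x : ℕ) : ℝ) - (P.blockIdx 0 : ℕ)) := by
  cases x using Fin.cases <;> simp [staircase]

lemma sliceConeSBP_subset_retractInvariant :
    sliceConeSBP P ⊆ retractInvariant n P.retract := by
  intro c hc x
  have hx := P.mem_block_blockIdx x
  rw [retract_of_mem hx]
  split_ifs with h
  exacts [hc.2 _ h _ (min'_mem _ _) _ hx, rfl]

variable {P} in
lemma add_staircase_mem_sliceConeSBP {c : Fin n → ℝ} (hc : c ∈ retractInvariant n P.retract)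
    {t : ℝ} (ht : 2 * ‖c‖ ≤ t) : c + P.staircase t ∈ sliceConeSBP P := by
  refine ⟨fun i j hij p hp q hq => ?_, fun i hi p hp q hq => ?_⟩
  · have hdiff : extz n c p - extz n c q ≤ t := by
      linarith [abs_le.mp (abs_extz_le_norm c p), abs_le.mp (abs_extz_le_norm c q)]
    have hij' : ((i : ℕ) : ℝ) + 1 ≤ (j : ℕ) := by exact_mod_cast hij
    have ht0 : 0 ≤ t := by linarith [norm_nonneg c]
    simp only [extz_add, extz_staircase, blockIdx_eq_of_mem hp, blockIdx_eq_of_mem hq]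
    nlinarith
  · simp only [extz_add, extz_staircase, blockIdx_eq_of_mem hp, blockIdx_eq_of_mem hq]
    rw [← hc p, ← hc q, retract_eq_retract hp hq hi]

lemma span_sliceConeSBP : Submodule.span ℝ (sliceConeSBP P) = retractInvariant n P.retract := by
  refine le_antisymm (Submodule.span_le.mpr P.sliceConeSBP_subset_retractInvariant)
    fun c hc => ?_
  have hshift := add_staircase_mem_sliceConeSBP hc le_rfl
  have hstair := add_staircase_mem_sliceConeSBP (zero_mem (retractInvariant n P.retract))
    (by simp : 2 * ‖(0 : Fin n → ℝ)‖ ≤ 2 * ‖c‖)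
  simpa using Submodule.sub_mem _ (Submodule.subset_span hshift) (Submodule.subset_span hstair)

lemma sum_card_filter_block (p : Fin (n + 1) → Prop) [DecidablePred p] :
    ∑ i, #{x ∈ P.block i | p x} = #{x | p x} := by
  rw [card_eq_sum_card_fiberwise (f := P.blockIdx) (t := univ) (fun _ _ => mem_univ _)]
  refine sum_congr rfl fun i _ => congrArg card (ext fun x => ?_)
  simp [P.blockIdx_eq_iff_mem, and_comm]

lemma sum_card_block : ∑ i, #(P.block i) = n + 1 := by
  simpa using P.sum_card_filter_block (fun _ => True)

lemma zero_mem_block_zero_iff :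
    (0 : Fin (n + 1)) ∈ P.block 0 ↔ (0 : Fin (n + 1)) ∉ P.block 1 := by
  have h01 : (0 : Fin (k + 2)) ≠ 1 := by simp
  rcases P.zeroMem with h | ⟨h, -⟩
  · exact iff_of_false (Finset.disjoint_left.mp (P.disj 1 0 h01.symm) h) (not_not.mpr h)
  · exact iff_of_true h (Finset.disjoint_left.mp (P.disj 0 1 h01) h)

lemma block_one_eq_empty (h : (0 : Fin (n + 1)) ∉ P.block 1) : P.block 1 = ∅ := by
  rcases P.zeroMem with h1 | ⟨-, -, hempty⟩
  exacts [absurd h1 h, hempty]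

variable {P} in
lemma filter_block_retract_eq_of_hom_false {i : Fin (k + 2)} (hi : P.hom i = false) :
    {x ∈ P.block i | P.retract x = x} = P.block i :=
  filter_true_of_mem fun x hx => by rw [retract_of_mem hx, hi, if_neg Bool.false_ne_true]

variable {P} in
lemma card_filter_block_retract_of_hom {i : Fin (k + 2)} (hi : P.hom i = true)
    (hne : (P.block i).Nonempty) : #{x ∈ P.block i | P.retract x = x} = 1 := by
  refine card_eq_one.mpr ⟨(P.block i).min' hne, ext fun x => ?_⟩
  simp only [mem_filter, mem_singleton]
  constructor
  · rintro ⟨hx, hfix⟩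
    rw [← hfix, retract_of_mem hx, if_pos hi]
  · rintro rfl
    exact ⟨min'_mem _ _, by rw [retract_of_mem (min'_mem _ _), if_pos hi]⟩

lemma card_filter_block_one_retract :
    #{x ∈ P.block 1 | P.retract x = x} = if (0 : Fin (n + 1)) ∈ P.block 1 then 1 else 0 := by
  split_ifs with h0
  · cases hi : P.hom 1
    · rw [filter_block_retract_eq_of_hom_false hi]
      have hcard : ¬ 2 ≤ #(P.block 1) := fun h => by simp [P.homZero h] at hi
      have := card_pos.mpr ⟨0, h0⟩
      omega
    · exact card_filter_block_retract_of_hom hi ⟨0, h0⟩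
  · simp [P.block_one_eq_empty h0]

lemma card_filter_retract_eq :
    #{x | P.retract x = x} =
      (#(P.block 0) - if (0 : Fin (n + 1)) ∈ P.block 0 then 1 else 0) +
      ∑ i ∈ univ.filter (fun i : Fin (k + 2) => 2 ≤ (i : ℕ) ∧ P.hom i = false), #(P.block i) +
      #(univ.filter fun i : Fin (k + 2) => 2 ≤ (i : ℕ) ∧ P.hom i = true) + 1 := by
  rw [← P.sum_card_filter_block, sum_fin_eq_add_sum_filter _ P.hom,
    filter_block_retract_eq_of_hom_false P.homNeg, card_filter_block_one_retract,
    sum_congr rfl fun i hi => congrArg card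
      (filter_block_retract_eq_of_hom_false (mem_filter.mp hi).2.2),
    sum_congr rfl fun i hi => card_filter_block_retract_of_hom (mem_filter.mp hi).2.2
      (P.blocksNonempty i (mem_filter.mp hi).2.1), ← card_eq_sum_ones]
  by_cases h1 : (0 : Fin (n + 1)) ∈ P.block 1
  · simp only [if_pos h1, if_neg (P.zero_mem_block_zero_iff.not_left.mpr h1)]
    omega
  · have := card_pos.mpr ⟨0, P.zero_mem_block_zero_iff.mpr h1⟩
    simp only [if_neg h1, if_pos (P.zero_mem_block_zero_iff.mpr h1)]
    omega

lemma sum_card_block_hom_eq :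
    ∑ i ∈ univ.filter (fun i : Fin (k + 2) => 2 ≤ (i : ℕ) ∧ P.hom i = true), #(P.block i) =
      ∑ i ∈ univ.filter (fun i : Fin (k + 2) => 2 ≤ (i : ℕ) ∧ P.hom i = true),
        (#(P.block i) - 1) +
      #(univ.filter fun i : Fin (k + 2) => 2 ≤ (i : ℕ) ∧ P.hom i = true) := by
  rw [card_eq_sum_ones, ← sum_add_distrib]
  refine sum_congr rfl fun i hi => ?_
  have := card_pos.mpr (P.blocksNonempty i (mem_filter.mp hi).2.1)
  omega

end SkewedBinaryPartition

theorem sliced_cone_dimension_general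
    (n k : ℕ) (P : SkewedBinaryPartition n k) :
    Module.finrank ℝ ↥(Submodule.span ℝ (sliceConeSBP P)) =
        ((P.block 0).card - (if (0 : Fin (n + 1)) ∈ P.block 0 then 1 else 0)) +
        (∑ i ∈ Finset.univ.filter
            (fun i : Fin (k + 2) => 2 ≤ (i : ℕ) ∧ P.hom i = false), (P.block i).card) +
        (Finset.univ.filter
            (fun i : Fin (k + 2) => 2 ≤ (i : ℕ) ∧ P.hom i = true)).card ∧
    n - Module.finrank ℝ ↥(Submodule.span ℝ (sliceConeSBP P)) =
        (if (0 : Fin (n + 1)) ∈ P.block 1 then (P.block 1).card - 1 else 0) +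
        ∑ i ∈ Finset.univ.filter
            (fun i : Fin (k + 2) => 2 ≤ (i : ℕ) ∧ P.hom i = true), ((P.block i).card - 1) := by
  have hdim := finrank_retractInvariant_add_one P.retract_retract P.retract_zero
  rw [P.card_filter_retract_eq, ← P.span_sliceConeSBP] at hdim
  have htot := P.sum_card_block
  rw [sum_fin_eq_add_sum_filter _ P.hom, P.sum_card_block_hom_eq] at htot
  refine ⟨by omega, ?_⟩
  by_cases h1 : (0 : Fin (n + 1)) ∈ P.block 1
  · have := card_pos.mpr ⟨0, h1⟩
    rw [if_neg (P.zero_mem_block_zero_iff.not_left.mpr h1)] at hdim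
    rw [if_pos h1]
    omega
  · have h0 := P.zero_mem_block_zero_iff.mpr h1
    have := card_pos.mpr ⟨0, h0⟩
    rw [P.block_one_eq_empty h1, card_empty] at htot
    rw [if_pos h0] at hdim
    rw [if_neg h1]
    omega

/-- Dimension of the sliced preorder cone of a skewed binary partition `B` with
type `(b₋₁, b₀, b₁, …, b_k)`: the dimension of its linear span equals the sum
of the plain (unstarred, uncircled) entries of the type plus the number of
starred entries, and the codimension equals `|b₀| + ∑_{starred} (|b_i| - 1)`.
(In terms of the blocks: `b₋₁ = |B₋₁| - [0 ∈ B₋₁]` is plain, `b₀ = 0` is plain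
when `0 ∈ B₋₁` and `b₀ = |B₀| - 1` is circled when `0 ∈ B₀`, and for `i ≥ 1`,
`b_i = |B_i|`, starred exactly when `B_i` is homogeneous.) -/
theorem sliced_cone_dimension
    (n k : ℕ) (hn : 1 ≤ n) (P : SkewedBinaryPartition n k) :
    Module.finrank ℝ ↥(Submodule.span ℝ (sliceConeSBP P)) =
        ((P.block 0).card - (if (0 : Fin (n + 1)) ∈ P.block 0 then 1 else 0)) +
        (∑ i ∈ Finset.univ.filter
            (fun i : Fin (k + 2) => 2 ≤ (i : ℕ) ∧ P.hom i = false), (P.block i).card) +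
        (Finset.univ.filter
            (fun i : Fin (k + 2) => 2 ≤ (i : ℕ) ∧ P.hom i = true)).card ∧
    n - Module.finrank ℝ ↥(Submodule.span ℝ (sliceConeSBP P)) =
        (if (0 : Fin (n + 1)) ∈ P.block 1 then (P.block 1).card - 1 else 0) +
        ∑ i ∈ Finset.univ.filter
            (fun i : Fin (k + 2) => 2 ≤ (i : ℕ) ∧ P.hom i = true), ((P.block i).card - 1) :=
  sliced_cone_dimension_general n k P
end
end

section
/- Let B = (B_1,…,B_p) and C = (C_1,…,C_q) be binary partitions of {0,…,n}. Then the preorder associated to C is a contraction of the preorder associated to B — equivalently, by the correspondence between contractions and faces of preorder cones, σ̃(C) is a face of σ̃(B) — if and only if the following five conditions hold: (1) non-crossing: there are no indices i < i′ and j < j′ with B_i ∩ C_{j′} ≠ ∅ and B_{i′} ∩ C_j ≠ ∅; (2) every non-homogeneous block B_i intersects at most one non-homogeneous block of C; (3) every homogeneous block B_i intersects exactly one block of C, and that block is homogeneous; (4) every non-homogeneous block C_j intersects exactly one block of B, and that block is non-homogeneous; (5) every homogeneous block C_j that intersects exactly one block of B intersects a homogeneous block of B. -/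
/-!
`σ̃(B)` is the cone of the points `c` with `c₀ = 0` that are monotone for a preorder `≤_B` on
`{0, …, n}`. For relations `ρ ≤ τ` with `τ` a preorder, the cone of `τ` is a face of the cone of
`ρ` exactly when `τ` is generated by `ρ` and the reverses of those relations of `ρ` that hold in
`τ`. The face is then cut out by the sum of `c_x - c_y` over the reversed relations `x ≤_ρ y`.
Conversely, if `a ≤_τ b` is not generated, the `0/1`-valued indicator of the points from which
`b` cannot be reached lies in the `ρ`-cone but violates `a ≤_τ b`; adding it to a suitable point of
the `ρ`-cone gives a generic point of the `τ`-cone, which lies in the face, and a face contains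
every summand of its points.

For binary partitions, `≤_B ⊆ ≤_C` amounts to non-crossing together with (3) and (4). Given this,
a relation `x ≤_C y` between two elements of one non-homogeneous block of `B` is generated exactly
when there is a detour `x ≤_C z ≤_C y` through an element `z` of another block of `B`, and the
existence of such detours amounts to (2) and (5).
-/

noncomputable section

/-- A binary partition of `{0, 1, …, n}` into `p` (nonempty) blocks, each
declared homogeneous (`hom = true`) or non-homogeneous, with every singleton
block non-homogeneous. -/
structure BinaryPartition (n p : ℕ) where
  block : Fin p → Finset (Fin (n + 1))
  hom : Fin p → Bool
  blocksNonempty : ∀ i, (block i).Nonempty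
  disj : ∀ i j, i ≠ j → Disjoint (block i) (block j)
  cover : ∀ x : Fin (n + 1), ∃ i, x ∈ block i
  singletonNonhom : ∀ i, (block i).card = 1 → hom i = false

/-- The sliced preorder cone of a binary partition. -/
def sliceConeBP {n p : ℕ} (B : BinaryPartition n p) : Set (Fin n → ℝ) :=
  {c | (∀ i j : Fin p, i < j →
          ∀ a ∈ B.block i, ∀ b ∈ B.block j, extz n c a ≤ extz n c b) ∧
       ∀ i : Fin p, B.hom i = true →
          ∀ a ∈ B.block i, ∀ b ∈ B.block i, extz n c a = extz n c b}

/-- `F` is a face of the closed convex cone `σ ⊆ ℝⁿ`. -/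
def IsConeFace (n : ℕ) (σ F : Set (Fin n → ℝ)) : Prop :=
  ∃ w : Fin n → ℝ, (∀ x ∈ σ, ∑ i, w i * x i ≤ 0) ∧
    F = {x ∈ σ | ∑ i, w i * x i = 0}

open Finset Relation

lemma subsingleton_subtype_iff {α : Type*} {P : α → Prop} :
    Subsingleton {a // P a} ↔ ∀ a b, P a → P b → a = b :=
  ⟨fun _ a b ha hb => congrArg Subtype.val (Subsingleton.elim (⟨a, ha⟩ : {a // P a}) ⟨b, hb⟩),
    fun h => ⟨fun a b => Subtype.ext (h _ _ a.2 b.2)⟩⟩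

section PreorderCone

variable {n : ℕ}

def preorderCone (ρ : Fin (n + 1) → Fin (n + 1) → Prop) : Set (Fin n → ℝ) :=
  {c | ∀ x y, ρ x y → extz n c x ≤ extz n c y}

lemma preorderCone_anti {ρ ρ' : Fin (n + 1) → Fin (n + 1) → Prop} (h : ρ ≤ ρ') :
    preorderCone ρ' ⊆ preorderCone ρ :=
  fun _ hc x y hxy => hc x y (h x y hxy)

/-- Every function on `{0, …, n}` is, up to an additive constant, `extz n c` for some `c`. -/
def normalizeAtZero (f : Fin (n + 1) → ℝ) : Fin n → ℝ := fun i => f i.succ - f 0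

lemma extz_normalizeAtZero (f : Fin (n + 1) → ℝ) (x : Fin (n + 1)) :
    extz n (normalizeAtZero f) x = f x - f 0 := by
  cases x using Fin.cases <;> simp [extz, normalizeAtZero]

lemma normalizeAtZero_mem_preorderCone_iff {ρ : Fin (n + 1) → Fin (n + 1) → Prop}
    {f : Fin (n + 1) → ℝ} :
    normalizeAtZero f ∈ preorderCone ρ ↔ ∀ x y, ρ x y → f x ≤ f y := by
  simp only [preorderCone, Set.mem_ofPred_eq, extz_normalizeAtZero, sub_le_sub_iff_right]

lemma normalizeAtZero_add (f g : Fin (n + 1) → ℝ) :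
    normalizeAtZero f + normalizeAtZero g = normalizeAtZero (f + g) := by
  ext i
  simp only [normalizeAtZero, Pi.add_apply]
  ring

variable (n) in
def extzLinearMap : (Fin n → ℝ) →ₗ[ℝ] Fin (n + 1) → ℝ where
  toFun := extz n
  map_add' c d := funext fun x => by cases x using Fin.cases <;> simp [extz]
  map_smul' r c := funext fun x => by cases x using Fin.cases <;> simp [extz]

lemma IsConeFace.subset {σ F : Set (Fin n → ℝ)} (hF : IsConeFace n σ F) : F ⊆ σ := by
  obtain ⟨w, -, rfl⟩ := hF
  exact fun _ hx => hx.1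

lemma IsConeFace.mem_of_add_mem {σ F : Set (Fin n → ℝ)} (hF : IsConeFace n σ F)
    {x y : Fin n → ℝ} (hx : x ∈ σ) (hy : y ∈ σ) (hxy : x + y ∈ F) : x ∈ F := by
  obtain ⟨w, hw, rfl⟩ := hF
  have hsum : ∑ i, w i * (x + y) i = ∑ i, w i * x i + ∑ i, w i * y i := by
    simp only [Pi.add_apply, mul_add, sum_add_distrib]
  exact ⟨hx, by linarith [hw x hx, hw y hy, hxy.2]⟩

lemma isConeFace_of_linearMap {σ : Set (Fin n → ℝ)} (L : (Fin n → ℝ) →ₗ[ℝ] ℝ)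
    (hL : ∀ x ∈ σ, L x ≤ 0) : IsConeFace n σ {x ∈ σ | L x = 0} := by
  have hw : ∀ x, ∑ i, L (fun j => if i = j then 1 else 0) * x i = L x := fun x => by
    simp only [L.pi_apply_eq_sum_univ x, smul_eq_mul, mul_comm]
  exact ⟨_, fun x hx => (hw x).symm ▸ hL x hx, by simp only [hw]⟩

end PreorderCone

section Contraction

variable {α : Type*}

def contractionStep (ρ τ : α → α → Prop) (a b : α) : Prop := ρ a b ∨ (ρ b a ∧ τ a b)

/-- `τ` is obtained from `ρ` by reversing some of its relations and closing up. -/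
def IsContraction (ρ τ : α → α → Prop) : Prop :=
  ρ ≤ τ ∧ τ ≤ ReflTransGen (contractionStep ρ τ)

lemma reflTransGen_contractionStep_le {ρ τ : α → α → Prop} [IsPreorder α τ] (h : ρ ≤ τ) :
    ReflTransGen (contractionStep ρ τ) ≤ τ :=
  reflTransGen_le_of_le fun _ _ hs => hs.elim (h _ _) And.right

lemma exists_ne_head_of_reflTransGen {r : α → α → Prop} {a b : α}
    (h : ReflTransGen r a b) (hne : a ≠ b) :
    ∃ c ≠ a, r a c ∧ ReflTransGen r c b := by
  induction h using ReflTransGen.head_induction_on with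
  | refl => exact absurd rfl hne
  | @head a c hac hcb ih =>
    by_cases hca : c = a
    · subst hca
      exact ih hne
    · exact ⟨c, hca, hac, hcb⟩

lemma le_of_reflTransGen {r : α → α → Prop} {f : α → ℝ} (hf : ∀ x y, r x y → f x ≤ f y)
    {x y : α} (h : ReflTransGen r x y) : f x ≤ f y := by
  induction h with
  | refl => exact le_rfl
  | tail _ hs ih => exact ih.trans (hf _ _ hs)

open scoped Classical in
def numBelow [Fintype α] (τ : α → α → Prop) (x : α) : ℕ := #{z | τ z x}

lemma numBelow_mono [Fintype α] {τ : α → α → Prop} [IsTrans α τ] {x y : α} (h : τ x y) :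
    numBelow τ x ≤ numBelow τ y := by
  classical
  unfold numBelow
  convert card_le_card fun z hz => ?_
  simp only [mem_filter, mem_univ, true_and] at hz ⊢
  exact trans_of τ hz h

lemma numBelow_lt [Fintype α] {τ : α → α → Prop} [IsPreorder α τ] {x y : α} (h : τ x y)
    (h' : ¬ τ y x) : numBelow τ x < numBelow τ y := by
  classical
  unfold numBelow
  convert card_lt_card ((ssubset_iff_of_subset fun z hz => ?_).2 ⟨y, ?_, ?_⟩)
  · simp only [mem_filter, mem_univ, true_and] at hz ⊢
    exact trans_of τ hz h
  · simpa using refl_of τ y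
  · simpa using h'

end Contraction

section FaceOfPreorderCone

variable {n : ℕ} {ρ τ : Fin (n + 1) → Fin (n + 1) → Prop}

lemma IsConeFace.le_of_preorderCone [IsPreorder (Fin (n + 1)) τ]
    (hF : IsConeFace n (preorderCone ρ) (preorderCone τ)) : ρ ≤ τ := by
  classical
  intro x y hxy
  by_contra hτ
  let g : Fin (n + 1) → ℝ := fun z => if τ z y then 0 else 1
  have hg : normalizeAtZero g ∈ preorderCone τ := by
    refine normalizeAtZero_mem_preorderCone_iff.2 fun a b hab => ?_
    by_cases hb : τ b y
    · simp [g, hb, trans_of τ hab hb]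
    · by_cases ha : τ a y <;> simp [g, ha, hb]
  have := normalizeAtZero_mem_preorderCone_iff.1 (hF.subset hg) x y hxy
  norm_num [g, hτ, refl_of τ y] at this

lemma IsConeFace.le_reflTransGen_of_preorderCone [IsPreorder (Fin (n + 1)) τ]
    (hF : IsConeFace n (preorderCone ρ) (preorderCone τ)) (hle : ρ ≤ τ) :
    τ ≤ ReflTransGen (contractionStep ρ τ) := by
  classical
  intro a b hab
  by_contra hT
  set T := ReflTransGen (contractionStep ρ τ)
  have hTρ : ∀ x y, ρ x y → T y b → T x b := fun x y hxy => .head (Or.inl hxy)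
  let g : Fin (n + 1) → ℝ := fun z => if T z b then 0 else 1
  let h : Fin (n + 1) → ℝ := fun z => numBelow τ z
  have hmono : ∀ x y, τ x y → h x ≤ h y := fun x y hxy => Nat.cast_le.2 (numBelow_mono hxy)
  have hg : ∀ x y, ρ x y → g x ≤ g y := fun x y hxy => by
    by_cases hy : T y b
    · simp [g, hy, hTρ x y hxy hy]
    · by_cases hx : T x b <;> simp [g, hx, hy]
  -- `g` jumps only along relations of `ρ` that are not reversed in `τ`, where `h` jumps too
  have hgh : ∀ x y, ρ x y → g y - g x ≤ h y - h x := fun x y hxy => by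
    have hhxy := hmono x y (hle x y hxy)
    by_cases hy : T y b
    · simpa [g, hy, hTρ x y hxy hy] using hhxy
    by_cases hx : T x b
    · have hyx : ¬ τ y x := fun hyx => hy (.head (Or.inr ⟨hxy, hyx⟩) hx)
      have : h x + 1 ≤ h y := by
        simp only [h]
        exact_mod_cast numBelow_lt (hle x y hxy) hyx
      simp only [g, hx, hy, if_true, if_false]
      linarith
    · simpa [g, hx, hy] using hhxy
  have hgρ : normalizeAtZero g ∈ preorderCone ρ := normalizeAtZero_mem_preorderCone_iff.2 hg
  have hhg : normalizeAtZero (h - g) ∈ preorderCone ρ :=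
    normalizeAtZero_mem_preorderCone_iff.2 fun x y hxy => by
      simp only [Pi.sub_apply]
      linarith [hgh x y hxy]
  have hh : normalizeAtZero g + normalizeAtZero (h - g) ∈ preorderCone τ := by
    rw [normalizeAtZero_add, add_sub_cancel]
    exact normalizeAtZero_mem_preorderCone_iff.2 hmono
  have := normalizeAtZero_mem_preorderCone_iff.1 (hF.mem_of_add_mem hgρ hhg hh) a b hab
  norm_num [g, hT, show T b b from .refl] at this

lemma IsContraction.isConeFace (h : IsContraction ρ τ) :
    IsConeFace n (preorderCone ρ) (preorderCone τ) := by
  classical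
  obtain ⟨hle, hT⟩ := h
  let S := univ.filter fun z : Fin (n + 1) × Fin (n + 1) => ρ z.1 z.2 ∧ τ z.2 z.1
  let L : (Fin n → ℝ) →ₗ[ℝ] ℝ :=
    ∑ z ∈ S,
      (LinearMap.proj (R := ℝ) (φ := fun _ => ℝ) z.1 - LinearMap.proj z.2) ∘ₗ extzLinearMap n
  have hL : ∀ c, L c = ∑ z ∈ S, (extz n c z.1 - extz n c z.2) := fun c => by
    simp [L, extzLinearMap]
  have hterm : ∀ c ∈ preorderCone ρ, ∀ z ∈ S, extz n c z.1 - extz n c z.2 ≤ 0 :=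
    fun c hc z hz => by
      have := hc z.1 z.2 (mem_filter.1 hz).2.1
      linarith
  convert isConeFace_of_linearMap L fun c hc => (hL c).symm ▸ sum_nonpos (hterm c hc)
  ext c
  simp only [Set.mem_ofPred_eq, hL]
  constructor
  · intro hc
    refine ⟨preorderCone_anti hle hc, sum_eq_zero fun z hz => ?_⟩
    have := hc z.2 z.1 (mem_filter.1 hz).2.2
    linarith [hterm c (preorderCone_anti hle hc) z hz]
  · rintro ⟨hc, hsum⟩
    have hzero := (sum_eq_zero_iff_of_nonpos (hterm c hc)).1 hsum
    have hstep : ∀ x y, contractionStep ρ τ x y → extz n c x ≤ extz n c y := by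
      rintro x y (hxy | ⟨hyx, hxy⟩)
      · exact hc x y hxy
      · have := hzero (y, x) (mem_filter.2 ⟨mem_univ _, hyx, hxy⟩)
        linarith
    exact fun x y hxy => le_of_reflTransGen hstep (hT x y hxy)

theorem isConeFace_preorderCone_iff [IsPreorder (Fin (n + 1)) τ] :
    IsConeFace n (preorderCone ρ) (preorderCone τ) ↔ IsContraction ρ τ :=
  ⟨fun hF => ⟨hF.le_of_preorderCone, hF.le_reflTransGen_of_preorderCone hF.le_of_preorderCone⟩,
    IsContraction.isConeFace⟩

end FaceOfPreorderCone

namespace BinaryPartition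

variable {n p q : ℕ}

section Preorder

variable (B : BinaryPartition n p)

def idx (x : Fin (n + 1)) : Fin p := (B.cover x).choose

lemma idx_eq_iff {x : Fin (n + 1)} {i : Fin p} : B.idx x = i ↔ x ∈ B.block i := by
  have hx : x ∈ B.block (B.idx x) := (B.cover x).choose_spec
  refine ⟨fun h => h ▸ hx, fun h => ?_⟩
  by_contra hne
  exact disjoint_left.1 (B.disj _ _ hne) hx h

lemma inter_nonempty_iff (C : BinaryPartition n q) {i : Fin p} {j : Fin q} :
    (B.block i ∩ C.block j).Nonempty ↔ ∃ x, B.idx x = i ∧ C.idx x = j := by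
  simp only [Finset.Nonempty, mem_inter, idx_eq_iff]

lemma idx_surjective : Function.Surjective B.idx := fun i =>
  (B.blocksNonempty i).elim fun x hx => ⟨x, B.idx_eq_iff.2 hx⟩

lemma exists_ne_idx_eq_of_hom {x : Fin (n + 1)} (h : B.hom (B.idx x) = true) :
    ∃ u ≠ x, B.idx u = B.idx x := by
  have hcard : 1 < #(B.block (B.idx x)) := by
    by_contra hle
    have := B.singletonNonhom _ (le_antisymm (not_lt.1 hle) (card_pos.2 ⟨x, B.idx_eq_iff.1 rfl⟩))
    simp_all
  obtain ⟨u, hu, hux⟩ := exists_mem_ne hcard x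
  exact ⟨u, hux, B.idx_eq_iff.2 hu⟩

def le (x y : Fin (n + 1)) : Prop :=
  x = y ∨ B.idx x < B.idx y ∨ (B.idx x = B.idx y ∧ B.hom (B.idx x) = true)

instance : IsPreorder (Fin (n + 1)) B.le where
  refl _ := Or.inl rfl
  trans x y z := by
    rintro (rfl | hxy | ⟨hxy, hx⟩) hyz
    · exact hyz
    · rcases hyz with rfl | hyz | ⟨hyz, -⟩
      · exact Or.inr (Or.inl hxy)
      · exact Or.inr (Or.inl (hxy.trans hyz))
      · exact Or.inr (Or.inl (hyz ▸ hxy))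
    · rcases hyz with rfl | hyz | ⟨hyz, -⟩
      · exact Or.inr (Or.inr ⟨hxy, hx⟩)
      · exact Or.inr (Or.inl (hxy ▸ hyz))
      · exact Or.inr (Or.inr ⟨hxy.trans hyz, hx⟩)

variable {B} {x y : Fin (n + 1)}

lemma le_of_idx_lt (h : B.idx x < B.idx y) : B.le x y := Or.inr (Or.inl h)

lemma le_of_idx_eq_of_hom (h : B.idx x = B.idx y) (hom : B.hom (B.idx x) = true) : B.le x y :=
  Or.inr (Or.inr ⟨h, hom⟩)

lemma idx_le_of_le (h : B.le x y) : B.idx x ≤ B.idx y := by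
  rcases h with rfl | h | ⟨h, -⟩
  exacts [le_rfl, h.le, h.le]

lemma idx_lt_of_le_of_ne (h : B.le x y) (hne : x ≠ y) (hx : B.hom (B.idx x) = false) :
    B.idx x < B.idx y := by
  rcases h with rfl | h | ⟨-, h⟩
  exacts [absurd rfl hne, h, by simp_all]

lemma idx_lt_of_le_of_ne' (h : B.le x y) (hne : x ≠ y) (hy : B.hom (B.idx y) = false) :
    B.idx x < B.idx y := by
  rcases h with rfl | h | ⟨h, h'⟩
  exacts [absurd rfl hne, h, by simp_all]

variable (B) in
lemma sliceConeBP_eq_preorderCone : sliceConeBP B = preorderCone B.le := by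
  ext c
  constructor
  · rintro ⟨hlt, hhom⟩ x y (rfl | h | ⟨h, hom⟩)
    · exact le_rfl
    · exact hlt _ _ h x (B.idx_eq_iff.1 rfl) y (B.idx_eq_iff.1 rfl)
    · exact (hhom _ hom x (B.idx_eq_iff.1 rfl) y (B.idx_eq_iff.1 h.symm)).le
  · intro hc
    refine ⟨fun i j hij a ha b hb => hc a b (le_of_idx_lt ?_), fun i hom a ha b hb => ?_⟩
    · rwa [B.idx_eq_iff.2 ha, B.idx_eq_iff.2 hb]
    · rw [← B.idx_eq_iff] at ha hb
      subst ha
      exact le_antisymm (hc a b (le_of_idx_eq_of_hom hb.symm hom))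
        (hc b a (le_of_idx_eq_of_hom hb (hb ▸ hom)))

lemma idx_eq_and_hom_of_le_of_le (hxy : B.le x y) (hyx : B.le y x) (hne : x ≠ y) :
    B.idx x = B.idx y ∧ B.hom (B.idx x) = true := by
  rcases hxy with rfl | hlt | h
  exacts [absurd rfl hne, absurd (idx_le_of_le hyx) hlt.not_ge, h]

end Preorder

section Contraction

variable {B : BinaryPartition n p} {C : BinaryPartition n q} {x y : Fin (n + 1)}

lemma idx_le_idx_of_le_le (h : B.le ≤ C.le) (hxy : B.idx x < B.idx y) : C.idx x ≤ C.idx y :=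
  idx_le_of_le (h x y (le_of_idx_lt hxy))

lemma idx_eq_and_hom_of_le_le (h : B.le ≤ C.le) (hxy : B.idx x = B.idx y)
    (hx : B.hom (B.idx x) = true) : C.idx x = C.idx y ∧ C.hom (C.idx x) = true := by
  have key : ∀ y ≠ x, B.idx x = B.idx y → C.idx x = C.idx y ∧ C.hom (C.idx x) = true :=
    fun y hyx hxy => idx_eq_and_hom_of_le_of_le (h _ _ (le_of_idx_eq_of_hom hxy hx))
      (h _ _ (le_of_idx_eq_of_hom hxy.symm (hxy ▸ hx))) hyx.symm
  by_cases hyx : y = x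
  · subst hyx
    obtain ⟨u, hux, hu⟩ := B.exists_ne_idx_eq_of_hom hx
    exact ⟨rfl, (key u hux hu.symm).2⟩
  · exact key y hyx hxy

lemma idx_eq_and_nonhom_of_le_le (h : B.le ≤ C.le) (hxy : C.idx x = C.idx y)
    (hx : C.hom (C.idx x) = false) : B.idx x = B.idx y ∧ B.hom (B.idx x) = false := by
  refine ⟨?_, ?_⟩
  · rcases lt_trichotomy (B.idx x) (B.idx y) with hlt | heq | hgt
    · exact absurd hxy (idx_lt_of_le_of_ne (h x y (le_of_idx_lt hlt))
        (by rintro rfl; exact hlt.false) hx).ne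
    · exact heq
    · exact absurd hxy.symm (idx_lt_of_le_of_ne' (h y x (le_of_idx_lt hgt))
        (by rintro rfl; exact hgt.false) hx).ne
  · cases hBx : B.hom (B.idx x)
    · rfl
    · simp [(idx_eq_and_hom_of_le_le h rfl hBx).2] at hx

theorem le_le_iff : B.le ≤ C.le ↔
    (∀ x y, B.idx x < B.idx y → C.idx x ≤ C.idx y) ∧
    (∀ x y, B.idx x = B.idx y → B.hom (B.idx x) = true →
      C.idx x = C.idx y ∧ C.hom (C.idx x) = true) ∧
    (∀ x y, C.idx x = C.idx y → C.hom (C.idx x) = false →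
      B.idx x = B.idx y ∧ B.hom (B.idx x) = false) := by
  refine ⟨fun h => ⟨fun _ _ => idx_le_idx_of_le_le h, fun _ _ => idx_eq_and_hom_of_le_le h,
    fun _ _ => idx_eq_and_nonhom_of_le_le h⟩, ?_⟩
  rintro ⟨hcross, hhom, hnonhom⟩ x y (rfl | hlt | ⟨heq, hx⟩)
  · exact refl_of C.le x
  · rcases (hcross x y hlt).lt_or_eq with hlt' | heq
    · exact le_of_idx_lt hlt'
    · cases hCx : C.hom (C.idx x)
      · exact absurd (hnonhom x y heq hCx).1 hlt.ne
      · exact le_of_idx_eq_of_hom heq hCx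
  · exact le_of_idx_eq_of_hom (hhom x y heq hx).1 (hhom x y heq hx).2

lemma exists_detour_of_reflTransGen (h : B.le ≤ C.le)
    (hx : B.hom (B.idx x) = false) (hne : x ≠ y)
    (hT : ReflTransGen (contractionStep B.le C.le) x y) :
    ∃ z, B.idx z ≠ B.idx x ∧ C.le x z ∧ C.le z y := by
  obtain ⟨z, hzx, hstep, hzy⟩ := exists_ne_head_of_reflTransGen hT hne
  refine ⟨z, ?_, hstep.elim (h x z) And.right, reflTransGen_contractionStep_le h z y hzy⟩
  rcases hstep with hxz | ⟨hzx', -⟩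
  · exact (idx_lt_of_le_of_ne hxz hzx.symm hx).ne'
  · exact (idx_lt_of_le_of_ne' hzx' hzx hx).ne

lemma reflTransGen_of_detour {z : Fin (n + 1)} (hxy : B.idx x = B.idx y)
    (hz : B.idx z ≠ B.idx x) (hxz : C.le x z) (hzy : C.le z y) :
    ReflTransGen (contractionStep B.le C.le) x y := by
  rcases hz.lt_or_gt with hlt | hgt
  · exact .head (Or.inr ⟨le_of_idx_lt hlt, hxz⟩) (.single (Or.inl (le_of_idx_lt (hxy ▸ hlt))))
  · exact .head (Or.inl (le_of_idx_lt hgt)) (.single (Or.inr ⟨le_of_idx_lt (hxy ▸ hgt), hzy⟩))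

lemma not_idx_lt_of_le_reflTransGen (h : B.le ≤ C.le)
    (hT : C.le ≤ ReflTransGen (contractionStep B.le C.le)) (hxy : B.idx x = B.idx y)
    (hx : B.hom (B.idx x) = false) (hCx : C.hom (C.idx x) = false)
    (hCy : C.hom (C.idx y) = false) : ¬ C.idx x < C.idx y := by
  intro hlt
  obtain ⟨z, hz, hxz, hzy⟩ := exists_detour_of_reflTransGen h hx
    (by rintro rfl; exact hlt.false) (hT x y (le_of_idx_lt hlt))
  have hxz' := idx_lt_of_le_of_ne hxz (by rintro rfl; exact hz rfl) hCx
  have hzy' := idx_lt_of_le_of_ne' hzy (by rintro rfl; exact hz hxy.symm) hCy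
  rcases hz.lt_or_gt with hzx | hxz''
  · exact (idx_le_idx_of_le_le h hzx).not_gt hxz'
  · exact (idx_le_idx_of_le_le h (hxy ▸ hxz'')).not_gt hzy'

lemma exists_idx_ne_of_le_reflTransGen (h : B.le ≤ C.le)
    (hT : C.le ≤ ReflTransGen (contractionStep B.le C.le)) (hCx : C.hom (C.idx x) = true)
    (hx : B.hom (B.idx x) = false) : ∃ z, C.idx z = C.idx x ∧ B.idx z ≠ B.idx x := by
  by_contra! hall
  obtain ⟨y, hyx, hy⟩ := C.exists_ne_idx_eq_of_hom hCx
  obtain ⟨z, hz, hxz, hzy⟩ := exists_detour_of_reflTransGen h hx hyx.symm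
    (hT x y (le_of_idx_eq_of_hom hy.symm hCx))
  exact hz (hall z (le_antisymm (hy ▸ idx_le_of_le hzy) (idx_le_of_le hxz)))

lemma le_reflTransGen_of_idx_eq_of_exists_idx_ne
    (h2 : ∀ x y, B.idx x = B.idx y → B.hom (B.idx x) = false →
      C.hom (C.idx x) = false → C.hom (C.idx y) = false → C.idx x = C.idx y)
    (h5 : ∀ x, C.hom (C.idx x) = true → B.hom (B.idx x) = false →
      ∃ z, C.idx z = C.idx x ∧ B.idx z ≠ B.idx x) :
    C.le ≤ ReflTransGen (contractionStep B.le C.le) := by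
  intro x y hxy
  rcases lt_trichotomy (B.idx x) (B.idx y) with hlt | heq | hgt
  · exact .single (Or.inl (le_of_idx_lt hlt))
  swap
  · exact .single (Or.inr ⟨le_of_idx_lt hgt, hxy⟩)
  cases hx : B.hom (B.idx x)
  swap
  · exact .single (Or.inl (le_of_idx_eq_of_hom heq hx))
  by_cases hne : x = y
  · exact hne ▸ .refl
  have hC : C.hom (C.idx x) = true ∨ C.hom (C.idx y) = true := by
    by_contra! hC
    simp only [ne_eq, Bool.not_eq_true] at hC
    exact (idx_lt_of_le_of_ne hxy hne hC.1).ne (h2 x y heq hx hC.1 hC.2)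
  -- the homogeneous block of `C` containing `x` or `y` provides the detour
  rcases hC with hCx | hCy
  · obtain ⟨z, hz, hzx⟩ := h5 x hCx hx
    exact reflTransGen_of_detour heq hzx (le_of_idx_eq_of_hom hz.symm hCx)
      (trans_of C.le (le_of_idx_eq_of_hom hz (hz ▸ hCx)) hxy)
  · obtain ⟨z, hz, hzy⟩ := h5 y hCy (heq ▸ hx)
    exact reflTransGen_of_detour heq (heq ▸ hzy)
      (trans_of C.le hxy (le_of_idx_eq_of_hom hz.symm hCy)) (le_of_idx_eq_of_hom hz (hz ▸ hCy))

theorem le_reflTransGen_iff (h : B.le ≤ C.le) :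
    C.le ≤ ReflTransGen (contractionStep B.le C.le) ↔
    (∀ x y, B.idx x = B.idx y → B.hom (B.idx x) = false → C.hom (C.idx x) = false →
      C.hom (C.idx y) = false → C.idx x = C.idx y) ∧
    (∀ x, C.hom (C.idx x) = true → B.hom (B.idx x) = false →
      ∃ z, C.idx z = C.idx x ∧ B.idx z ≠ B.idx x) := by
  refine ⟨fun hT => ⟨fun x y hxy hx hCx hCy => ?_, fun _ => exists_idx_ne_of_le_reflTransGen h hT⟩,
    fun ⟨h2, h5⟩ => le_reflTransGen_of_idx_eq_of_exists_idx_ne h2 h5⟩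
  rcases lt_trichotomy (C.idx x) (C.idx y) with hlt | heq | hgt
  · exact absurd hlt (not_idx_lt_of_le_reflTransGen h hT hxy hx hCx hCy)
  · exact heq
  · exact absurd hgt (not_idx_lt_of_le_reflTransGen h hT hxy.symm (hxy ▸ hx) hCy hCx)

end Contraction

section IntersectionGraph

variable (B : BinaryPartition n p) (C : BinaryPartition n q)

lemma not_exists_crossing_iff :
    (¬ ∃ (i i' : Fin p) (j j' : Fin q), i < i' ∧ j < j' ∧
      (B.block i ∩ C.block j').Nonempty ∧ (B.block i' ∩ C.block j).Nonempty) ↔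
    ∀ x y, B.idx x < B.idx y → C.idx x ≤ C.idx y := by
  simp only [inter_nonempty_iff]
  constructor
  · intro h x y hxy
    by_contra! hlt
    exact h ⟨_, _, _, _, hxy, hlt, ⟨x, rfl, rfl⟩, ⟨y, rfl, rfl⟩⟩
  · rintro h ⟨i, i', j, j', hi, hj, ⟨x, rfl, rfl⟩, ⟨y, rfl, rfl⟩⟩
    exact (h x y hi).not_gt hj

lemma natCard_nonhom_inter_le_one_iff :
    (∀ i, B.hom i = false →
      Nat.card {j : Fin q // C.hom j = false ∧ (B.block i ∩ C.block j).Nonempty} ≤ 1) ↔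
    ∀ x y, B.idx x = B.idx y → B.hom (B.idx x) = false → C.hom (C.idx x) = false →
      C.hom (C.idx y) = false → C.idx x = C.idx y := by
  simp only [Finite.card_le_one_iff_subsingleton, subsingleton_subtype_iff, inter_nonempty_iff]
  constructor
  · intro h x y hxy hx hCx hCy
    exact h _ hx _ _ ⟨hCx, x, rfl, rfl⟩ ⟨hCy, y, hxy.symm, rfl⟩
  · rintro h i hi _ _ ⟨hCx, x, rfl, rfl⟩ ⟨hCy, y, hy, rfl⟩
    exact h x y hy.symm hi hCx hCy

lemma natCard_inter_eq_one_and_hom_iff :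
    (∀ i, B.hom i = true →
      Nat.card {j : Fin q // (B.block i ∩ C.block j).Nonempty} = 1 ∧
      ∀ j, (B.block i ∩ C.block j).Nonempty → C.hom j = true) ↔
    ∀ x y, B.idx x = B.idx y → B.hom (B.idx x) = true →
      C.idx x = C.idx y ∧ C.hom (C.idx x) = true := by
  simp only [Nat.card_eq_one_iff_unique, subsingleton_subtype_iff, nonempty_subtype,
    inter_nonempty_iff]
  constructor
  · intro h x y hxy hx
    obtain ⟨⟨h1, -⟩, h2⟩ := h _ hx
    exact ⟨h1 _ _ ⟨x, rfl, rfl⟩ ⟨y, hxy.symm, rfl⟩, h2 _ ⟨x, rfl, rfl⟩⟩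
  · intro h i hi
    obtain ⟨x, rfl⟩ := B.idx_surjective i
    refine ⟨⟨?_, _, x, rfl, rfl⟩, ?_⟩
    · rintro _ _ ⟨y, hy, rfl⟩ ⟨z, hz, rfl⟩
      exact (h y z (hy.trans hz.symm) (hy ▸ hi)).1
    · rintro _ ⟨y, hy, rfl⟩
      exact (h y y rfl (hy ▸ hi)).2

lemma natCard_inter_eq_one_and_nonhom_iff :
    (∀ j, C.hom j = false →
      Nat.card {i : Fin p // (B.block i ∩ C.block j).Nonempty} = 1 ∧
      ∀ i, (B.block i ∩ C.block j).Nonempty → B.hom i = false) ↔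
    ∀ x y, C.idx x = C.idx y → C.hom (C.idx x) = false →
      B.idx x = B.idx y ∧ B.hom (B.idx x) = false := by
  simp only [Nat.card_eq_one_iff_unique, subsingleton_subtype_iff, nonempty_subtype,
    inter_nonempty_iff]
  constructor
  · intro h x y hxy hx
    obtain ⟨⟨h1, -⟩, h2⟩ := h _ hx
    exact ⟨h1 _ _ ⟨x, rfl, rfl⟩ ⟨y, rfl, hxy.symm⟩, h2 _ ⟨x, rfl, rfl⟩⟩
  · intro h j hj
    obtain ⟨x, rfl⟩ := C.idx_surjective j
    refine ⟨⟨?_, _, x, rfl, rfl⟩, ?_⟩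
    · rintro _ _ ⟨y, rfl, hy⟩ ⟨z, rfl, hz⟩
      exact (h y z (hy.trans hz.symm) (hy ▸ hj)).1
    · rintro _ ⟨y, rfl, hy⟩
      exact (h y y rfl (hy ▸ hj)).2

lemma exists_hom_of_natCard_inter_eq_one_iff :
    (∀ j, C.hom j = true →
      Nat.card {i : Fin p // (B.block i ∩ C.block j).Nonempty} = 1 →
      ∃ i, (B.block i ∩ C.block j).Nonempty ∧ B.hom i = true) ↔
    ∀ x, C.hom (C.idx x) = true → B.hom (B.idx x) = false →
      ∃ z, C.idx z = C.idx x ∧ B.idx z ≠ B.idx x := by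
  simp only [Nat.card_eq_one_iff_unique, subsingleton_subtype_iff, nonempty_subtype,
    inter_nonempty_iff]
  constructor
  · intro h x hCx hx
    by_contra! hall
    have hsub : ∀ i i', (∃ y, B.idx y = i ∧ C.idx y = C.idx x) →
        (∃ y, B.idx y = i' ∧ C.idx y = C.idx x) → i = i' := by
      rintro _ _ ⟨y, rfl, hy⟩ ⟨y', rfl, hy'⟩
      exact (hall y hy).trans (hall y' hy').symm
    obtain ⟨_, ⟨z, rfl, hz⟩, hz'⟩ := h _ hCx ⟨hsub, _, x, rfl, rfl⟩
    simp [hall z hz, hx] at hz'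
  · rintro h j hj ⟨hsub, -⟩
    obtain ⟨x, rfl⟩ := C.idx_surjective j
    cases hx : B.hom (B.idx x)
    · obtain ⟨z, hz, hzx⟩ := h x hj hx
      exact absurd (hsub _ _ ⟨z, rfl, hz⟩ ⟨x, rfl, rfl⟩) hzx
    · exact ⟨_, ⟨x, rfl, rfl⟩, hx⟩

end IntersectionGraph

end BinaryPartition

theorem binary_partition_contraction_iff_graph_general
    (n p q : ℕ)
    (B : BinaryPartition n p) (C : BinaryPartition n q) :
    IsConeFace n (sliceConeBP B) (sliceConeBP C) ↔
      ((¬ ∃ (i i' : Fin p) (j j' : Fin q), i < i' ∧ j < j' ∧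
          (B.block i ∩ C.block j').Nonempty ∧ (B.block i' ∩ C.block j).Nonempty) ∧
       (∀ i, B.hom i = false →
          Nat.card {j : Fin q // C.hom j = false ∧
            (B.block i ∩ C.block j).Nonempty} ≤ 1) ∧
       (∀ i, B.hom i = true →
          Nat.card {j : Fin q // (B.block i ∩ C.block j).Nonempty} = 1 ∧
          ∀ j, (B.block i ∩ C.block j).Nonempty → C.hom j = true) ∧
       (∀ j, C.hom j = false →
          Nat.card {i : Fin p // (B.block i ∩ C.block j).Nonempty} = 1 ∧
          ∀ i, (B.block i ∩ C.block j).Nonempty → B.hom i = false) ∧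
       (∀ j, C.hom j = true →
          Nat.card {i : Fin p // (B.block i ∩ C.block j).Nonempty} = 1 →
          ∃ i, (B.block i ∩ C.block j).Nonempty ∧ B.hom i = true)) := by
  rw [B.sliceConeBP_eq_preorderCone, C.sliceConeBP_eq_preorderCone, isConeFace_preorderCone_iff,
    IsContraction, and_congr_right BinaryPartition.le_reflTransGen_iff,
    BinaryPartition.le_le_iff, B.not_exists_crossing_iff, B.natCard_nonhom_inter_le_one_iff,
    B.natCard_inter_eq_one_and_hom_iff, B.natCard_inter_eq_one_and_nonhom_iff,
    B.exists_hom_of_natCard_inter_eq_one_iff]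
  tauto

/-- Characterization of contraction of binary partitions (equivalently, of
`σ̃(C)` being a face of `σ̃(B)`) in terms of the bipartite intersection graph
`G(B, C)`: non-crossing plus the four degree conditions. -/
theorem binary_partition_contraction_iff_graph
    (n p q : ℕ) (hn : 1 ≤ n)
    (B : BinaryPartition n p) (C : BinaryPartition n q) :
    IsConeFace n (sliceConeBP B) (sliceConeBP C) ↔
      ((¬ ∃ (i i' : Fin p) (j j' : Fin q), i < i' ∧ j < j' ∧
          (B.block i ∩ C.block j').Nonempty ∧ (B.block i' ∩ C.block j).Nonempty) ∧
       (∀ i, B.hom i = false →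
          Nat.card {j : Fin q // C.hom j = false ∧
            (B.block i ∩ C.block j).Nonempty} ≤ 1) ∧
       (∀ i, B.hom i = true →
          Nat.card {j : Fin q // (B.block i ∩ C.block j).Nonempty} = 1 ∧
          ∀ j, (B.block i ∩ C.block j).Nonempty → C.hom j = true) ∧
       (∀ j, C.hom j = false →
          Nat.card {i : Fin p // (B.block i ∩ C.block j).Nonempty} = 1 ∧
          ∀ i, (B.block i ∩ C.block j).Nonempty → B.hom i = false) ∧
       (∀ j, C.hom j = true →
          Nat.card {i : Fin p // (B.block i ∩ C.block j).Nonempty} = 1 →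
          ∃ i, (B.block i ∩ C.block j).Nonempty ∧ B.hom i = true)) :=
  binary_partition_contraction_iff_graph_general n p q B C
end
end
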